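/- arXiv:cond-mat/0003049 — 7 statements merged into one kernel-verified Lean document; each statement's English description precedes it below -/
import Mathlib

section
/- If x is a leaf of a finite simple graph G with unique neighbor y, and G' is the induced subgraph of G on the vertex set obtained by deleting both x and y, then the kernel of the adjacency matrix of G has the same dimension as the kernel of the adjacency matrix of G'. -/
open Classical Matrix

/-- The dimension of the kernel of the adjacency matrix of `G` over `ℚ`,
i.e. the multiplicity of the eigenvalue 0. -/
noncomputable def kerDim {V : Type*} [Fintype V] [DecidableEq V] (G : SimpleGraph V) : ℕ :=
  Module.finrank ℚ (LinearMap.ker (Matrix.toLin' (G.adjMatrix ℚ)))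

/-- If `x` is a leaf of `G` with unique neighbor `y`, deleting both `x` and `y`
(passing to the induced subgraph on the complement) does not change the kernel dimension
of the adjacency matrix. -/
theorem kerDim_leaf_removal {V : Type*} [Fintype V] [DecidableEq V] (G : SimpleGraph V)
    (x y : V) (hxy : G.Adj x y) (huniq : ∀ z, G.Adj x z → z = y) :
    kerDim G = kerDim (G.induce ({x, y}ᶜ : Set V)) := by
  have hxney : x ≠ y := G.ne_of_adj hxy
  set S : Set V := ({x, y} : Set V)ᶜ with hS
  set A : Matrix V V ℚ := G.adjMatrix ℚ with hAdef
  set A' : Matrix S S ℚ := (G.induce S).adjMatrix ℚ with hA'def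
  -- membership in S
  have hmemS : ∀ w : V, w ∈ S ↔ w ≠ x ∧ w ≠ y := by
    intro w; simp [hS, Set.mem_compl_iff]
  -- splitting a sum over V
  have hsum : ∀ f : V → ℚ, ∑ w, f w = f x + f y + ∑ s : S, f (s : V) := by
    intro f
    rw [← Finset.sum_add_sum_compl ({x, y} : Finset V) f, Finset.sum_pair hxney]
    congr 1
    refine Finset.sum_subtype _ (fun w => ?_) f
    simp [hmemS w, Finset.mem_compl]
  -- mulVec formula for A
  have hmulA : ∀ (v : V → ℚ) (z : V),
      (A *ᵥ v) z = A z x * v x + A z y * v y + ∑ s : S, A z s * v s := by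
    intro v z
    rw [Matrix.mulVec, dotProduct]
    exact hsum (fun w => A z w * v w)
  -- entries of A involving x
  have hAx : ∀ w : V, A x w = if w = y then 1 else 0 := by
    intro w
    by_cases h : w = y
    · subst h; simp [hAdef, hxy]
    · simp [hAdef, h]
      intro h'
      exact h (huniq w h')
  have hAxsym : ∀ w : V, A w x = if w = y then 1 else 0 := by
    intro w
    have : A w x = A x w := by simp [hAdef, SimpleGraph.adj_comm]
    rw [this, hAx]
  -- entries of A' agree with A
  have hA'eq : ∀ z w : S, A' z w = A (z : V) (w : V) := by
    intro z w
    simp [hA'def, hAdef, SimpleGraph.induce, SimpleGraph.adjMatrix_apply]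
    exact if_congr Iff.rfl rfl rfl
  have hmulA' : ∀ (u : S → ℚ) (z : S),
      (A' *ᵥ u) z = ∑ s : S, A (z : V) (s : V) * u s := by
    intro u z
    rw [Matrix.mulVec, dotProduct]
    exact Finset.sum_congr rfl (fun s _ => by rw [hA'eq])
  -- kernel membership
  have hkerA : ∀ v : V → ℚ, v ∈ LinearMap.ker (Matrix.toLin' A) ↔ A *ᵥ v = 0 := by
    intro v; rw [LinearMap.mem_ker, Matrix.toLin'_apply]
  have hkerA' : ∀ u : S → ℚ, u ∈ LinearMap.ker (Matrix.toLin' A') ↔ A' *ᵥ u = 0 := by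
    intro u; rw [LinearMap.mem_ker, Matrix.toLin'_apply]
  -- key facts about kernel vectors of A
  have key : ∀ v : V → ℚ, A *ᵥ v = 0 →
      v y = 0 ∧ v x = -∑ s : S, A y (s : V) * v s := by
    intro v hv
    have hx0 : (A *ᵥ v) x = 0 := by rw [hv]; rfl
    have hy0 : (A *ᵥ v) y = 0 := by rw [hv]; rfl
    rw [hmulA] at hx0 hy0
    have hAxx : A x x = 0 := by simp [hAdef]
    have hAxy : A x y = 1 := by rw [hAx]; simp
    have hsum0 : ∑ s : S, A x (s : V) * v s = 0 := by
      refine Finset.sum_eq_zero (fun s _ => ?_)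
      have hs := (hmemS s).mp s.2
      rw [hAx]; simp [hs.2]
    have hvy : v y = 0 := by
      rw [hAxx, hAxy, hsum0] at hx0; linarith
    refine ⟨hvy, ?_⟩
    have hAyx : A y x = 1 := by rw [hAxsym]; simp
    have hAyy : A y y = 0 := by simp [hAdef]
    rw [hAyx, hAyy, hvy] at hy0
    linarith
  -- restriction map on kernels
  have hrestr : ∀ v : V → ℚ, A *ᵥ v = 0 → A' *ᵥ (fun s : S => v s) = 0 := by
    intro v hv
    obtain ⟨hvy, -⟩ := key v hv
    funext z
    have hz0 : (A *ᵥ v) (z : V) = 0 := by rw [hv]; rfl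
    rw [hmulA] at hz0
    have hz := (hmemS z).mp z.2
    have hAzx : A (z : V) x = 0 := by rw [hAxsym]; simp [hz.2]
    rw [hmulA']
    rw [hAzx, hvy] at hz0
    simpa using hz0
  -- the extension function
  set ext : (S → ℚ) → (V → ℚ) := fun u w =>
    if h : w ∈ S then u ⟨w, h⟩
    else if w = x then -∑ s : S, A y (s : V) * u s else 0 with hext
  have hext_lin_add : ∀ u u' : S → ℚ, ext (u + u') = ext u + ext u' := by
    intro u u'
    funext w
    simp only [hext, Pi.add_apply]
    split_ifs with h h'
    · rfl
    · rw [← neg_add, ← Finset.sum_add_distrib]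
      congr 1
      exact Finset.sum_congr rfl (fun s _ => by ring)
    · ring
  have hext_lin_smul : ∀ (c : ℚ) (u : S → ℚ), ext (c • u) = c • ext u := by
    intro c u
    funext w
    simp only [hext, Pi.smul_apply, smul_eq_mul]
    split_ifs with h h'
    · rfl
    · rw [mul_neg, Finset.mul_sum, neg_inj]
      exact Finset.sum_congr rfl (fun s _ => by ring)
    · ring
  have hext_mem : ∀ u : S → ℚ, A' *ᵥ u = 0 → A *ᵥ ext u = 0 := by
    intro u hu
    funext z
    rw [hmulA]
    have hxnotS : x ∉ S := by rw [hmemS]; tauto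
    have hynotS : y ∉ S := by rw [hmemS]; tauto
    have hextx : ext u x = -∑ s : S, A y (s : V) * u s := by
      simp only [hext]; rw [dif_neg hxnotS]; simp
    have hexty : ext u y = 0 := by
      simp only [hext]; rw [dif_neg hynotS, if_neg (Ne.symm hxney)]
    have hextS : ∀ s : S, ext u (s : V) = u s := by
      intro s; simp only [hext]; rw [dif_pos s.2]
    simp only [Pi.zero_apply]
    by_cases hzx : z = x
    · rw [hzx]
      have hAxx : A x x = 0 := by simp [hAdef]
      have hAxy : A x y = 1 := by rw [hAx]; simp
      have hsum0 : ∑ s : S, A x (s : V) * ext u s = 0 := by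
        refine Finset.sum_eq_zero (fun s _ => ?_)
        have hs := (hmemS s).mp s.2
        rw [hAx]; simp [hs.2]
      rw [hAxx, hAxy, hsum0, hexty]; ring
    · by_cases hzy : z = y
      · rw [hzy]
        have hAyx : A y x = 1 := by rw [hAxsym]; simp
        have hAyy : A y y = 0 := by simp [hAdef]
        rw [hAyx, hAyy, hextx, hexty]
        have : ∑ s : S, A y (s : V) * ext u s = ∑ s : S, A y (s : V) * u s := by
          exact Finset.sum_congr rfl (fun s _ => by rw [hextS])
        rw [this]; ring
      · have hzS : z ∈ S := (hmemS z).mpr ⟨hzx, hzy⟩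
        have hAzx : A z x = 0 := by rw [hAxsym]; simp [hzy]
        have hu0 : (A' *ᵥ u) ⟨z, hzS⟩ = 0 := by rw [hu]; rfl
        rw [hmulA'] at hu0
        have : ∑ s : S, A z (s : V) * ext u s = ∑ s : S, A z (s : V) * u s := by
          exact Finset.sum_congr rfl (fun s _ => by rw [hextS])
        rw [hAzx, hexty, this]
        simpa using hu0
  -- build linear maps between kernels
  let F : LinearMap.ker (Matrix.toLin' A) →ₗ[ℚ] LinearMap.ker (Matrix.toLin' A') :=
    { toFun := fun v => ⟨fun s : S => (v : V → ℚ) s,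
        (hkerA' _).mpr (hrestr _ ((hkerA _).mp v.2))⟩
      map_add' := fun v v' => rfl
      map_smul' := fun c v => rfl }
  let Gm : LinearMap.ker (Matrix.toLin' A') →ₗ[ℚ] LinearMap.ker (Matrix.toLin' A) :=
    { toFun := fun u => ⟨ext u, (hkerA _).mpr (hext_mem _ ((hkerA' _).mp u.2))⟩
      map_add' := fun u u' => Subtype.ext (hext_lin_add u u')
      map_smul' := fun c u => Subtype.ext (hext_lin_smul c u) }
  have hFG : ∀ u, F (Gm u) = u := by
    intro u
    apply Subtype.ext
    funext s
    show ext u (s : V) = (u : S → ℚ) s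
    simp only [hext]; rw [dif_pos s.2]
  have hGF : ∀ v, Gm (F v) = v := by
    intro v
    apply Subtype.ext
    funext w
    obtain ⟨hvy, hvx⟩ := key (v : V → ℚ) ((hkerA _).mp v.2)
    show ext (fun s : S => (v : V → ℚ) s) w = (v : V → ℚ) w
    simp only [hext]
    split_ifs with h h'
    · rfl
    · subst h'; exact hvx.symm
    · have hwy : w = y := by
        by_contra hc
        exact h ((hmemS w).mpr ⟨h', hc⟩)
      rw [hwy]
      exact hvy.symm
  have e : LinearMap.ker (Matrix.toLin' A) ≃ₗ[ℚ] LinearMap.ker (Matrix.toLin' A') :=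
    LinearEquiv.ofLinear F Gm (LinearMap.ext hFG) (LinearMap.ext hGF)
  exact LinearEquiv.finrank_eq e
end

section
/- For any finite forest F, the dimension of the kernel of its adjacency matrix equals N(F) - 2·Q(F), where N(F) is the number of vertices of F and Q(F) is the maximum size of a matching (a set of pairwise non-adjacent edges) in F. -/
set_option linter.unusedSectionVars false
set_option maxHeartbeats 1000000


open Classical

/-- `s` is a matching of `G` : a set of edges of `G`, pairwise sharing no vertex. -/
def IsMatchingFinset {V : Type*} (G : SimpleGraph V) (s : Finset (Sym2 V)) : Prop :=
  ↑s ⊆ G.edgeSet ∧ (s : Set (Sym2 V)).Pairwise fun e f => ∀ v, ¬(v ∈ e ∧ v ∈ f)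

/-- The maximum size of a matching of `G`. -/
noncomputable def matchNum {V : Type*} (G : SimpleGraph V) : ℕ :=
  sSup {k | ∃ s : Finset (Sym2 V), IsMatchingFinset G s ∧ s.card = k}

section Aux

variable {V : Type*} [Fintype V] [DecidableEq V] (F : SimpleGraph V)

lemma matchSet_nonempty : {k | ∃ s : Finset (Sym2 V), IsMatchingFinset F s ∧ s.card = k}.Nonempty :=
  ⟨0, ∅, ⟨by simp, by simp [Set.Pairwise]⟩, rfl⟩

lemma matchSet_bdd : BddAbove {k | ∃ s : Finset (Sym2 V), IsMatchingFinset F s ∧ s.card = k} := by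
  refine ⟨Fintype.card (Sym2 V), ?_⟩
  rintro k ⟨s, _, rfl⟩
  exact Finset.card_le_univ s

variable {F}

lemma card_le_matchNum {s : Finset (Sym2 V)} (hs : IsMatchingFinset F s) :
    s.card ≤ matchNum F :=
  le_csSup (matchSet_bdd F) ⟨s, hs, rfl⟩

lemma exists_max_matching : ∃ s : Finset (Sym2 V), IsMatchingFinset F s ∧ s.card = matchNum F :=
  Nat.sSup_mem (matchSet_nonempty F) (matchSet_bdd F)

/-- In an acyclic graph with an edge, there is a leaf. -/
lemma exists_leaf (hF : F.IsAcyclic) {x y : V} (hxy : F.Adj x y) :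
    ∃ u v : V, F.Adj u v ∧ ∀ w, F.Adj u w → w = v := by
  set S : Set ℕ := {n | ∃ (a b : V) (p : F.Walk a b), p.IsPath ∧ p.length = n} with hS
  have hBdd : BddAbove S := ⟨Fintype.card V, by rintro n ⟨a, b, p, hp, rfl⟩; exact hp.length_lt.le⟩
  have h1S : (1 : ℕ) ∈ S :=
    ⟨x, y, (SimpleGraph.Path.singleton hxy).1, (SimpleGraph.Path.singleton hxy).2, rfl⟩
  obtain ⟨a, b, p, hp, hlen⟩ : sSup S ∈ S := Nat.sSup_mem ⟨1, h1S⟩ hBdd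
  have h1 : 1 ≤ p.length := hlen ▸ le_csSup hBdd h1S
  have hnil : ¬ p.Nil := by
    rw [SimpleGraph.Walk.not_nil_iff_lt_length]; omega
  refine ⟨a, p.getVert 1, p.adj_snd hnil, ?_⟩
  intro w hw
  have hwsup : w ∈ p.support := by
    by_contra hns
    have hp' : (p.cons hw.symm).IsPath := hp.cons hns
    have hle : p.length + 1 ≤ sSup S := le_csSup hBdd ⟨w, b, p.cons hw.symm, hp', by simp⟩
    omega
  have hq := hF.path_unique ⟨p.takeUntil w hwsup, hp.takeUntil hwsup⟩ (SimpleGraph.Path.singleton hw)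
  have hq' : p.takeUntil w hwsup = SimpleGraph.Walk.cons hw SimpleGraph.Walk.nil :=
    congrArg Subtype.val hq
  have hgv : p.getVert 1 = w := by
    conv_lhs => rw [← p.take_spec hwsup, hq']
    simp
  exact hgv.symm

/-- Base case : edgeless graph. -/
lemma base_case (h : ∀ a b : V, ¬ F.Adj a b) :
    (kerDim F : ℤ) = Fintype.card V - 2 * matchNum F := by
  have hA : F.adjMatrix ℚ = 0 := by
    ext i j
    simp [SimpleGraph.adjMatrix_apply, h i j]
  have hker : kerDim F = Fintype.card V := by
    rw [kerDim, hA]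
    rw [map_zero, LinearMap.ker_zero, finrank_top]
    simp [Module.finrank_fintype_fun_eq_card]
  have hmatch : matchNum F = 0 := by
    have hset : {k | ∃ s : Finset (Sym2 V), IsMatchingFinset F s ∧ s.card = k} = {0} := by
      ext k
      constructor
      · rintro ⟨s, ⟨hsub, -⟩, rfl⟩
        have : s = ∅ := by
          rw [Finset.eq_empty_iff_forall_notMem]
          intro e he
          induction e with
          | h a b => exact h a b (hsub he)
        simp [this]
      · rintro rfl
        exact ⟨∅, ⟨by simp, by simp [Set.Pairwise]⟩, rfl⟩
    rw [matchNum, hset, csSup_singleton]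
  rw [hker, hmatch]
  simp

end Aux

section Leaf

variable {V : Type*} [Fintype V] [DecidableEq V] {F : SimpleGraph V} {u v : V}

/-- The graph obtained by deleting the two vertices `u, v`. -/
noncomputable abbrev delG (F : SimpleGraph V) (u v : V) :
    SimpleGraph {x : V // x ≠ u ∧ x ≠ v} :=
  F.comap Subtype.val

lemma delG_acyclic (hF : F.IsAcyclic) : (delG F u v).IsAcyclic := by
  intro a p hp
  exact hF ((p.map (SimpleGraph.Embedding.comap ⟨Subtype.val, Subtype.val_injective⟩ F).toHom))
    (hp.map Subtype.val_injective)

lemma pmap_mem_edgeSet_del (e : Sym2 V) (he : e ∈ F.edgeSet) :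
    ∀ (h : ∀ x ∈ e, x ≠ u ∧ x ≠ v),
      Sym2.pmap (fun x hx => (⟨x, hx⟩ : {x : V // x ≠ u ∧ x ≠ v})) e h ∈
        (delG F u v).edgeSet := by
  induction e with
  | h a b =>
    intro h
    rw [Sym2.pmap_pair]
    simp only [SimpleGraph.mem_edgeSet] at he ⊢
    exact he

lemma map_val_pmap (e : Sym2 V) :
    ∀ (h : ∀ x ∈ e, x ≠ u ∧ x ≠ v),
      Sym2.map Subtype.val
        (Sym2.pmap (fun x hx => (⟨x, hx⟩ : {x : V // x ≠ u ∧ x ≠ v})) e h) = e := by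
  induction e with
  | h a b =>
    intro h
    rw [Sym2.pmap_pair, Sym2.map_pair_eq]

lemma matchNum_del (huv : F.Adj u v) (hleaf : ∀ w, F.Adj u w → w = v) :
    matchNum F = matchNum (delG F u v) + 1 := by
  have hle : matchNum F ≤ matchNum (delG F u v) + 1 := by
    obtain ⟨s, ⟨hsub, hpw⟩, hcard⟩ := exists_max_matching (F := F)
    set t := s.filter (fun e => ¬ u ∈ e ∧ ¬ v ∈ e) with ht
    have hv_of : ∀ e ∈ s, (u ∈ e ∨ v ∈ e) → v ∈ e := by
      intro e he hor
      rcases hor with hu | hv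
      · have hes : e ∈ F.edgeSet := hsub he
        induction e with
        | h a b =>
          rw [Sym2.mem_iff] at hu
          have hab : F.Adj a b := (SimpleGraph.mem_edgeSet F).mp hes
          rcases hu with rfl | rfl
          · have : b = v := hleaf b hab
            rw [this]; exact Sym2.mem_mk_right _ _
          · have : a = v := hleaf a hab.symm
            rw [this]; exact Sym2.mem_mk_left _ _
      · exact hv
    have hbad : (s.filter (fun e => ¬(¬ u ∈ e ∧ ¬ v ∈ e))).card ≤ 1 := by
      rw [Finset.card_le_one]
      intro e₁ h₁ e₂ h₂
      rw [Finset.mem_filter] at h₁ h₂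
      have hv₁ : v ∈ e₁ := hv_of e₁ h₁.1 (by tauto)
      have hv₂ : v ∈ e₂ := hv_of e₂ h₂.1 (by tauto)
      by_contra hne
      exact hpw h₁.1 h₂.1 hne v ⟨hv₁, hv₂⟩
    have hts : s.card ≤ t.card + 1 := by
      rw [ht]
      have := Finset.card_filter_add_card_filter_not
        (s := s) (p := fun e => ¬ u ∈ e ∧ ¬ v ∈ e)
      omega
    have hPmem : ∀ e ∈ t, ∀ x ∈ e, x ≠ u ∧ x ≠ v := by
      intro e het x hx
      rw [ht, Finset.mem_filter] at het
      constructor <;> rintro rfl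
      · exact het.2.1 hx
      · exact het.2.2 hx
    classical
    set f : {e // e ∈ t} → Sym2 {x : V // x ≠ u ∧ x ≠ v} :=
      fun e => Sym2.pmap (fun x hx => ⟨x, hx⟩) e.1 (hPmem e.1 e.2) with hf
    set t' := t.attach.image f with ht'
    have hback : ∀ e : {e // e ∈ t}, Sym2.map Subtype.val (f e) = e.1 :=
      fun e => map_val_pmap e.1 (hPmem e.1 e.2)
    have hinj : Function.Injective f := by
      intro e₁ e₂ hee
      have := congrArg (Sym2.map (Subtype.val : {x : V // x ≠ u ∧ x ≠ v} → V)) hee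
      rw [hback, hback] at this
      exact Subtype.ext this
    have hcard' : t'.card = t.card := by
      rw [ht', Finset.card_image_of_injective _ hinj, Finset.card_attach]
    have hmatch' : IsMatchingFinset (delG F u v) t' := by
      constructor
      · intro e' he'
        rw [ht'] at he'
        simp only [Finset.coe_image, Set.mem_image, Finset.mem_coe, Finset.mem_attach,
          true_and] at he'
        obtain ⟨e₀, -, rfl⟩ := he'
        exact pmap_mem_edgeSet_del e₀.1 (hsub (Finset.mem_of_mem_filter _ e₀.2)) _
      · intro e₁' h₁ e₂' h₂ hne x ⟨hx₁, hx₂⟩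
        simp only [ht', Finset.coe_image, Set.mem_image, Finset.mem_coe, Finset.mem_attach,
          true_and] at h₁ h₂
        obtain ⟨e₁, -, rfl⟩ := h₁
        obtain ⟨e₂, -, rfl⟩ := h₂
        have hne' : e₁.1 ≠ e₂.1 := by
          intro h
          exact hne (congrArg f (Subtype.ext h))
        rw [hf] at hx₁ hx₂
        rw [Sym2.mem_pmap_iff] at hx₁ hx₂
        obtain ⟨a₁, ha₁, rfl⟩ := hx₁
        obtain ⟨a₂, ha₂, he⟩ := hx₂
        have : a₁ = a₂ := congrArg Subtype.val he
        subst this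
        exact hpw (Finset.mem_of_mem_filter _ e₁.2) (Finset.mem_of_mem_filter _ e₂.2)
          hne' a₁ ⟨ha₁, ha₂⟩
    have := card_le_matchNum hmatch'
    omega
  have hge : matchNum (delG F u v) + 1 ≤ matchNum F := by
    obtain ⟨s', ⟨hsub', hpw'⟩, hcard'⟩ := exists_max_matching (F := delG F u v)
    classical
    set simg := s'.image (Sym2.map (Subtype.val : {x : V // x ≠ u ∧ x ≠ v} → V)) with hsimg
    have hnotmem : ∀ e' ∈ s', ∀ x ∈ Sym2.map Subtype.val e', x ≠ u ∧ x ≠ v := by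
      intro e' _ x hx
      rw [Sym2.mem_map] at hx
      obtain ⟨a, -, rfl⟩ := hx
      exact a.2
    have huvnot : s(u, v) ∉ simg := by
      rw [hsimg]
      simp only [Finset.mem_image, not_exists]
      rintro e' ⟨he', heq⟩
      have : u ∈ Sym2.map Subtype.val e' := heq ▸ Sym2.mem_mk_left u v
      exact (hnotmem e' he' u this).1 rfl
    set s := insert s(u, v) simg with hs
    have hmatch : IsMatchingFinset F s := by
      constructor
      · intro e he
        rw [hs, Finset.coe_insert, Set.mem_insert_iff] at he
        rcases he with rfl | he
        · exact (SimpleGraph.mem_edgeSet F).mpr huv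
        · rw [hsimg, Finset.coe_image, Set.mem_image] at he
          obtain ⟨e', he', rfl⟩ := he
          have := hsub' he'
          induction e' with
          | h a b =>
            rw [Sym2.map_pair_eq]
            simp only [SimpleGraph.mem_edgeSet] at this ⊢
            exact this
      · intro e₁ h₁ e₂ h₂ hne x ⟨hx₁, hx₂⟩
        rw [hs, Finset.coe_insert, Set.mem_insert_iff] at h₁ h₂
        have huvcase : ∀ e' ∈ simg, ∀ x, x ∈ s(u,v) → x ∈ e' → False := by
          intro e' he' x hxuv hxe
          rw [hsimg, Finset.mem_image] at he'
          obtain ⟨e'', he'', rfl⟩ := he'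
          rcases Sym2.mem_iff.mp hxuv with rfl | rfl
          · exact (hnotmem e'' he'' x hxe).1 rfl
          · exact (hnotmem e'' he'' x hxe).2 rfl
        rcases h₁ with rfl | h₁ <;> rcases h₂ with rfl | h₂
        · exact hne rfl
        · exact huvcase e₂ (Finset.mem_coe.mp h₂) x hx₁ hx₂
        · exact huvcase e₁ (Finset.mem_coe.mp h₁) x hx₂ hx₁
        · rw [Finset.mem_coe, hsimg, Finset.mem_image] at h₁
          rw [Finset.mem_coe, hsimg, Finset.mem_image] at h₂
          obtain ⟨e₁', he₁', rfl⟩ := h₁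
          obtain ⟨e₂', he₂', rfl⟩ := h₂
          have hne' : e₁' ≠ e₂' := fun h => hne (congrArg _ h)
          rw [Sym2.mem_map] at hx₁ hx₂
          obtain ⟨a₁, ha₁, rfl⟩ := hx₁
          obtain ⟨a₂, ha₂, ha⟩ := hx₂
          have : a₂ = a₁ := Subtype.ext ha
          subst this
          exact hpw' he₁' he₂' hne' a₂ ⟨ha₁, ha₂⟩
    have hscard : s.card = s'.card + 1 := by
      rw [hs, Finset.card_insert_of_notMem huvnot, hsimg,
        Finset.card_image_of_injective _ (Sym2.map.injective Subtype.val_injective)]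
    have := card_le_matchNum hmatch
    omega
  omega

lemma mem_ker_adj_iff {W : Type*} [Fintype W] [DecidableEq W] (G : SimpleGraph W) (x : W → ℚ) :
    x ∈ LinearMap.ker (Matrix.toLin' (G.adjMatrix ℚ)) ↔
      ∀ i : W, ∑ j : W, (if G.Adj i j then x j else 0) = 0 := by
  rw [LinearMap.mem_ker, funext_iff]
  refine forall_congr' fun i => ?_
  rw [Matrix.toLin'_apply, Pi.zero_apply, SimpleGraph.adjMatrix_mulVec_apply,
    SimpleGraph.neighborFinset_eq_filter, Finset.sum_filter]

lemma split_sum (huv : u ≠ v) (f : V → ℚ) :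
    ∑ j : V, f j = f u + f v + ∑ j : {x : V // x ≠ u ∧ x ≠ v}, f j.1 := by
  rw [← Finset.sum_add_sum_compl ({u, v} : Finset V) f, Finset.sum_pair huv]
  congr 1
  rw [Finset.sum_subtype (p := fun x : V => x ≠ u ∧ x ≠ v)]
  intro x
  simp [not_or]

/-- The extension of a function on the deleted graph back to `V`. -/
noncomputable def extFun (F : SimpleGraph V) (u v : V) :
    ({x : V // x ≠ u ∧ x ≠ v} → ℚ) →ₗ[ℚ] (V → ℚ) where
  toFun y i :=
    if h : i ≠ u ∧ i ≠ v then y ⟨i, h⟩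
    else if i = u then
      -(∑ j ∈ Finset.univ.filter (fun j : {x : V // x ≠ u ∧ x ≠ v} => F.Adj v j.1), y j)
    else 0
  map_add' y z := by
    funext i
    by_cases h : i ≠ u ∧ i ≠ v
    · simp only [dif_pos h, Pi.add_apply]
    · by_cases hu : i = u
      · simp only [dif_neg h, if_pos hu, Pi.add_apply]
        rw [Finset.sum_add_distrib]
        ring
      · simp [dif_neg h, if_neg hu]
  map_smul' c y := by
    funext i
    by_cases h : i ≠ u ∧ i ≠ v
    · simp only [dif_pos h, Pi.smul_apply, smul_eq_mul, RingHom.id_apply]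
    · by_cases hu : i = u
      · simp only [dif_neg h, if_pos hu, Pi.smul_apply, smul_eq_mul, RingHom.id_apply]
        rw [mul_neg, Finset.mul_sum]
      · simp [dif_neg h, if_neg hu]

lemma kerDim_del (huv : F.Adj u v) (hleaf : ∀ w, F.Adj u w → w = v) :
    kerDim F = kerDim (delG F u v) := by
  set P : V → Prop := fun x => x ≠ u ∧ x ≠ v with hP
  have hne : u ≠ v := huv.ne
  -- basic row facts
  have hAdj_u : ∀ j : V, F.Adj u j ↔ j = v := fun j => ⟨hleaf j, fun h => h ▸ huv⟩
  have row_u : ∀ x : V → ℚ, ∑ j : V, (if F.Adj u j then x j else 0) = x v := by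
    intro x
    rw [show (∑ j : V, (if F.Adj u j then x j else 0))
        = ∑ j : V, (if j = v then x j else 0) from
      Finset.sum_congr rfl fun j _ => if_congr (hAdj_u j) rfl rfl]
    simp
  have hnadj_u : ∀ w : {x : V // P x}, ¬ F.Adj w.1 u := by
    intro w h
    exact w.2.2 (hleaf w.1 h.symm)
  -- kernel membership of restriction
  have hrestrict : ∀ x : V → ℚ, x ∈ LinearMap.ker (Matrix.toLin' (F.adjMatrix ℚ)) →
      (fun j : {x : V // P x} => x j.1) ∈
        LinearMap.ker (Matrix.toLin' ((delG F u v).adjMatrix ℚ)) := by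
    intro x hx
    rw [mem_ker_adj_iff] at hx
    refine (mem_ker_adj_iff (delG F u v) _).mpr ?_
    have hxv : x v = 0 := by
      have := hx u
      rwa [row_u] at this
    intro w
    have h0 := hx w.1
    rw [split_sum hne] at h0
    rw [if_neg (hnadj_u w), hxv, ite_self, zero_add, zero_add] at h0
    simpa using h0
  have hxu_eq : ∀ x : V → ℚ, x ∈ LinearMap.ker (Matrix.toLin' (F.adjMatrix ℚ)) →
      x u = -(∑ j ∈ Finset.univ.filter (fun j : {x : V // P x} => F.Adj v j.1),
        x j.1) := by
    intro x hx
    rw [mem_ker_adj_iff] at hx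
    have h0 := hx v
    rw [split_sum hne, if_pos huv.symm, if_neg F.irrefl, add_zero,
      ← Finset.sum_filter] at h0
    linarith
  -- the restriction linear map on kernels
  set φ : LinearMap.ker (Matrix.toLin' (F.adjMatrix ℚ)) →ₗ[ℚ]
      LinearMap.ker (Matrix.toLin' ((delG F u v).adjMatrix ℚ)) :=
    LinearMap.codRestrict _
      ((LinearMap.funLeft ℚ ℚ Subtype.val).comp
        (LinearMap.ker (Matrix.toLin' (F.adjMatrix ℚ))).subtype)
      (fun x => hrestrict x.1 x.2) with hφ
  -- the extension map lands in the kernel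
  have hextker : ∀ y : {x : V // P x} → ℚ,
      y ∈ LinearMap.ker (Matrix.toLin' ((delG F u v).adjMatrix ℚ)) →
      extFun F u v y ∈ LinearMap.ker (Matrix.toLin' (F.adjMatrix ℚ)) := by
    intro y hy
    replace hy := (mem_ker_adj_iff (delG F u v) y).mp hy
    rw [mem_ker_adj_iff]
    set x := extFun F u v y with hxdef
    have hxu : x u = -(∑ j ∈ Finset.univ.filter
        (fun j : {x : V // P x} => F.Adj v j.1), y j) := by
      rw [hxdef]
      simp [extFun, hne]
      rfl
    have hxv : x v = 0 := by
      rw [hxdef]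
      simp [extFun, hne.symm]
    have hxP : ∀ j : {x : V // P x}, x j.1 = y j := by
      intro j
      rw [hxdef]
      simp [extFun, j.2.1, j.2.2]
    intro i
    by_cases hiu : i = u
    · rw [hiu, row_u]
      exact hxv
    by_cases hiv : i = v
    · rw [hiv, split_sum hne, if_pos huv.symm, if_neg F.irrefl, add_zero, hxu]
      rw [show (∑ j : {x : V // P x}, if F.Adj v j.1 then x j.1 else 0)
          = ∑ j ∈ Finset.univ.filter (fun j : {x : V // P x} => F.Adj v j.1), y j from by
        rw [Finset.sum_filter]
        exact Finset.sum_congr rfl fun j _ => by rw [hxP j]]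
      ring
    · have hPi : P i := ⟨hiu, hiv⟩
      rw [split_sum hne, if_neg (hnadj_u ⟨i, hPi⟩), hxv, ite_self, zero_add, zero_add]
      have := hy ⟨i, hPi⟩
      rw [show (∑ j : {x : V // P x}, if F.Adj i j.1 then x j.1 else 0)
          = ∑ j : {x : V // P x}, if (delG F u v).Adj ⟨i, hPi⟩ j then y j else 0 from
        Finset.sum_congr rfl fun j _ => by
          rw [hxP j]; rfl]
      exact this
  set ψ : LinearMap.ker (Matrix.toLin' ((delG F u v).adjMatrix ℚ)) →ₗ[ℚ]
      LinearMap.ker (Matrix.toLin' (F.adjMatrix ℚ)) :=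
    LinearMap.codRestrict _
      ((extFun F u v).comp
        (LinearMap.ker (Matrix.toLin' ((delG F u v).adjMatrix ℚ))).subtype)
      (fun y => hextker y.1 y.2) with hψ
  have h1 : φ.comp ψ = LinearMap.id := by
    apply LinearMap.ext
    intro y
    apply Subtype.ext
    funext j
    simp [hφ, hψ, LinearMap.codRestrict, extFun, j.2.1, j.2.2, LinearMap.funLeft]
  have h2 : ψ.comp φ = LinearMap.id := by
    apply LinearMap.ext
    intro x
    apply Subtype.ext
    funext i
    by_cases hPi : P i
    · simp [hφ, hψ, LinearMap.codRestrict, extFun, hPi.1, hPi.2, LinearMap.funLeft]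
    · have hxv : x.1 v = 0 := by
        have hx := (mem_ker_adj_iff F x.1).mp x.2 u
        rwa [row_u] at hx
      have hPi' : i = u ∨ i = v := by
        by_contra hc
        push_neg at hc
        exact hPi ⟨hc.1, hc.2⟩
      rcases hPi' with hiu | hiv
      · have hthis := hxu_eq x.1 x.2
        simp only [hφ, hψ, LinearMap.comp_apply, LinearMap.id_apply,
          LinearMap.codRestrict_apply, Submodule.coe_subtype, LinearMap.funLeft_apply]
        rw [hiu, hthis]
        simp [extFun, hne, LinearMap.funLeft_apply]
        rfl
      · simp only [hφ, hψ, LinearMap.comp_apply, LinearMap.id_apply,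
          LinearMap.codRestrict_apply, Submodule.coe_subtype, LinearMap.funLeft_apply]
        rw [hiv]
        simp [extFun, hne.symm, hxv, LinearMap.funLeft_apply]
  have e : LinearMap.ker (Matrix.toLin' ((delG F u v).adjMatrix ℚ)) ≃ₗ[ℚ]
      LinearMap.ker (Matrix.toLin' (F.adjMatrix ℚ)) :=
    LinearEquiv.ofLinear ψ φ h2 h1
  rw [kerDim, kerDim]
  exact e.finrank_eq.symm

lemma card_del (huv : F.Adj u v) :
    Fintype.card {x : V // x ≠ u ∧ x ≠ v} = Fintype.card V - 2 := by
  rw [Fintype.card_subtype]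
  have hfil : (Finset.univ.filter fun x : V => x ≠ u ∧ x ≠ v) = Finset.univ \ {u, v} := by
    ext x
    simp [not_or]
  rw [hfil, Finset.card_sdiff_of_subset (Finset.subset_univ _), Finset.card_pair huv.ne, Finset.card_univ]

end Leaf

theorem kerDim_forest_aux : ∀ (n : ℕ) {V : Type*} [Fintype V] [DecidableEq V]
    (F : SimpleGraph V), Fintype.card V = n → F.IsAcyclic →
    (kerDim F : ℤ) = Fintype.card V - 2 * matchNum F := by
  intro n
  induction n using Nat.strong_induction_on with
  | _ n ih =>
    intro V _ _ F hn hF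
    by_cases hE : ∀ a b : V, ¬ F.Adj a b
    · exact base_case hE
    · push_neg at hE
      obtain ⟨x, y, hxy⟩ := hE
      obtain ⟨u, v, huv, hleaf⟩ := exists_leaf hF hxy
      have hcard : Fintype.card {x : V // x ≠ u ∧ x ≠ v} = Fintype.card V - 2 :=
        card_del huv
      have hge2 : 2 ≤ Fintype.card V := by
        have : ({u, v} : Finset V).card ≤ Fintype.card V := Finset.card_le_univ _
        rwa [Finset.card_pair huv.ne] at this
      have hlt : Fintype.card V - 2 < n := by omega
      have IH := ih _ (hcard ▸ hlt) (delG F u v) hcard (delG_acyclic hF)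
      have h1 : kerDim F = kerDim (delG F u v) := kerDim_del huv hleaf
      have h2 : matchNum F = matchNum (delG F u v) + 1 := matchNum_del huv hleaf
      rw [h1, h2, IH, hcard]
      push_cast [Nat.cast_sub hge2]
      ring

/-- For a finite forest `F`, the kernel dimension of the adjacency matrix equals
`N(F) - 2 Q(F)` where `N(F)` is the number of vertices and `Q(F)` the maximum
size of a matching. -/
theorem kerDim_forest_eq_card_sub_two_matchNum {V : Type*} [Fintype V] [DecidableEq V]
    (F : SimpleGraph V) (hF : F.IsAcyclic) :
    (kerDim F : ℤ) = Fintype.card V - 2 * matchNum F := by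
  exact kerDim_forest_aux (Fintype.card V) F rfl hF
end

section
/- A function Z from finite forests to integers satisfying: Z(empty forest)=0; Z(single vertex)=1; Z is additive over disjoint unions; and Z(F)=Z(F') whenever F' is obtained from F by deleting a leaf x and its unique neighbor y (together with all incident edges), is unique. In particular, any such function coincides with the kernel dimension of the adjacency matrix. -/
open Classical

/-- `Z` is a function from finite forests (more precisely, an isomorphism-invariant
function on finite graphs, constrained below only on forests) to integers satisfying:
`Z = 0` on the empty forest, `Z = 1` on the single-vertex forest, `Z` is additive over
disjoint unions, and `Z` is invariant under removal of a leaf `x` together with its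
unique neighbor `y`. -/
def GoodKernelFn (Z : ∀ (V : Type) [Fintype V] [DecidableEq V], SimpleGraph V → ℤ) : Prop :=
  (∀ (V : Type) [Fintype V] [DecidableEq V] (W : Type) [Fintype W] [DecidableEq W]
    (G : SimpleGraph V) (H : SimpleGraph W), (G ≃g H) → Z V G = Z W H) ∧
  (∀ (V : Type) [Fintype V] [DecidableEq V] [IsEmpty V] (G : SimpleGraph V), Z V G = 0) ∧
  (∀ (V : Type) [Fintype V] [DecidableEq V] (G : SimpleGraph V),
    Fintype.card V = 1 → Z V G = 1) ∧
  (∀ (V : Type) [Fintype V] [DecidableEq V] (W : Type) [Fintype W] [DecidableEq W]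
    (G₁ : SimpleGraph V) (G₂ : SimpleGraph W),
    Z (V ⊕ W) (G₁ ⊕g G₂) = Z V G₁ + Z W G₂) ∧
  (∀ (V : Type) [Fintype V] [DecidableEq V] (G : SimpleGraph V), G.IsAcyclic →
    ∀ x y : V, G.Adj x y → (∀ z, G.Adj x z → z = y) →
      Z V G = Z ({x, y}ᶜ : Set V) (G.induce ({x, y}ᶜ : Set V)))

open Module LinearMap

private lemma ker_finrank_eq_of
    {M N M₂ N₂ : Type*} [AddCommGroup M] [AddCommGroup N] [AddCommGroup M₂] [AddCommGroup N₂]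
    [Module ℚ M] [Module ℚ N] [Module ℚ M₂] [Module ℚ N₂]
    (f : M →ₗ[ℚ] M₂) (g : N →ₗ[ℚ] N₂) (j : N →ₗ[ℚ] M) (hj : Function.Injective j)
    (h1 : ∀ w, g w = 0 → f (j w) = 0)
    (h2 : ∀ v, f v = 0 → ∃ w, g w = 0 ∧ j w = v) :
    Module.finrank ℚ (LinearMap.ker g) = Module.finrank ℚ (LinearMap.ker f) := by
  have hmap : (LinearMap.ker g).map j = LinearMap.ker f := by
    apply le_antisymm
    · rintro _ ⟨w, hw, rfl⟩
      exact h1 w hw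
    · intro v hv
      obtain ⟨w, hw, rfl⟩ := h2 v hv
      exact Submodule.mem_map_of_mem hw
  rw [← hmap]
  exact (Submodule.equivMapOfInjective j hj _).finrank_eq

private lemma kerDim_def {V : Type*} [Fintype V] [DecidableEq V] (G : SimpleGraph V) :
    kerDim G = Module.finrank ℚ (LinearMap.ker (G.adjMatrix ℚ).mulVecLin) := by
  rw [kerDim, Matrix.toLin'_apply']

private lemma kerDim_empty {V : Type*} [Fintype V] [DecidableEq V] [IsEmpty V]
    (G : SimpleGraph V) : kerDim G = 0 := by
  rw [kerDim_def]
  have h := Submodule.finrank_le (LinearMap.ker (G.adjMatrix ℚ).mulVecLin)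
  have h2 : Module.finrank ℚ (V → ℚ) = 0 := by
    rw [Module.finrank_pi]
    simp
  omega

private lemma kerDim_one {V : Type*} [Fintype V] [DecidableEq V]
    (G : SimpleGraph V) (h : Fintype.card V = 1) : kerDim G = 1 := by
  haveI : Subsingleton V := Fintype.card_le_one_iff_subsingleton.mp h.le
  have hA : G.adjMatrix ℚ = 0 := by
    ext i j
    have : i = j := Subsingleton.elim i j
    simp [this]
  rw [kerDim_def, hA]
  rw [Matrix.mulVecLin_zero, LinearMap.ker_zero, finrank_top, Module.finrank_pi, h]

private lemma kerDim_iso {V W : Type*} [Fintype V] [DecidableEq V] [Fintype W] [DecidableEq W]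
    {G : SimpleGraph V} {H : SimpleGraph W} (e : G ≃g H) : kerDim G = kerDim H := by
  rw [kerDim_def, kerDim_def]
  set j : (V → ℚ) →ₗ[ℚ] (W → ℚ) :=
    (LinearEquiv.funCongrLeft ℚ ℚ (e.toEquiv.symm : W ≃ V)).toLinearMap with hjdef
  have hjapp : ∀ (v : V → ℚ) (w : W), j v w = v (e.symm w) := fun v w => rfl
  have key : ∀ v : V → ℚ, ∀ w : W,
      ((H.adjMatrix ℚ).mulVec (j v)) w = ((G.adjMatrix ℚ).mulVec v) (e.symm w) := by
    intro v w
    simp only [Matrix.mulVec, dotProduct]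
    apply Fintype.sum_equiv e.toEquiv.symm
    intro u
    rw [hjapp]
    congr 1
    simp only [SimpleGraph.adjMatrix_apply]
    congr 1
    rw [eq_iff_iff]
    constructor
    · intro hadj
      exact (e.symm.map_adj_iff (v := w) (w := u)).mpr hadj
    · intro hadj
      exact e.symm.map_adj_iff.mp hadj
  exact ker_finrank_eq_of ((H.adjMatrix ℚ).mulVecLin) ((G.adjMatrix ℚ).mulVecLin) j
    (LinearEquiv.injective _)
    (by
      intro v hv
      simp only [Matrix.mulVecLin_apply] at hv ⊢
      funext w
      rw [key]
      rw [hv]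
      rfl)
    (by
      intro v' hv'
      refine ⟨fun u => v' (e u), ?_, ?_⟩
      · simp only [Matrix.mulVecLin_apply] at hv' ⊢
        funext u
        have h1 : j (fun u => v' (e u)) = v' := by
          funext w
          rw [hjapp]
          simp
        have := key (fun u => v' (e u)) (e u)
        rw [h1, hv'] at this
        simpa using this.symm
      · funext w
        rw [hjapp]
        simp)

private lemma finrank_prod_submodule {M N : Type*} [AddCommGroup M] [AddCommGroup N]
    [Module ℚ M] [Module ℚ N] [FiniteDimensional ℚ M] [FiniteDimensional ℚ N]
    (p : Submodule ℚ M) (q : Submodule ℚ N) :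
    Module.finrank ℚ (p.prod q) = Module.finrank ℚ p + Module.finrank ℚ q := by
  have e : (p.prod q) ≃ₗ[ℚ] (↥p × ↥q) :=
    { toFun := fun x => (⟨x.1.1, x.2.1⟩, ⟨x.1.2, x.2.2⟩)
      invFun := fun y => ⟨(y.1.1, y.2.1), ⟨y.1.2, y.2.2⟩⟩
      left_inv := fun x => rfl
      right_inv := fun y => rfl
      map_add' := fun a b => rfl
      map_smul' := fun c a => rfl }
  rw [e.finrank_eq, Module.finrank_prod]

private lemma kerDim_sum {V W : Type*} [Fintype V] [DecidableEq V] [Fintype W] [DecidableEq W]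
    (G₁ : SimpleGraph V) (G₂ : SimpleGraph W) :
    kerDim (G₁ ⊕g G₂) = kerDim G₁ + kerDim G₂ := by
  rw [kerDim_def, kerDim_def, kerDim_def]
  set A := G₁.adjMatrix ℚ
  set B := G₂.adjMatrix ℚ
  set C := (G₁ ⊕g G₂).adjMatrix ℚ with hC
  set j : ((V → ℚ) × (W → ℚ)) →ₗ[ℚ] (V ⊕ W → ℚ) :=
    (LinearEquiv.sumArrowLequivProdArrow V W ℚ ℚ).symm.toLinearMap with hj
  have hjapp : ∀ (ab : (V → ℚ) × (W → ℚ)), j ab = Sum.elim ab.1 ab.2 := fun ab => rfl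
  have key : ∀ (a : V → ℚ) (b : W → ℚ),
      C.mulVec (Sum.elim a b) = Sum.elim (A.mulVec a) (B.mulVec b) := by
    intro a b
    funext z
    cases z with
    | inl u =>
      simp only [Matrix.mulVec, dotProduct, Fintype.sum_sum_type, Sum.elim_inl,
        Sum.elim_inr, hC, SimpleGraph.adjMatrix_apply, SimpleGraph.sum_adj]
      simp [A, SimpleGraph.adjMatrix_apply, ite_mul]
    | inr u =>
      simp only [Matrix.mulVec, dotProduct, Fintype.sum_sum_type, Sum.elim_inl,
        Sum.elim_inr, hC, SimpleGraph.adjMatrix_apply, SimpleGraph.sum_adj]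
      simp [B, SimpleGraph.adjMatrix_apply, ite_mul]
  have hker : Module.finrank ℚ (LinearMap.ker (LinearMap.prodMap A.mulVecLin B.mulVecLin))
      = Module.finrank ℚ (LinearMap.ker C.mulVecLin) := by
    apply ker_finrank_eq_of _ _ j (LinearEquiv.injective _)
    · rintro ⟨a, b⟩ hab
      rw [Prod.ext_iff] at hab
      simp only [LinearMap.prodMap_apply, Matrix.mulVecLin_apply, Prod.fst_zero,
        Prod.snd_zero] at hab
      simp only [Matrix.mulVecLin_apply, hjapp, key, hab.1, hab.2]
      funext z
      cases z <;> rfl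
    · intro v hv
      refine ⟨(fun u => v (Sum.inl u), fun u => v (Sum.inr u)), ?_, ?_⟩
      · have hv' : Sum.elim (fun u => v (Sum.inl u)) (fun u => v (Sum.inr u)) = v := by
          funext z; cases z <;> rfl
        simp only [Matrix.mulVecLin_apply] at hv
        have := key (fun u => v (Sum.inl u)) (fun u => v (Sum.inr u))
        rw [hv', hv] at this
        simp only [LinearMap.prodMap_apply, Matrix.mulVecLin_apply]
        rw [Prod.ext_iff]
        constructor
        · funext u
          have := congrFun this.symm (Sum.inl u)
          simpa using this
        · funext u
          have := congrFun this.symm (Sum.inr u)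
          simpa using this
      · rw [hjapp]
        funext z; cases z <;> rfl
  rw [← hker, LinearMap.ker_prodMap, finrank_prod_submodule]

private lemma sum_split {V : Type*} [Fintype V] [DecidableEq V] {x y : V} (hxy : x ≠ y)
    (f : V → ℚ) :
    ∑ z, f z = f x + f y + ∑ u : ({x, y}ᶜ : Set V), f u := by
  classical
  have h1 : ∑ u : ({x, y}ᶜ : Set V), f ↑u = ∑ z ∈ ({x, y}ᶜ : Set V).toFinset, f z := by
    rw [← Finset.sum_subtype (({x, y}ᶜ : Set V).toFinset) (fun z => Set.mem_toFinset) f]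
  have h2 : ({x, y}ᶜ : Set V).toFinset = (Finset.univ : Finset V) \ {x, y} := by
    ext z
    simp [Set.mem_toFinset]
  rw [h1, h2, Finset.sum_sdiff_eq_sub (Finset.subset_univ _), Finset.sum_pair hxy]
  ring

private lemma kerDim_leaf {V : Type*} [Fintype V] [DecidableEq V] (G : SimpleGraph V)
    (x y : V) (hxy : G.Adj x y) (hx : ∀ z, G.Adj x z → z = y) :
    kerDim G = kerDim (G.induce ({x, y}ᶜ : Set V)) := by
  classical
  have hne : x ≠ y := G.ne_of_adj hxy
  set s : Set V := ({x, y}ᶜ : Set V) with hs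
  have hmem : ∀ z : V, z ∈ s ↔ z ≠ x ∧ z ≠ y := by intro z; simp [hs]
  have hxs : x ∉ s := by simp [hmem]
  have hys : y ∉ s := by simp [hmem]
  set A := G.adjMatrix ℚ with hA
  set B := (G.induce s).adjMatrix ℚ with hB
  have hBapp : ∀ (a b : s), B a b = A a.1 b.1 := by
    intro a b
    simp [hA, hB, SimpleGraph.adjMatrix_apply]
  -- basic entries
  have hAxz : ∀ z : V, z ≠ y → A x z = 0 := by
    intro z hz
    simp only [hA, SimpleGraph.adjMatrix_apply, ite_eq_right_iff]
    intro hadj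
    exact absurd (hx z hadj) hz
  have hAzx : ∀ z : V, z ≠ y → A z x = 0 := by
    intro z hz
    have := hAxz z hz
    rwa [hA, SimpleGraph.adjMatrix_apply, SimpleGraph.adj_comm,
      ← SimpleGraph.adjMatrix_apply] at this
  have hAyx : A y x = 1 := by simp [hA, SimpleGraph.adjMatrix_apply, hxy.symm]
  have hAyy : A y y = 0 := by simp [hA]
  have hAxx : A x x = 0 := by simp [hA]
  rw [kerDim_def, kerDim_def, ← hA]
  change _ = Module.finrank ℚ (LinearMap.ker B.mulVecLin)
  -- the extension map
  set c : (s → ℚ) → ℚ := fun w => -∑ u : s, A y ↑u * w u with hc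
  set jf : (s → ℚ) → (V → ℚ) := fun w z =>
    if h : z ∈ s then w ⟨z, h⟩ else if z = x then c w else 0 with hjf
  have hjf_s : ∀ (w : s → ℚ) (u : s), jf w ↑u = w u := by
    intro w u
    simp [hjf, u.2]
  have hjf_x : ∀ (w : s → ℚ), jf w x = c w := by
    intro w
    simp [hjf, hxs]
  have hjf_y : ∀ (w : s → ℚ), jf w y = 0 := by
    intro w
    simp [hjf, hys, hne.symm]
  set j : (s → ℚ) →ₗ[ℚ] (V → ℚ) :=
    { toFun := jf
      map_add' := by
        intro w₁ w₂
        show jf (w₁ + w₂) = jf w₁ + jf w₂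
        funext z
        rw [Pi.add_apply]
        by_cases h : z ∈ s
        · simp [hjf, h]
        · by_cases hzx : z = x
          · rw [hzx, hjf_x, hjf_x, hjf_x]
            simp only [hc]
            rw [← neg_add, ← Finset.sum_add_distrib, neg_inj]
            exact Finset.sum_congr rfl fun u _ => by simp only [Pi.add_apply]; ring
          · simp [hjf, h, hzx]
      map_smul' := by
        intro r w
        show jf (r • w) = r • jf w
        funext z
        rw [Pi.smul_apply]
        by_cases h : z ∈ s
        · simp [hjf, h]
        · by_cases hzx : z = x
          · rw [hzx, hjf_x, hjf_x]
            simp only [hc, smul_eq_mul]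
            rw [mul_neg, Finset.mul_sum, neg_inj]
            exact Finset.sum_congr rfl fun u _ => by
              simp only [Pi.smul_apply, smul_eq_mul]; ring
          · simp [hjf, h, hzx] } with hj
  have hjapp : ∀ w, j w = jf w := fun w => rfl
  symm
  apply ker_finrank_eq_of A.mulVecLin B.mulVecLin j
  · -- injective
    intro w₁ w₂ h
    funext u
    have := congrFun h (u : V)
    rwa [hjapp, hjapp, hjf_s, hjf_s] at this
  · -- maps ker to ker
    intro w hw
    simp only [Matrix.mulVecLin_apply] at hw ⊢
    funext z
    simp only [Matrix.mulVec, dotProduct, Pi.zero_apply, hjapp]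
    rw [sum_split hne (fun z' => A z z' * jf w z')]
    simp only [hjf_x, hjf_y]
    by_cases hzx : z = x
    · rw [hzx, hAxx]
      have h0 : ∀ u : s, A x ↑u * jf w ↑u = 0 := by
        intro u
        rw [hAxz _ ((hmem u).mp u.2).2]
        ring
      rw [Finset.sum_congr rfl (fun u _ => h0 u)]
      simp
    · by_cases hzy : z = y
      · rw [hzy, hAyx, hAyy]
        simp only [hc]
        have h0 : ∀ u : s, A y ↑u * jf w ↑u = A y ↑u * w u := by
          intro u; rw [hjf_s]
        rw [Finset.sum_congr rfl (fun u _ => h0 u)]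
        ring
      · have hzs : z ∈ s := (hmem z).mpr ⟨hzx, hzy⟩
        rw [hAzx z hzy]
        have h0 : ∀ u : s, A z ↑u * jf w ↑u = B ⟨z, hzs⟩ u * w u := by
          intro u; rw [hjf_s, hBapp]
        rw [Finset.sum_congr rfl (fun u _ => h0 u)]
        have := congrFun hw ⟨z, hzs⟩
        simp only [Matrix.mulVec, dotProduct, Pi.zero_apply] at this
        rw [this]
        ring
  · -- surjective onto ker
    intro v hv
    simp only [Matrix.mulVecLin_apply] at hv
    have hvx := congrFun hv x
    have hvy := congrFun hv y
    simp only [Matrix.mulVec, dotProduct, Pi.zero_apply] at hvx hvy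
    rw [sum_split hne (fun z' => A x z' * v z')] at hvx
    rw [sum_split hne (fun z' => A y z' * v z')] at hvy
    rw [hAxx] at hvx
    rw [hAyx, hAyy] at hvy
    have hAxy : A x y = 1 := by simp [hA, SimpleGraph.adjMatrix_apply, hxy]
    rw [hAxy] at hvx
    have hvy0 : v y = 0 := by
      have hzero : ∀ u : s, A x ↑u * v ↑u = 0 := fun u => by
        rw [hAxz _ ((hmem u).mp u.2).2]; ring
      rw [Finset.sum_congr rfl (fun u _ => hzero u)] at hvx
      simpa using hvx
    refine ⟨fun u => v ↑u, ?_, ?_⟩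
    · funext u
      obtain ⟨z, hz⟩ := u
      have hvz := congrFun hv z
      simp only [Matrix.mulVec, dotProduct, Pi.zero_apply] at hvz
      rw [sum_split hne (fun z' => A z z' * v z')] at hvz
      rw [hAzx z ((hmem z).mp hz).2, hvy0] at hvz
      simp only [Matrix.mulVecLin_apply, Matrix.mulVec, dotProduct, Pi.zero_apply]
      have hcongr : ∀ u' : s, B ⟨z, hz⟩ u' * v ↑u' = A z ↑u' * v ↑u' := fun u' => by
        rw [hBapp]
      calc ∑ u' : s, B ⟨z, hz⟩ u' * v ↑u'
          = ∑ u' : s, A z ↑u' * v ↑u' := Finset.sum_congr rfl (fun u' _ => hcongr u')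
        _ = 0 := by linarith
    · funext z
      rw [hjapp]
      by_cases h : z ∈ s
      · simp [hjf, h]
      · by_cases hzx : z = x
        · rw [hzx]
          rw [hjf_x (fun u => v ↑u)]
          simp only [hc]
          have hsum : ∑ u : s, A y ↑u * v ↑u = -(v x) := by linarith
          rw [hsum]
          ring
        · have hzy : z = y := by
            by_contra hzy
            exact h ((hmem z).mpr ⟨hzx, hzy⟩)
          rw [hzy]
          rw [hjf_y (fun u => v ↑u), hvy0]

private lemma acyclic_induce {V : Type*} {G : SimpleGraph V} (hG : G.IsAcyclic) (s : Set V) :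
    (G.induce s).IsAcyclic := by
  intro v p hp
  exact hG (p.map (SimpleGraph.Embedding.induce (G := G) s).toHom)
    (hp.map (SimpleGraph.Embedding.induce (G := G) s).injective)

private lemma exists_leaf_s4 {V : Type} [Fintype V] [Nonempty V] {G : SimpleGraph V}
    (hG : G.IsAcyclic) (hdeg : ∀ v, ∃ w, G.Adj v w) :
    ∃ x y, G.Adj x y ∧ ∀ z, G.Adj x z → z = y := by
  classical
  set P : ℕ → Prop := fun n =>
    ∃ (u v : V) (p : G.Walk u v), p.IsPath ∧ p.length = n with hP
  set N := Fintype.card V with hN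
  have hP1 : P 1 := by
    obtain ⟨v⟩ := ‹Nonempty V›
    obtain ⟨w, hw⟩ := hdeg v
    exact ⟨v, w, SimpleGraph.Walk.cons hw SimpleGraph.Walk.nil, by simp [hw.ne], rfl⟩
  have hNpos : 1 ≤ N := Fintype.card_pos
  set n := Nat.findGreatest P N with hn
  have h1n : 1 ≤ n := Nat.le_findGreatest hNpos hP1
  have hPn : P n := Nat.findGreatest_spec hNpos hP1
  obtain ⟨u, v, p, hp, hlen⟩ := hPn
  cases p with
  | nil => simp at hlen; omega
  | @cons _ w _ h q =>
    refine ⟨u, w, h, ?_⟩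
    intro z hz
    by_contra hzw
    have hzu : z ≠ u := fun he => G.irrefl (he ▸ hz)
    obtain ⟨hq, hu⟩ := (SimpleGraph.Walk.cons_isPath_iff h q).mp hp
    by_cases hzs : z ∈ (SimpleGraph.Walk.cons h q).support
    · have hzq : z ∈ q.support := by
        have h' := hzs
        rw [SimpleGraph.Walk.support_cons] at h'
        rcases List.mem_cons.mp h' with h'' | h''
        · exact absurd h'' hzu
        · exact h''
      classical
      have hr : (q.takeUntil z hzq).IsPath := hq.takeUntil hzq
      have hur : u ∉ (q.takeUntil z hzq).support :=
        fun hmem => hu (SimpleGraph.Walk.support_takeUntil_subset q hzq hmem)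
      have hP1' : (SimpleGraph.Walk.cons h (q.takeUntil z hzq)).IsPath :=
        (SimpleGraph.Walk.cons_isPath_iff _ _).mpr ⟨hr, hur⟩
      have hP2' : (SimpleGraph.Walk.cons hz SimpleGraph.Walk.nil).IsPath := by
        simp [hz.ne]
      have heq := hG.path_unique ⟨_, hP1'⟩ ⟨_, hP2'⟩
      have hlen' : (SimpleGraph.Walk.cons h (q.takeUntil z hzq)).length
          = (SimpleGraph.Walk.cons hz SimpleGraph.Walk.nil).length := by
        exact congrArg (fun p => SimpleGraph.Walk.length p.val) heq
      simp only [SimpleGraph.Walk.length_cons, SimpleGraph.Walk.length_nil] at hlen'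
      have h0 : (q.takeUntil z hzq).length = 0 := by omega
      have hwz : w = z := SimpleGraph.Walk.eq_of_length_eq_zero h0
      exact hzw (hwz.symm ▸ rfl)
    · -- extend the path
      have hp' : (SimpleGraph.Walk.cons hz.symm (SimpleGraph.Walk.cons h q)).IsPath :=
        (SimpleGraph.Walk.cons_isPath_iff _ _).mpr ⟨hp, hzs⟩
      have hlt : n + 1 < N := by
        have h2 := hp'.length_lt
        simp only [SimpleGraph.Walk.length_cons] at h2
        simp only [SimpleGraph.Walk.length_cons] at hlen
        omega
      have hPn1 : P (n + 1) := ⟨z, v, _, hp', by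
        simp only [SimpleGraph.Walk.length_cons] at hlen ⊢
        omega⟩
      refine Nat.findGreatest_is_greatest (P := P) ?_ (le_of_lt hlt) hPn1
      rw [← hn]
      omega

private lemma good_eq_kerDim (Z : ∀ (V : Type) [Fintype V] [DecidableEq V], SimpleGraph V → ℤ)
    (hZ : GoodKernelFn Z) :
    ∀ (V : Type) [Fintype V] [DecidableEq V] (F : SimpleGraph V), F.IsAcyclic →
      Z V F = kerDim F := by
  obtain ⟨ziso, zempty, zone, zsum, zleaf⟩ := hZ
  suffices H : ∀ (n : ℕ) (V : Type) [Fintype V] [DecidableEq V] (F : SimpleGraph V),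
      Fintype.card V = n → F.IsAcyclic → Z V F = kerDim F by
    intro V _ _ F hF
    exact H (Fintype.card V) V F rfl hF
  intro n
  induction n using Nat.strong_induction_on with
  | _ n IH =>
    intro V _ _ F hcard hF
    by_cases h0 : n = 0
    · subst h0
      haveI : IsEmpty V := Fintype.card_eq_zero_iff.mp hcard
      rw [zempty, kerDim_empty]
      rfl
    by_cases hiso : ∃ v, ∀ z, ¬ F.Adj v z
    · obtain ⟨v, hv⟩ := hiso
      set s : Set V := ({v}ᶜ : Set V) with hs
      have he0 : ∀ x : V, x ∈ s ↔ ¬ x ∈ ({v} : Set V) := by simp [hs]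
      set eqv : (↥({v} : Set V) ⊕ ↥s) ≃ V :=
        ((Equiv.refl (↥({v} : Set V))).sumCongr (Equiv.subtypeEquivRight he0)).trans
          (Equiv.sumCompl (· ∈ ({v} : Set V))) with heqv
      have heqv_inl : ∀ a : ↥({v} : Set V), eqv (Sum.inl a) = a.1 := fun a => rfl
      have heqv_inr : ∀ a : ↥s, eqv (Sum.inr a) = a.1 := fun a => rfl
      have e : ((⊥ : SimpleGraph ↥({v} : Set V)) ⊕g F.induce s) ≃g F := by
        refine ⟨eqv, ?_⟩
        intro a b
        cases a with
        | inl a =>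
          cases b with
          | inl b =>
            rw [heqv_inl, heqv_inl]
            have hav : (a : V) = v := a.2
            have hbv : (b : V) = v := b.2
            simp only [SimpleGraph.sum_adj]
            rw [hav, hbv]
            simp
          | inr b =>
            rw [heqv_inl, heqv_inr]
            have hav : (a : V) = v := a.2
            rw [hav]
            simp only [SimpleGraph.sum_adj]
            simpa using hv b
        | inr a =>
          cases b with
          | inl b =>
            rw [heqv_inr, heqv_inl]
            have hbv : (b : V) = v := b.2
            rw [hbv]
            simp only [SimpleGraph.sum_adj]
            constructor
            · intro hadj
              exact absurd hadj.symm (hv a)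
            · intro hadj
              exact absurd hadj (by simp)
          | inr b =>
            rw [heqv_inr, heqv_inr]
            simp only [SimpleGraph.sum_adj]
            simp [SimpleGraph.comap_adj]
      have hcard1 : Fintype.card ↥({v} : Set V) = 1 := by simp
      have hcards : Fintype.card ↥s < n := by
        rw [← hcard]
        exact Fintype.card_lt_of_injective_of_notMem (Subtype.val : ↥s → V)
          Subtype.val_injective (b := v) (by simp [hs])
      have hacs : (F.induce s).IsAcyclic := acyclic_induce hF s
      have hZF : Z V F = 1 + Z ↥s (F.induce s) := by
        rw [← ziso _ _ _ _ e, zsum, zone _ _ hcard1]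
      have hKF : (kerDim F : ℤ) = 1 + kerDim (F.induce s) := by
        rw [← kerDim_iso e, kerDim_sum, kerDim_one _ hcard1]
        push_cast
        ring
      rw [hZF, hKF, IH _ hcards ↥s (F.induce s) rfl hacs]
    · push_neg at hiso
      haveI : Nonempty V := by
        rw [← Fintype.card_pos_iff]
        omega
      obtain ⟨x, y, hxy, hx⟩ := exists_leaf_s4 hF hiso
      have hzle := zleaf V F hF x y hxy hx
      have hkle := kerDim_leaf F x y hxy hx
      have hcards : Fintype.card ↥({x, y}ᶜ : Set V) < n := by
        rw [← hcard]
        exact Fintype.card_lt_of_injective_of_notMem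
          (Subtype.val : ↥({x, y}ᶜ : Set V) → V) Subtype.val_injective (b := x) (by simp)
      have hacs : (F.induce ({x, y}ᶜ : Set V)).IsAcyclic := acyclic_induce hF _
      rw [hzle, hkle, IH _ hcards _ _ rfl hacs]

/-- Any two functions on finite forests satisfying the four properties agree on all
forests; in particular, any such function coincides with the kernel dimension of the
adjacency matrix. -/
theorem kernelFn_unique (Z₁ Z₂ : ∀ (V : Type) [Fintype V] [DecidableEq V], SimpleGraph V → ℤ)
    (h₁ : GoodKernelFn Z₁) (h₂ : GoodKernelFn Z₂) :
    (∀ (V : Type) [Fintype V] [DecidableEq V] (F : SimpleGraph V), F.IsAcyclic →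
      Z₁ V F = Z₂ V F) ∧
    (∀ (V : Type) [Fintype V] [DecidableEq V] (F : SimpleGraph V), F.IsAcyclic →
      Z₁ V F = kerDim F) := by
  constructor
  · intro V _ _ F hF
    rw [good_eq_kerDim Z₁ h₁ V F hF, good_eq_kerDim Z₂ h₂ V F hF]
  · intro V _ _ F hF
    exact good_eq_kerDim Z₁ h₁ V F hF
end

section
/- The number of planted (rooted) forests on n labeled vertices consisting of exactly m trees, each tree with a distinguished root vertex, equals m · binom(n, m) · n^{n-m-1}, for 1 ≤ m ≤ n. -/
open Classical

namespace PlantedForests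

variable {n : ℕ}

/-- One step of the parent map, extended to `Option`. -/
def step (f : Fin n → Option (Fin n)) : Option (Fin n) → Option (Fin n)
  | none => none
  | some v => f v

@[simp] lemma step_none (f : Fin n → Option (Fin n)) : step f none = none := rfl
@[simp] lemma step_some (f : Fin n → Option (Fin n)) (v : Fin n) : step f (some v) = f v := rfl

/-- A parent map is acyclic if iterating it from any vertex terminates at `none`. -/
def Acyc (f : Fin n → Option (Fin n)) : Prop :=
  ∀ v : Fin n, ∃ k, (step f)^[k] (some v) = none

/-- Auxiliary root computation with fuel. -/
def rootAux (f : Fin n → Option (Fin n)) : ℕ → Fin n → Fin n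
  | 0, v => v
  | k + 1, v => match f v with
    | none => v
    | some w => rootAux f k w

lemma rootAux_none {f : Fin n → Option (Fin n)} {v : Fin n} (h : f v = none) (k : ℕ) :
    rootAux f k v = v := by
  cases k with
  | zero => rfl
  | succ k => simp [rootAux, h]

lemma rootAux_some {f : Fin n → Option (Fin n)} {v w : Fin n} (h : f v = some w) (k : ℕ) :
    rootAux f (k + 1) v = rootAux f k w := by
  simp [rootAux, h]

lemma iterate_none_mono {f : Fin n → Option (Fin n)} {k j : ℕ} {o : Option (Fin n)}
    (hk : (step f)^[k] o = none) (hkj : k ≤ j) : (step f)^[j] o = none := by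
  obtain ⟨i, rfl⟩ := Nat.exists_eq_add_of_le hkj
  rw [add_comm, Function.iterate_add_apply, hk]
  induction i with
  | zero => rfl
  | succ i ih => rw [Function.iterate_succ_apply, step_none, ih (Nat.le_add_right _ _)]

lemma rootAux_stable {f : Fin n → Option (Fin n)} :
    ∀ {k : ℕ} {v : Fin n}, (step f)^[k] (some v) = none → ∀ j, rootAux f (k + j) v = rootAux f k v := by
  intro k
  induction k with
  | zero => intro v h; simp at h
  | succ k ih =>
    intro v h j
    rw [Function.iterate_succ_apply, step_some] at h
    cases hv : f v with
    | none => rw [rootAux_none hv, rootAux_none hv]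
    | some w =>
      rw [hv] at h
      rw [show k + 1 + j = (k + j) + 1 from by ring, rootAux_some hv, rootAux_some hv, ih h]

/-- Termination depth. -/
noncomputable def dep (f : Fin n → Option (Fin n)) (v : Fin n) : ℕ :=
  if h : ∃ k, (step f)^[k] (some v) = none then Nat.find h else 0

/-- The root of the tree containing `v`. -/
noncomputable def root (f : Fin n → Option (Fin n)) (v : Fin n) : Fin n :=
  rootAux f (dep f v) v

lemma dep_spec {f : Fin n → Option (Fin n)} {v : Fin n}
    (h : ∃ k, (step f)^[k] (some v) = none) : (step f)^[dep f v] (some v) = none := by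
  rw [dep, dif_pos h]; exact Nat.find_spec h

lemma root_eq_rootAux {f : Fin n → Option (Fin n)} {v : Fin n} {k : ℕ}
    (hk : (step f)^[k] (some v) = none) : root f v = rootAux f k v := by
  have h : ∃ k, (step f)^[k] (some v) = none := ⟨k, hk⟩
  have h1 := dep_spec h
  have h2 : dep f v ≤ k := by rw [dep, dif_pos h]; exact Nat.find_min' h hk
  obtain ⟨j, rfl⟩ := Nat.exists_eq_add_of_le h2
  rw [root, rootAux_stable h1 j]

@[simp] lemma root_none {f : Fin n → Option (Fin n)} {v : Fin n} (h : f v = none) :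
    root f v = v := rootAux_none h _

lemma exists_of_some {f : Fin n → Option (Fin n)} {v w : Fin n}
    (hv : ∃ k, (step f)^[k] (some v) = none) (hw : f v = some w) :
    ∃ k, (step f)^[k] (some w) = none := by
  obtain ⟨k, hk⟩ := hv
  cases k with
  | zero => simp at hk
  | succ k => rw [Function.iterate_succ_apply, step_some, hw] at hk; exact ⟨k, hk⟩

lemma root_some {f : Fin n → Option (Fin n)} {v w : Fin n}
    (hv : ∃ k, (step f)^[k] (some v) = none) (hw : f v = some w) :
    root f v = root f w := by
  obtain ⟨k, hk⟩ := exists_of_some hv hw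
  have hk' : (step f)^[k + 1] (some v) = none := by
    rw [Function.iterate_succ_apply, step_some, hw]; exact hk
  rw [root_eq_rootAux hk', rootAux_some hw, ← root_eq_rootAux hk]

/-- The root is indeed a root. -/
lemma root_spec {f : Fin n → Option (Fin n)} {v : Fin n}
    (hv : ∃ k, (step f)^[k] (some v) = none) : f (root f v) = none := by
  obtain ⟨k, hk⟩ := hv
  induction k generalizing v with
  | zero => simp at hk
  | succ k ih =>
    rw [Function.iterate_succ_apply, step_some] at hk
    cases hfv : f v with
    | none => rwa [root_none hfv]
    | some w =>
      rw [hfv] at hk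
      rw [root_some ⟨k + 1, by rw [Function.iterate_succ_apply, step_some, hfv]; exact hk⟩ hfv]
      exact ih hk

/-- Vertices in the orbit have the same root. -/
lemma root_of_orbit {f : Fin n → Option (Fin n)} {k : ℕ} :
    ∀ {v x : Fin n}, (∃ j, (step f)^[j] (some v) = none) →
      (step f)^[k] (some v) = some x → root f v = root f x := by
  induction k with
  | zero => intro v x _ h; simp at h; rw [h]
  | succ k ih =>
    intro v x hv h
    rw [Function.iterate_succ_apply, step_some] at h
    cases hfv : f v with
    | none =>
      rw [hfv] at h
      have : (step f)^[k] (none : Option (Fin n)) = none :=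
        iterate_none_mono (k := 0) rfl (Nat.zero_le k)
      rw [this] at h
      simp at h
    | some w =>
      rw [hfv] at h
      exact (root_some hv hfv).trans (ih (exists_of_some hv hfv) h)

/-- The root is in the orbit. -/
lemma orbit_root {f : Fin n → Option (Fin n)} {v : Fin n}
    (hv : ∃ k, (step f)^[k] (some v) = none) :
    ∃ k, (step f)^[k] (some v) = some (root f v) := by
  obtain ⟨k, hk⟩ := hv
  induction k generalizing v with
  | zero => simp at hk
  | succ k ih =>
    rw [Function.iterate_succ_apply, step_some] at hk
    cases hfv : f v with
    | none => exact ⟨0, by rw [root_none hfv]; rfl⟩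
    | some w =>
      rw [hfv] at hk
      obtain ⟨j, hj⟩ := ih hk
      refine ⟨j + 1, ?_⟩
      rw [Function.iterate_succ_apply, step_some, hfv, hj,
        root_some ⟨k + 1, by rw [Function.iterate_succ_apply, step_some, hfv]; exact hk⟩ hfv]

/-- No vertex is in the orbit of its own image (no cycles). -/
lemma not_orbit_self {f : Fin n → Option (Fin n)} {v : Fin n}
    (hv : ∃ k, (step f)^[k] (some v) = none) {k : ℕ} (hk : 1 ≤ k) :
    (step f)^[k] (some v) ≠ some v := by
  intro h
  obtain ⟨j, hj⟩ := hv
  have : ∀ i, (step f)^[i * k] (some v) = some v := by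
    intro i
    induction i with
    | zero => simp
    | succ i ih => rw [Nat.succ_mul, Function.iterate_add_apply, h]; exact ih
  have h2 := this (j + 1)
  have : j ≤ (j + 1) * k := by nlinarith
  rw [iterate_none_mono hj this] at h2
  simp at h2



/-- The orbit of `u` avoids `v`. -/
def Avoid (f : Fin n → Option (Fin n)) (u v : Fin n) : Prop :=
  ∀ j, (step f)^[j] (some u) ≠ some v

lemma avoid_of_root_ne {f : Fin n → Option (Fin n)} {u v : Fin n}
    (hu : ∃ k, (step f)^[k] (some u) = none) (hv : f v = none)
    (h : root f u ≠ v) : Avoid f u v := by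
  intro j hj
  exact h ((root_of_orbit hu hj).trans (root_none hv))

lemma avoid_of_parent {f : Fin n → Option (Fin n)} {v w : Fin n}
    (hv : ∃ k, (step f)^[k] (some v) = none) (hw : f v = some w) : Avoid f w v := by
  intro j hj
  refine not_orbit_self hv (k := j + 1) (by omega) ?_
  rw [Function.iterate_succ_apply, step_some, hw, hj]

lemma iterate_update_of_avoid {f : Fin n → Option (Fin n)} {u v : Fin n} {a : Option (Fin n)}
    (h : Avoid f u v) (k : ℕ) :
    (step (Function.update f v a))^[k] (some u) = (step f)^[k] (some u) := by
  induction k with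
  | zero => rfl
  | succ k ih =>
    rw [Function.iterate_succ_apply', Function.iterate_succ_apply', ih]
    cases ho : (step f)^[k] (some u) with
    | none => rfl
    | some x =>
      have hx : x ≠ v := fun hxv => h k (by rw [ho, hxv])
      simp [Function.update_of_ne hx]

lemma root_update_of_avoid {f : Fin n → Option (Fin n)} {u v : Fin n} {a : Option (Fin n)}
    (hu : ∃ k, (step f)^[k] (some u) = none) (h : Avoid f u v) :
    (∃ k, (step (Function.update f v a))^[k] (some u) = none) ∧
      root (Function.update f v a) u = root f u := by
  obtain ⟨k, hk⟩ := hu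
  refine ⟨⟨k, by rw [iterate_update_of_avoid h, hk]⟩, ?_⟩
  obtain ⟨j, hj⟩ := orbit_root ⟨k, hk⟩
  have hj' : (step (Function.update f v a))^[j] (some u) = some (root f u) := by
    rw [iterate_update_of_avoid h, hj]
  have hrv : root f u ≠ v := fun hh => h j (by rw [hj, hh])
  have : root (Function.update f v a) u = root (Function.update f v a) (root f u) :=
    root_of_orbit ⟨k, by rw [iterate_update_of_avoid h, hk]⟩ hj'
  rw [this, root_none (by rw [Function.update_of_ne hrv]; exact root_spec ⟨k, hk⟩)]

/-- Cutting an edge preserves acyclicity. -/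
lemma acyc_cut {f : Fin n → Option (Fin n)} (hf : Acyc f) (v : Fin n) :
    Acyc (Function.update f v none) := by
  intro u
  obtain ⟨k, hk⟩ := hf u
  induction k generalizing u with
  | zero => simp at hk
  | succ k ih =>
    by_cases huv : u = v
    · exact ⟨1, by simp [huv, Function.iterate_succ_apply]⟩
    rw [Function.iterate_succ_apply, step_some] at hk
    cases hfu : f u with
    | none => exact ⟨1, by simp [Function.iterate_succ_apply, Function.update_of_ne huv, hfu]⟩
    | some x =>
      rw [hfu] at hk
      obtain ⟨j, hj⟩ := ih x hk
      exact ⟨j + 1, by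
        rw [Function.iterate_succ_apply, step_some, Function.update_of_ne huv, hfu]; exact hj⟩

/-- Attaching a root below a vertex of another tree preserves acyclicity. -/
lemma acyc_attach {f : Fin n → Option (Fin n)} (hf : Acyc f) {v w : Fin n}
    (hv : f v = none) (hw : root f w ≠ v) :
    Acyc (Function.update f v (some w)) := by
  have havoid : Avoid f w v := avoid_of_root_ne (hf w) hv hw
  intro u
  obtain ⟨k, hk⟩ := hf u
  induction k generalizing u with
  | zero => simp at hk
  | succ k ih =>
    rw [Function.iterate_succ_apply, step_some] at hk
    by_cases huv : u = v
    · subst huv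
      obtain ⟨j, hj⟩ := (root_update_of_avoid (a := some w) (hf w) havoid).1
      exact ⟨j + 1, by
        rw [Function.iterate_succ_apply, step_some, Function.update_self]; exact hj⟩
    cases hfu : f u with
    | none => exact ⟨1, by simp [Function.iterate_succ_apply, Function.update_of_ne huv, hfu]⟩
    | some x =>
      rw [hfu] at hk
      obtain ⟨j, hj⟩ := ih x hk
      exact ⟨j + 1, by
        rw [Function.iterate_succ_apply, step_some, Function.update_of_ne huv, hfu]; exact hj⟩

/-- The set of roots. -/
noncomputable def roots (f : Fin n → Option (Fin n)) : Finset (Fin n) :=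
  Finset.univ.filter fun v => f v = none

lemma mem_roots {f : Fin n → Option (Fin n)} {v : Fin n} : v ∈ roots f ↔ f v = none := by
  simp [roots]

lemma roots_cut {f : Fin n → Option (Fin n)} {v w : Fin n} (h : f v = some w) :
    roots (Function.update f v none) = insert v (roots f) := by
  ext u
  by_cases huv : u = v <;>
    simp [mem_roots, huv, Function.update_self, Function.update_of_ne, *]

lemma roots_attach {f : Fin n → Option (Fin n)} {v : Fin n} (w : Fin n) :
    roots (Function.update f v (some w)) = (roots f).erase v := by
  ext u
  by_cases huv : u = v <;>
    simp [mem_roots, huv, Function.update_self, Function.update_of_ne, *]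


/-- Acyclic parent maps with `m` roots. -/
def FF (n m : ℕ) : Type :=
  {f : Fin n → Option (Fin n) // Acyc f ∧ (roots f).card = m}

/-- Forests with a marked non-root vertex. -/
def AA (n m : ℕ) : Type :=
  {p : (Fin n → Option (Fin n)) × Fin n // Acyc p.1 ∧ (roots p.1).card = m ∧ p.1 p.2 ≠ none}

/-- Forests with `m+1` trees with a marked root and a marked vertex outside its tree. -/
def BB (n m : ℕ) : Type :=
  {q : (Fin n → Option (Fin n)) × Fin n × Fin n // Acyc q.1 ∧ (roots q.1).card = m + 1 ∧
    q.1 q.2.1 = none ∧ root q.1 q.2.2 ≠ q.2.1}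

lemma root_cut_ne {f : Fin n → Option (Fin n)} (hf : Acyc f) {v w : Fin n}
    (h : f v = some w) : root (Function.update f v none) w ≠ v := by
  have havoid : Avoid f w v := avoid_of_parent (hf v) h
  rw [(root_update_of_avoid (hf w) havoid).2]
  obtain ⟨j, hj⟩ := orbit_root (hf w)
  exact fun hc => havoid j (by rw [hj, hc])

noncomputable def equivAB (n m : ℕ) : AA n m ≃ BB n m where
  toFun := fun ⟨⟨f, v⟩, hA⟩ =>
    ⟨(Function.update f v none, v, Option.get (f v) (Option.ne_none_iff_isSome.mp hA.2.2)),
      by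
        obtain ⟨hf, hc, hv⟩ := hA
        have hfv : f v = some (Option.get (f v) (Option.ne_none_iff_isSome.mp hv)) :=
          (Option.some_get _).symm
        refine ⟨acyc_cut hf v, ?_, Function.update_self _ _ _, root_cut_ne hf hfv⟩
        rw [roots_cut hfv,
          Finset.card_insert_of_notMem (by rw [mem_roots]; exact hv), hc]⟩
  invFun := fun ⟨⟨f, v, w⟩, hB⟩ =>
    ⟨(Function.update f v (some w), v),
      by
        obtain ⟨hf, hc, hv, hw⟩ := hB
        refine ⟨acyc_attach hf hv hw, ?_, by simp [Function.update_self]⟩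
        rw [roots_attach, Finset.card_erase_of_mem (mem_roots.mpr hv), hc]
        omega⟩
  left_inv := by
    rintro ⟨⟨f, v⟩, hf, hc, hv⟩
    apply Subtype.ext
    refine Prod.ext ?_ rfl
    funext u
    by_cases huv : u = v
    · subst huv; simp
    · simp [Function.update_of_ne huv]
  right_inv := by
    rintro ⟨⟨f, v, w⟩, hf, hc, hv, hw⟩
    apply Subtype.ext
    have h1 : Function.update (Function.update f v (some w)) v none = f := by
      funext u
      by_cases huv : u = v
      · subst huv; rw [Function.update_self]; exact hv.symm
      · rw [Function.update_of_ne huv, Function.update_of_ne huv]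
    refine Prod.ext h1 (Prod.ext rfl ?_)
    simp [Function.update_self]

lemma nat_card_sigma {α : Type*} [Fintype α] (f : α → Type*) [∀ a, Fintype (f a)] :
    Nat.card (Σ a, f a) = ∑ a, Nat.card (f a) := by
  simp [Nat.card_eq_fintype_card]

instance (n m : ℕ) : Finite (FF n m) := Subtype.finite
instance (n m : ℕ) : Finite (AA n m) := Subtype.finite
instance (n m : ℕ) : Finite (BB n m) := Subtype.finite
noncomputable instance (n m : ℕ) : Fintype (FF n m) := Fintype.ofFinite _
noncomputable instance (n m : ℕ) : Fintype (AA n m) := Fintype.ofFinite _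
noncomputable instance (n m : ℕ) : Fintype (BB n m) := Fintype.ofFinite _

noncomputable def equivASigma (n m : ℕ) :
    AA n m ≃ Σ f : FF n m, {v : Fin n // f.1 v ≠ none} where
  toFun := fun ⟨⟨f, v⟩, hA⟩ => ⟨⟨f, hA.1, hA.2.1⟩, ⟨v, hA.2.2⟩⟩
  invFun := fun ⟨⟨f, hf⟩, ⟨v, hv⟩⟩ => ⟨(f, v), hf.1, hf.2, hv⟩
  left_inv := by rintro ⟨⟨f, v⟩, hA⟩; rfl
  right_inv := by rintro ⟨⟨f, hf⟩, ⟨v, hv⟩⟩; rfl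

noncomputable def equivBSigma (n m : ℕ) :
    BB n m ≃ Σ f : FF n (m + 1), {p : Fin n × Fin n // f.1 p.1 = none ∧ root f.1 p.2 ≠ p.1} where
  toFun := fun ⟨⟨f, v, w⟩, hB⟩ => ⟨⟨f, hB.1, hB.2.1⟩, ⟨(v, w), hB.2.2.1, hB.2.2.2⟩⟩
  invFun := fun ⟨⟨f, hf⟩, ⟨⟨v, w⟩, hv, hw⟩⟩ => ⟨(f, v, w), hf.1, hf.2, hv, hw⟩
  left_inv := by rintro ⟨⟨f, v, w⟩, hB⟩; rfl
  right_inv := by rintro ⟨⟨f, hf⟩, ⟨⟨v, w⟩, hv, hw⟩⟩; rfl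

lemma card_filter_not_none {f : Fin n → Option (Fin n)} {m : ℕ} (h : (roots f).card = m) :
    (Finset.univ.filter fun v => f v ≠ none).card = n - m := by
  have := Finset.card_filter_add_card_filter_not
    (s := (Finset.univ : Finset (Fin n))) (p := fun v => f v = none)
  rw [show (Finset.univ.filter fun v => f v = none) = roots f from rfl, h] at this
  simp only [Finset.card_univ, Fintype.card_fin] at this
  simp only [ne_eq]
  omega

lemma card_AA (n m : ℕ) : Nat.card (AA n m) = (n - m) * Nat.card (FF n m) := by
  rw [Nat.card_congr (equivASigma n m), nat_card_sigma]
  have : ∀ f : FF n m, Nat.card {v : Fin n // f.1 v ≠ none} = n - m := by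
    rintro ⟨f, hf, hc⟩
    rw [Nat.card_eq_fintype_card, Fintype.card_subtype]
    exact card_filter_not_none hc
  rw [Finset.sum_congr rfl fun f _ => this f, Finset.sum_const, Finset.card_univ,
    Nat.card_eq_fintype_card, smul_eq_mul, mul_comm]

lemma sum_fiber_roots {f : Fin n → Option (Fin n)} (hf : Acyc f) :
    ∑ v ∈ roots f, (Finset.univ.filter fun w => root f w = v).card = n := by
  have := Finset.card_eq_sum_card_fiberwise
    (s := (Finset.univ : Finset (Fin n))) (t := roots f) (f := fun w => root f w)
    (fun w _ => mem_roots.mpr (root_spec (hf w)))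
  simp only [Finset.card_univ, Fintype.card_fin] at this
  exact this.symm

lemma card_BB (n m : ℕ) : Nat.card (BB n m) = m * n * Nat.card (FF n (m + 1)) := by
  rw [Nat.card_congr (equivBSigma n m), nat_card_sigma]
  have key : ∀ f : FF n (m + 1),
      Nat.card {p : Fin n × Fin n // f.1 p.1 = none ∧ root f.1 p.2 ≠ p.1} = m * n := by
    rintro ⟨f, hf, hc⟩
    have e : {p : Fin n × Fin n // f p.1 = none ∧ root f p.2 ≠ p.1} ≃
        Σ v : {v : Fin n // f v = none}, {w : Fin n // root f w ≠ v.1} :=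
      { toFun := fun ⟨⟨v, w⟩, hv, hw⟩ => ⟨⟨v, hv⟩, ⟨w, hw⟩⟩
        invFun := fun ⟨⟨v, hv⟩, ⟨w, hw⟩⟩ => ⟨(v, w), hv, hw⟩
        left_inv := by rintro ⟨⟨v, w⟩, hv, hw⟩; rfl
        right_inv := by rintro ⟨⟨v, hv⟩, ⟨w, hw⟩⟩; rfl }
    rw [Nat.card_congr e, nat_card_sigma]
    have hfib : ∀ v : Fin n,
        Nat.card {w : Fin n // root f w ≠ v} =
          n - (Finset.univ.filter fun w => root f w = v).card := by
      intro v
      rw [Nat.card_eq_fintype_card, Fintype.card_subtype]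
      have := Finset.card_filter_add_card_filter_not
        (s := (Finset.univ : Finset (Fin n))) (p := fun w => root f w = v)
      simp only [Finset.card_univ, Fintype.card_fin, ne_eq] at this ⊢
      omega
    rw [Finset.sum_congr rfl fun v _ => hfib v.1]
    rw [← Finset.sum_subtype (roots f) (fun v => mem_roots)
      (fun v => n - (Finset.univ.filter fun w => root f w = v).card)]
    have hle : ∀ v ∈ roots f, (Finset.univ.filter fun w => root f w = v).card ≤ n := by
      intro v _
      calc (Finset.univ.filter fun w => root f w = v).card ≤ Finset.univ.card :=
            Finset.card_filter_le _ _
        _ = n := by simp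
    have hsum := sum_fiber_roots hf
    have h4 : (∑ v ∈ roots f, (n - (Finset.univ.filter fun w => root f w = v).card))
        + ∑ v ∈ roots f, (Finset.univ.filter fun w => root f w = v).card
        = ∑ _v ∈ roots f, n := by
      rw [← Finset.sum_add_distrib]
      exact Finset.sum_congr rfl fun v hv => by have := hle v hv; omega
    rw [Finset.sum_const, hc, smul_eq_mul, hsum] at h4
    have h5 : (m + 1) * n = m * n + n := by ring
    rw [h5] at h4
    exact Nat.add_right_cancel h4
  rw [Finset.sum_congr rfl fun f _ => key f, Finset.sum_const, Finset.card_univ,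
    Nat.card_eq_fintype_card, smul_eq_mul, mul_comm]

lemma card_FF_rec (n m : ℕ) :
    (n - m) * Nat.card (FF n m) = m * n * Nat.card (FF n (m + 1)) := by
  rw [← card_AA, ← card_BB, Nat.card_congr (equivAB n m)]

lemma card_FF_top (n : ℕ) : Nat.card (FF n n) = 1 := by
  have huniq : ∀ f : FF n n, f.1 = fun _ => none := by
    rintro ⟨f, hf, hc⟩
    have : roots f = Finset.univ := Finset.eq_univ_of_card _ (by simp [hc])
    funext v
    have : v ∈ roots f := this ▸ Finset.mem_univ v
    exact mem_roots.mp this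
  have hne : Nonempty (FF n n) := ⟨⟨fun _ => none, fun v => ⟨1, rfl⟩, by simp [roots]⟩⟩
  have : Subsingleton (FF n n) :=
    ⟨fun a b => Subtype.ext ((huniq a).trans (huniq b).symm)⟩
  exact Nat.card_eq_one_iff_unique.mpr ⟨this, hne⟩

lemma card_FF (n : ℕ) : ∀ k m : ℕ, 1 ≤ m → m ≤ n → n - m = k →
    (Nat.card (FF n m) : ℚ) = ((n - 1).choose (m - 1) : ℚ) * (n : ℚ) ^ (n - m) := by
  intro k
  induction k with
  | zero =>
    intro m h1 h2 h3
    have : m = n := by omega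
    subst this
    rw [card_FF_top]
    simp [h3]
  | succ k ih =>
    intro m h1 h2 h3
    have hlt : m < n := by omega
    have hrec := card_FF_rec n m
    have hih := ih (m + 1) (by omega) (by omega) (by omega)
    have hq : ((n : ℚ) - m) * Nat.card (FF n m)
        = m * n * (((n - 1).choose m : ℚ) * (n : ℚ) ^ (n - (m + 1))) := by
      have := congrArg (fun x : ℕ => (x : ℚ)) hrec
      push_cast at this
      rw [Nat.cast_sub (le_of_lt hlt)] at this
      rw [this, hih]
      push_cast
      ring
    have hchoose : ((n - 1).choose m : ℚ) * m = ((n - 1).choose (m - 1) : ℚ) * ((n : ℚ) - m) := by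
      have h := Nat.choose_succ_right_eq (n - 1) (m - 1)
      rw [show m - 1 + 1 = m from by omega] at h
      have := congrArg (fun x : ℕ => (x : ℚ)) h
      push_cast at this
      rw [this, Nat.cast_sub (by omega : m - 1 ≤ n - 1)]
      push_cast [Nat.cast_sub (by omega : 1 ≤ n), Nat.cast_sub (by omega : 1 ≤ m)]
      ring
    have hnm : ((n : ℚ) - m) ≠ 0 := by
      have : (m : ℚ) < n := by exact_mod_cast hlt
      linarith
    have hpow : (n : ℚ) ^ (n - m) = (n : ℚ) * (n : ℚ) ^ (n - (m + 1)) := by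
      rw [← pow_succ']
      congr 1
      omega
    refine mul_left_cancel₀ hnm ?_
    rw [hq, hpow]
    linear_combination ((n : ℚ) * (n : ℚ) ^ (n - (m + 1))) * hchoose
  
open SimpleGraph

/-- The forest graph of a parent map. -/
def graphOf (f : Fin n → Option (Fin n)) : SimpleGraph (Fin n) :=
  SimpleGraph.fromRel fun a b => f a = some b

lemma graphOf_adj {f : Fin n → Option (Fin n)} {a b : Fin n} :
    (graphOf f).Adj a b ↔ a ≠ b ∧ (f a = some b ∨ f b = some a) :=
  SimpleGraph.fromRel_adj _ a b

lemma ne_of_parent {f : Fin n → Option (Fin n)} (hf : Acyc f) {a b : Fin n}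
    (h : f a = some b) : a ≠ b := by
  rintro rfl
  exact not_orbit_self (hf a) le_rfl (by rw [Function.iterate_one, step_some, h])

lemma adj_of_parent {f : Fin n → Option (Fin n)} (hf : Acyc f) {a b : Fin n}
    (h : f a = some b) : (graphOf f).Adj a b :=
  graphOf_adj.mpr ⟨ne_of_parent hf h, Or.inl h⟩

lemma reachable_root {f : Fin n → Option (Fin n)} (hf : Acyc f) (v : Fin n) :
    (graphOf f).Reachable v (root f v) := by
  obtain ⟨k, hk⟩ := hf v
  induction k generalizing v with
  | zero => simp at hk
  | succ k ih =>
    rw [Function.iterate_succ_apply, step_some] at hk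
    cases hfv : f v with
    | none => rw [root_none hfv]
    | some w =>
      rw [hfv] at hk
      rw [root_some (hf v) hfv]
      exact ((adj_of_parent hf hfv).reachable).trans (ih w hk)

lemma root_eq_of_adj {f : Fin n → Option (Fin n)} (hf : Acyc f) {a b : Fin n}
    (h : (graphOf f).Adj a b) : root f a = root f b := by
  rcases graphOf_adj.mp h with ⟨_, h | h⟩
  · exact root_some (hf a) h
  · exact (root_some (hf b) h).symm

lemma root_eq_of_reachable {f : Fin n → Option (Fin n)} (hf : Acyc f) {a b : Fin n}
    (h : (graphOf f).Reachable a b) : root f a = root f b := by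
  obtain ⟨w⟩ := h
  induction w with
  | nil => rfl
  | cons hadj _ ih => exact (root_eq_of_adj hf hadj).trans ih

lemma existsUnique_root {f : Fin n → Option (Fin n)} (hf : Acyc f) (v : Fin n) :
    ∃! r, r ∈ roots f ∧ (graphOf f).Reachable v r := by
  refine ⟨root f v, ⟨mem_roots.mpr (root_spec (hf v)), reachable_root hf v⟩, ?_⟩
  rintro r ⟨hr, hreach⟩
  rw [← root_none (mem_roots.mp hr), ← root_eq_of_reachable hf hreach]

/-- Each tree edge is a bridge, hence the graph is acyclic. -/
lemma isBridge_of_parent {f : Fin n → Option (Fin n)} (hf : Acyc f) {v w : Fin n}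
    (h : f v = some w) : (graphOf f).IsBridge s(v, w) := by
  rw [SimpleGraph.isBridge_iff]
  have _ := adj_of_parent hf h
  intro hreach
  -- invariant: hitting `v`
  set S : Fin n → Prop := fun u => ∃ j, (step f)^[j] (some u) = some v with hS
  have hadjS : ∀ a b : Fin n,
      (graphOf f \ SimpleGraph.fromEdgeSet {s(v, w)}).Adj a b → (S a ↔ S b) := by
    have key : ∀ a b : Fin n, f a = some b → ¬ s(a, b) = s(v, w) → (S a ↔ S b) := by
      intro a b hab hne
      have hav : a ≠ v := by
        rintro rfl
        rw [h] at hab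
        exact hne (by rw [Option.some_inj.mp hab])
      constructor
      · rintro ⟨j, hj⟩
        cases j with
        | zero => exact absurd (Option.some_inj.mp hj) hav
        | succ j =>
          rw [Function.iterate_succ_apply, step_some, hab] at hj
          exact ⟨j, hj⟩
      · rintro ⟨j, hj⟩
        exact ⟨j + 1, by rw [Function.iterate_succ_apply, step_some, hab]; exact hj⟩
    intro a b hadj
    rw [SimpleGraph.sdiff_adj, SimpleGraph.fromEdgeSet_adj] at hadj
    obtain ⟨hadj, hne⟩ := hadj
    have hne' : ¬ s(a, b) = s(v, w) := fun hc => hne ⟨by simp [hc], hadj.ne⟩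
    rcases graphOf_adj.mp hadj with ⟨_, hab | hba⟩
    · exact key a b hab hne'
    · exact (key b a hba (fun hc => hne' (by rw [← hc, Sym2.eq_swap]))).symm
  have hSreach : ∀ a b : Fin n,
      (graphOf f \ SimpleGraph.fromEdgeSet {s(v, w)}).Reachable a b → (S a ↔ S b) := by
    intro a b hr
    obtain ⟨p⟩ := hr
    induction p with
    | nil => rfl
    | cons hadj _ ih => exact (hadjS _ _ hadj).trans ih
  have hSv : S v := ⟨0, rfl⟩
  have hSw : ¬ S w := fun ⟨j, hj⟩ => avoid_of_parent (hf v) h j hj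
  exact hSw ((hSreach v w hreach).mp hSv)

lemma graphOf_isAcyclic {f : Fin n → Option (Fin n)} (hf : Acyc f) :
    (graphOf f).IsAcyclic := by
  rw [SimpleGraph.isAcyclic_iff_forall_adj_isBridge]
  intro a b hadj
  rcases graphOf_adj.mp hadj with ⟨_, hab | hba⟩
  · exact isBridge_of_parent hf hab
  · rw [Sym2.eq_swap]
    exact isBridge_of_parent hf hba

/-- The walk from a vertex to its root along parent edges. -/
noncomputable def walkAux (f : Fin n → Option (Fin n)) (hf : Acyc f) :
    (k : ℕ) → (v : Fin n) → (graphOf f).Walk v (rootAux f k v)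
  | 0, _ => SimpleGraph.Walk.nil
  | k + 1, v =>
    match hfv : f v with
    | none => SimpleGraph.Walk.nil.copy rfl (rootAux_none hfv (k + 1)).symm
    | some w =>
      (SimpleGraph.Walk.cons (adj_of_parent hf hfv) (walkAux f hf k w)).copy rfl
        (rootAux_some hfv k).symm

lemma walkAux_support_orbit {f : Fin n → Option (Fin n)} (hf : Acyc f) (k : ℕ) (v : Fin n) :
    ∀ u ∈ (walkAux f hf k v).support, ∃ j, (step f)^[j] (some v) = some u := by
  induction k generalizing v with
  | zero =>
    intro u hu
    simp only [walkAux, SimpleGraph.Walk.support_nil, List.mem_singleton] at hu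
    exact ⟨0, by rw [List.mem_singleton.mp hu]; rfl⟩
  | succ k ih =>
    intro u hu
    simp only [walkAux] at hu
    split at hu
    next hfv =>
      simp only [SimpleGraph.Walk.support_copy, SimpleGraph.Walk.support_nil,
        List.mem_singleton] at hu
      exact ⟨0, by subst hu; rfl⟩
    next w hfv =>
      simp only [SimpleGraph.Walk.support_copy, SimpleGraph.Walk.support_cons,
        List.mem_cons] at hu
      rcases hu with rfl | hu
      · exact ⟨0, rfl⟩
      · obtain ⟨j, hj⟩ := ih w u hu
        exact ⟨j + 1, by rw [Function.iterate_succ_apply, step_some, hfv]; exact hj⟩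

lemma walkAux_isPath {f : Fin n → Option (Fin n)} (hf : Acyc f) {k : ℕ} {v : Fin n}
    (hk : (step f)^[k] (some v) = none) : (walkAux f hf k v).IsPath := by
  induction k generalizing v with
  | zero => simp at hk
  | succ k ih =>
    rw [Function.iterate_succ_apply, step_some] at hk
    simp only [walkAux]
    split
    next hfv =>
      simp only [SimpleGraph.Walk.isPath_copy]
      exact SimpleGraph.Walk.IsPath.nil
    next w hfv =>
      rw [hfv] at hk
      simp only [SimpleGraph.Walk.isPath_copy, SimpleGraph.Walk.cons_isPath_iff]
      refine ⟨ih hk, fun hv => ?_⟩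
      obtain ⟨j, hj⟩ := walkAux_support_orbit hf k w v hv
      exact avoid_of_parent ⟨k + 1, by
        rw [Function.iterate_succ_apply, step_some, hfv]; exact hk⟩ hfv j hj

lemma walkAux_getVert_one {f : Fin n → Option (Fin n)} (hf : Acyc f) {k : ℕ} {v w : Fin n}
    (hfv : f v = some w) : (walkAux f hf (k + 1) v).getVert 1 = w := by
  simp only [walkAux]
  split
  next h => rw [h] at hfv; simp at hfv
  next w' h =>
    rw [h] at hfv
    obtain rfl : w' = w := Option.some_inj.mp hfv
    simp only [SimpleGraph.Walk.getVert_copy, SimpleGraph.Walk.getVert_cons_succ,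
      SimpleGraph.Walk.getVert_zero]

section Converse

variable {G : SimpleGraph (Fin n)} {R : Finset (Fin n)}

/-- The root assigned to a vertex. -/
noncomputable def rG (hun : ∀ v, ∃! r, r ∈ R ∧ G.Reachable v r) (v : Fin n) : Fin n :=
  (hun v).choose

lemma rG_mem (hun : ∀ v, ∃! r, r ∈ R ∧ G.Reachable v r) (v : Fin n) : rG hun v ∈ R :=
  (hun v).choose_spec.1.1

lemma rG_reachable (hun : ∀ v, ∃! r, r ∈ R ∧ G.Reachable v r) (v : Fin n) :
    G.Reachable v (rG hun v) :=
  (hun v).choose_spec.1.2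

lemma rG_unique (hun : ∀ v, ∃! r, r ∈ R ∧ G.Reachable v r) {v r : Fin n}
    (hr : r ∈ R) (h : G.Reachable v r) : r = rG hun v :=
  (hun v).choose_spec.2 r ⟨hr, h⟩

lemma rG_eq_self (hun : ∀ v, ∃! r, r ∈ R ∧ G.Reachable v r) {v : Fin n} (hv : v ∈ R) :
    rG hun v = v :=
  (rG_unique hun hv (SimpleGraph.Reachable.refl v)).symm

lemma rG_eq_of_reachable (hun : ∀ v, ∃! r, r ∈ R ∧ G.Reachable v r) {a b : Fin n}
    (h : G.Reachable a b) : rG hun a = rG hun b :=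
  (rG_unique hun (rG_mem hun b) (h.trans (rG_reachable hun b))).symm

/-- A chosen path from a vertex to its root. -/
noncomputable def pathTo (hun : ∀ v, ∃! r, r ∈ R ∧ G.Reachable v r) (v : Fin n) :
    G.Path v (rG hun v) :=
  (Classical.choice (rG_reachable hun v)).toPath

lemma pathTo_cons (hun : ∀ v, ∃! r, r ∈ R ∧ G.Reachable v r) {v : Fin n} (hv : v ∉ R) :
    ∃ (u : Fin n) (hadj : G.Adj v u) (q : G.Walk u (rG hun v)),
      q.IsPath ∧ (pathTo hun v).1 = SimpleGraph.Walk.cons hadj q := by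
  have hne : v ≠ rG hun v := fun h => hv (h ▸ rG_mem hun v)
  have hnil : ¬ (pathTo hun v).1.Nil := fun h =>
    hne (SimpleGraph.Walk.eq_of_length_eq_zero (SimpleGraph.Walk.nil_iff_length_eq.mp h))
  obtain ⟨u, hadj, q, hq⟩ := SimpleGraph.Walk.not_nil_iff.mp hnil
  have hqp : q.IsPath := by
    have := (pathTo hun v).2
    rw [hq] at this
    exact this.of_cons
  exact ⟨u, hadj, q, hqp, hq⟩

/-- The parent map associated to a rooted graph. -/
noncomputable def fG (hun : ∀ v, ∃! r, r ∈ R ∧ G.Reachable v r) (v : Fin n) :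
    Option (Fin n) :=
  if v ∈ R then none else some ((pathTo hun v).1.getVert 1)

lemma fG_none_iff (hun : ∀ v, ∃! r, r ∈ R ∧ G.Reachable v r) {v : Fin n} :
    fG hun v = none ↔ v ∈ R := by
  unfold fG
  split <;> simp [*]

lemma roots_fG (hun : ∀ v, ∃! r, r ∈ R ∧ G.Reachable v r) : roots (fG hun) = R := by
  ext v
  rw [mem_roots, fG_none_iff]

lemma fG_spec (hun : ∀ v, ∃! r, r ∈ R ∧ G.Reachable v r) (hac : G.IsAcyclic)
    {v : Fin n} (hv : v ∉ R) :
    ∃ u, fG hun v = some u ∧ G.Adj v u ∧ rG hun u = rG hun v ∧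
      (pathTo hun u).1.length + 1 = (pathTo hun v).1.length := by
  obtain ⟨u, hadj, q, hqp, hcons⟩ := pathTo_cons hun hv
  have hgv : (pathTo hun v).1.getVert 1 = u := by
    rw [hcons, SimpleGraph.Walk.getVert_cons_succ, SimpleGraph.Walk.getVert_zero]
  have hru : rG hun u = rG hun v :=
    (rG_unique hun (rG_mem hun v) ⟨q⟩).symm
  have hq' : (q.copy rfl hru.symm).IsPath := by simpa using hqp
  have hun_path := hac.path_unique ⟨q.copy rfl hru.symm, hq'⟩ (pathTo hun u)
  have hlen : (pathTo hun u).1.length = q.length := by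
    rw [← hun_path]
    simp
  refine ⟨u, ?_, hadj, hru, ?_⟩
  · rw [fG, if_neg hv, hgv]
  · rw [hlen, hcons, SimpleGraph.Walk.length_cons]

lemma fG_acyc (hun : ∀ v, ∃! r, r ∈ R ∧ G.Reachable v r) (hac : G.IsAcyclic) :
    Acyc (fG hun) := by
  intro v
  have key : ∀ L : ℕ, ∀ v : Fin n, (pathTo hun v).1.length = L →
      ∃ k, (step (fG hun))^[k] (some v) = none := by
    intro L
    induction L using Nat.strong_induction_on with
    | _ L ih =>
      intro v hL
      by_cases hv : v ∈ R
      · exact ⟨1, by rw [Function.iterate_one, step_some, fG, if_pos hv]⟩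
      · obtain ⟨u, hfv, _, _, hlen⟩ := fG_spec hun hac hv
        obtain ⟨k, hk⟩ := ih (pathTo hun u).1.length (by omega) u rfl
        exact ⟨k + 1, by rw [Function.iterate_succ_apply, step_some, hfv]; exact hk⟩
  exact key (pathTo hun v).1.length v rfl

lemma helper_adj (hun : ∀ v, ∃! r, r ∈ R ∧ G.Reachable v r) (hac : G.IsAcyclic)
    {a b : Fin n} (hadj : G.Adj a b) (hnots : a ∉ (pathTo hun b).1.support) :
    fG hun a = some b := by
  have hrab : rG hun a = rG hun b := rG_eq_of_reachable hun hadj.reachable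
  have hcp : (SimpleGraph.Walk.cons hadj ((pathTo hun b).1.copy rfl hrab.symm)).IsPath := by
    rw [SimpleGraph.Walk.cons_isPath_iff]
    constructor
    · simpa using (pathTo hun b).2
    · simpa using hnots
  have haR : a ∉ R := by
    intro haR
    have heq : rG hun a = a := rG_eq_self hun haR
    have h2 := (SimpleGraph.Walk.cons_isPath_iff
      (h := hadj) (p := (pathTo hun b).1.copy rfl hrab.symm)).mp hcp
    apply h2.2
    have h3 : rG hun a ∈ ((pathTo hun b).1.copy rfl hrab.symm).support :=
      SimpleGraph.Walk.end_mem_support _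
    simp only [SimpleGraph.Walk.support_copy] at h3 ⊢
    rwa [heq] at h3
  have hpu := hac.path_unique
    ⟨SimpleGraph.Walk.cons hadj ((pathTo hun b).1.copy rfl hrab.symm), hcp⟩ (pathTo hun a)
  rw [fG, if_neg haR, ← hpu]
  simp [SimpleGraph.Walk.getVert_cons_succ]

lemma not_both (hun : ∀ v, ∃! r, r ∈ R ∧ G.Reachable v r) (hac : G.IsAcyclic)
    {a b : Fin n} (hadj : G.Adj a b) :
    a ∉ (pathTo hun b).1.support ∨ b ∉ (pathTo hun a).1.support := by
  by_contra hcon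
  push_neg at hcon
  obtain ⟨ha, hb⟩ := hcon
  have hrba : rG hun b = rG hun a := rG_eq_of_reachable hun hadj.symm.reachable
  set pa := (pathTo hun a).1 with hpa
  have hd : (pa.dropUntil b hb).IsPath := (pathTo hun a).2.dropUntil hb
  have he : ((pa.dropUntil b hb).copy rfl hrba.symm).IsPath := by simpa using hd
  have hpbe := hac.path_unique (pathTo hun b) ⟨(pa.dropUntil b hb).copy rfl hrba.symm, he⟩
  have haa : a ∈ (pa.dropUntil b hb).support := by
    have h3 := ha
    rw [hpbe] at h3
    simpa using h3
  have hnodup := (pathTo hun a).2.support_nodup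
  rw [← hpa, ← pa.take_spec hb, SimpleGraph.Walk.support_append] at hnodup
  have hdisj := List.disjoint_of_nodup_append hnodup
  have hmem1 : a ∈ (pa.takeUntil b hb).support := SimpleGraph.Walk.start_mem_support _
  have hmem2 : a ∈ (pa.dropUntil b hb).support.tail := by
    rcases (SimpleGraph.Walk.mem_support_iff _).mp haa with h | h
    · exact absurd h hadj.ne
    · exact h
  exact hdisj hmem1 hmem2

lemma graphOf_fG (hun : ∀ v, ∃! r, r ∈ R ∧ G.Reachable v r) (hac : G.IsAcyclic) :
    graphOf (fG hun) = G := by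
  ext a b
  rw [graphOf_adj]
  constructor
  · rintro ⟨hne, h | h⟩
    · have haR : a ∉ R := by
        intro haR
        rw [fG, if_pos haR] at h
        simp at h
      obtain ⟨u, hu, hadj, -, -⟩ := fG_spec hun hac haR
      rw [hu] at h
      obtain rfl : u = b := Option.some_inj.mp h
      exact hadj
    · have hbR : b ∉ R := by
        intro hbR
        rw [fG, if_pos hbR] at h
        simp at h
      obtain ⟨u, hu, hadj, -, -⟩ := fG_spec hun hac hbR
      rw [hu] at h
      obtain rfl : u = a := Option.some_inj.mp h
      exact hadj.symm
  · intro hadj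
    refine ⟨hadj.ne, ?_⟩
    rcases not_both hun hac hadj with hcase | hcase
    · exact Or.inl (helper_adj hun hac hadj hcase)
    · exact Or.inr (helper_adj hun hac hadj.symm hcase)

end Converse

/-- Round trip: the parent map of the graph of a parent map. -/
lemma fG_graphOf {f : Fin n → Option (Fin n)} (hf : Acyc f) :
    fG (existsUnique_root hf) = f := by
  funext v
  set hun := existsUnique_root hf
  cases hfv : f v with
  | none =>
    rw [fG, if_pos (mem_roots.mpr hfv)]
  | some w =>
    have hvR : v ∉ roots f := by rw [mem_roots, hfv]; simp
    obtain ⟨k, hk⟩ := hf v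
    cases k with
    | zero => simp at hk
    | succ k =>
      have hr : rG hun v = root f v :=
        (rG_unique hun (mem_roots.mpr (root_spec (hf v))) (reachable_root hf v)).symm
      have e : rootAux f (k + 1) v = rG hun v := (root_eq_rootAux hk).symm.trans hr.symm
      have hp0 : ((walkAux f hf (k + 1) v).copy rfl e).IsPath := by
        simpa using walkAux_isPath hf hk
      have hpu := (graphOf_isAcyclic hf).path_unique
        ⟨(walkAux f hf (k + 1) v).copy rfl e, hp0⟩ (pathTo hun v)
      rw [fG, if_neg hvR, ← hpu]
      simp only [SimpleGraph.Walk.getVert_copy]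
      rw [walkAux_getVert_one hf hfv]

/-- The equivalence between planted forests as graphs and as parent maps. -/
noncomputable def equivGraph (n m : ℕ) :
    {p : SimpleGraph (Fin n) × Finset (Fin n) //
      p.1.IsAcyclic ∧ p.2.card = m ∧ ∀ v, ∃! r, r ∈ p.2 ∧ p.1.Reachable v r} ≃ FF n m where
  toFun := fun ⟨⟨G, R⟩, hac, hcard, hun⟩ =>
    ⟨fG hun, fG_acyc hun hac, by rw [roots_fG hun]; exact hcard⟩
  invFun := fun ⟨f, hf, hc⟩ =>
    ⟨(graphOf f, roots f), graphOf_isAcyclic hf, hc, existsUnique_root hf⟩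
  left_inv := by
    rintro ⟨⟨G, R⟩, hac, hcard, hun⟩
    apply Subtype.ext
    exact Prod.ext (graphOf_fG hun hac) (roots_fG hun)
  right_inv := by
    rintro ⟨f, hf, hc⟩
    exact Subtype.ext (fG_graphOf hf)

end PlantedForests

/-- The number of planted (rooted) forests on `n` labeled vertices with exactly `m` trees,
each with a distinguished root, is `m * choose n m * n^(n-m-1)`. A planted forest with
`m` trees is encoded as a pair of an acyclic graph `G` on `Fin n` and a set `R` of `m`
roots such that every vertex is connected to exactly one root (so `G` has exactly `m`
components, each carrying one root). The exponent `n - m - 1` may be `-1` (when `m = n`),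
so the identity is stated in `ℚ` with an integer power. -/
theorem card_planted_forests (n m : ℕ) (hm : 1 ≤ m) (hmn : m ≤ n) :
    (Nat.card {p : SimpleGraph (Fin n) × Finset (Fin n) //
        p.1.IsAcyclic ∧ p.2.card = m ∧ ∀ v, ∃! r, r ∈ p.2 ∧ p.1.Reachable v r} : ℚ) =
      m * n.choose m * (n : ℚ) ^ ((n : ℤ) - m - 1) := by
  rw [Nat.card_congr (PlantedForests.equivGraph n m)]
  rw [PlantedForests.card_FF n (n - m) m hm hmn rfl]
  have hn : 1 ≤ n := le_trans hm hmn
  have hn0 : (n : ℚ) ≠ 0 := by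
    have : (0 : ℚ) < n := by exact_mod_cast hn
    linarith
  have hch : (n : ℚ) * ((n - 1).choose (m - 1) : ℚ) = (m : ℚ) * (n.choose m : ℚ) := by
    have h : n * (n - 1).choose (m - 1) = n.choose m * m := by
      have h0 := Nat.add_one_mul_choose_eq (n - 1) (m - 1)
      simp only [Nat.succ_eq_add_one, Nat.sub_add_cancel hn, Nat.sub_add_cancel hm] at h0
      exact h0
    have := congrArg (fun x : ℕ => (x : ℚ)) h
    push_cast at this
    linarith [this]
  have hzp : (n : ℚ) ^ ((n : ℤ) - m - 1) * (n : ℚ) = (n : ℚ) ^ ((n - m : ℕ)) := by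
    rw [← zpow_natCast (n : ℚ) (n - m), ← zpow_add_one₀ hn0]
    congr 1
    push_cast [Nat.cast_sub hmn]
    ring
  rw [← hzp]
  linear_combination ((n : ℚ) ^ ((n : ℤ) - m - 1)) * hch
end

section
/- For each n ≥ 1 and 1 ≤ m ≤ n, the number of pairs (T, T') where T is a labeled tree on {1,...,n} and T' is an induced subtree of T with exactly m vertices equals m^{m-1} · binom(n, m) · n^{n-m-1}. -/
open Classical

variable {α : Type*} [DecidableEq α]

/-- A rooted forest structure on `α` with root set `s`: a parent function fixing `s`
whose every orbit is eventually absorbed into `s`. -/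
def IsRForest (s : Finset α) (f : α → α) : Prop :=
  (∀ x ∈ s, f x = x) ∧ ∀ x, ∃ j, f^[j] x ∈ s

namespace IsRForest

variable {s : Finset α} {f : α → α}

/-- The number of steps needed to reach the root set. -/
noncomputable def rank (hf : IsRForest s f) (x : α) : ℕ := Nat.find (hf.2 x)

lemma iterate_rank_mem (hf : IsRForest s f) (x : α) : f^[hf.rank x] x ∈ s :=
  Nat.find_spec (hf.2 x)

lemma not_mem_of_lt_rank (hf : IsRForest s f) {x : α} {i : ℕ} (hi : i < hf.rank x) :
    f^[i] x ∉ s := Nat.find_min (hf.2 x) hi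

lemma rank_eq_zero (hf : IsRForest s f) {x : α} (hx : x ∈ s) : hf.rank x = 0 := by
  simp [rank, Nat.find_eq_zero]; exact hx

lemma rank_apply (hf : IsRForest s f) {x : α} (hx : x ∉ s) :
    hf.rank x = hf.rank (f x) + 1 := by
  have h1 : f^[hf.rank (f x) + 1] x ∈ s := by
    rw [Function.iterate_succ_apply]; exact hf.iterate_rank_mem (f x)
  have h2 : ∀ i < hf.rank (f x) + 1, f^[i] x ∉ s := by
    intro i hi
    cases i with
    | zero => simpa using hx
    | succ i =>
      rw [Function.iterate_succ_apply]
      exact hf.not_mem_of_lt_rank (by omega)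
  exact Nat.find_eq_iff (hf.2 x) |>.2 ⟨h1, h2⟩

/-- The root into which `x` is absorbed. -/
noncomputable def root (hf : IsRForest s f) (x : α) : α := f^[hf.rank x] x

lemma root_mem (hf : IsRForest s f) (x : α) : hf.root x ∈ s := hf.iterate_rank_mem x

lemma root_of_mem (hf : IsRForest s f) {x : α} (hx : x ∈ s) : hf.root x = x := by
  simp [root, hf.rank_eq_zero hx]

lemma root_apply (hf : IsRForest s f) {x : α} (hx : x ∉ s) : hf.root (f x) = hf.root x := by
  rw [root, root, hf.rank_apply hx, Function.iterate_succ_apply]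

lemma iterate_mem_of_rank_le (hf : IsRForest s f) {x : α} {i : ℕ} (hi : hf.rank x ≤ i) :
    f^[i] x ∈ s := by
  obtain ⟨j, rfl⟩ := Nat.exists_eq_add_of_le hi
  induction j with
  | zero => simpa using hf.iterate_rank_mem x
  | succ j ih =>
    have hle : hf.rank x ≤ hf.rank x + j := Nat.le_add_right _ _
    have h2 : f^[hf.rank x + (j + 1)] x = f (f^[hf.rank x + j] x) := by
      rw [show hf.rank x + (j + 1) = (hf.rank x + j) + 1 by ring,
        Function.iterate_succ_apply']
    rw [h2, hf.1 _ (ih hle)]; exact ih hle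

lemma iterate_eq_root (hf : IsRForest s f) {x : α} {i : ℕ} (hi : hf.rank x ≤ i) :
    f^[i] x = hf.root x := by
  obtain ⟨j, rfl⟩ := Nat.exists_eq_add_of_le hi
  induction j with
  | zero => simp [root]
  | succ j ih =>
    have hle : hf.rank x ≤ hf.rank x + j := Nat.le_add_right _ _
    have h2 : f^[hf.rank x + (j + 1)] x = f (f^[hf.rank x + j] x) := by
      rw [show hf.rank x + (j + 1) = (hf.rank x + j) + 1 by ring,
        Function.iterate_succ_apply']
    rw [h2, ih hle, hf.1 _ (hf.root_mem x)]

/-- The orbit of a point never returns to a strictly earlier point of the orbit,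
before absorption: in particular `f^[i] (f x) ≠ x` when `x ∉ s`. -/
lemma no_return (hf : IsRForest s f) {x : α} (hx : x ∉ s) (i : ℕ) : f^[i] (f x) ≠ x := by
  intro h
  -- x is periodic with period i+1
  have hper : ∀ c, f^[(i + 1) * c] x = x := by
    intro c
    induction c with
    | zero => simp
    | succ c ih =>
      rw [Nat.mul_succ, Function.iterate_add_apply, Function.iterate_succ_apply, h, ih]
  have := hf.iterate_mem_of_rank_le (x := x) (i := (i + 1) * (hf.rank x + 1))
    (by nlinarith [Nat.le_refl (hf.rank x)])
  rw [hper] at this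
  exact hx this

end IsRForest

section Update

variable {α : Type*} [DecidableEq α] {s : Finset α} {f : α → α} {v w : α}

lemma iterate_update_eq {x : α} {j : ℕ} (h : ∀ i < j, f^[i] x ≠ v) :
    (Function.update f v w)^[j] x = f^[j] x := by
  induction j with
  | zero => simp
  | succ j ih =>
    rw [Function.iterate_succ_apply', Function.iterate_succ_apply',
      ih (fun i hi => h i (by omega)),
      Function.update_of_ne (h j (by omega))]

lemma iterate_update_eq_of_forall {x : α} (h : ∀ i, f^[i] x ≠ v) (j : ℕ) :
    (Function.update f v w)^[j] x = f^[j] x :=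
  iterate_update_eq (fun i _ => h i)

lemma IsRForest.root_congr {t : Finset α} {g : α → α} (hf : IsRForest s f)
    (hg : IsRForest t g) {y : α} (hiter : ∀ i, g^[i] y = f^[i] y)
    (hmem : ∀ i, f^[i] y ∈ t ↔ f^[i] y ∈ s) : hg.root y = hf.root y := by
  have hrank : hg.rank y = hf.rank y := by
    refine le_antisymm ?_ ?_
    · exact Nat.find_min' (hg.2 y)
        (by rw [hiter, hmem]; exact hf.iterate_rank_mem y)
    · exact Nat.find_min' (hf.2 y)
        (by rw [← hmem, ← hiter]; exact hg.iterate_rank_mem y)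
  rw [IsRForest.root, IsRForest.root, hrank, hiter]

lemma IsRForest.root_eq_of_iterate_eq (hf : IsRForest s f) {y r : α} (hr : r ∈ s)
    {i : ℕ} (hi : f^[i] y = r) : hf.root y = r := by
  rcases le_or_gt (hf.rank y) i with h | h
  · rw [← hf.iterate_eq_root h, hi]
  · exact absurd (hi ▸ hr) (hf.not_mem_of_lt_rank h)

/-- Forward direction of the key bijection: adding `v` as a new root. -/
lemma IsRForest.insert_update (hf : IsRForest s f) (hv : v ∉ s) :
    IsRForest (insert v s) (Function.update f v v) := by
  constructor
  · intro x hx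
    rcases Finset.mem_insert.1 hx with rfl | hx
    · simp
    · have hxv : x ≠ v := fun h => hv (h ▸ hx)
      rw [Function.update_of_ne hxv]
      exact hf.1 x hx
  · intro x
    by_cases hex : ∃ i, f^[i] x = v
    · refine ⟨Nat.find hex, ?_⟩
      rw [iterate_update_eq (fun i hi => Nat.find_min hex hi), Nat.find_spec hex]
      exact Finset.mem_insert_self v s
    · push_neg at hex
      exact ⟨hf.rank x, by
        rw [iterate_update_eq_of_forall hex]
        exact Finset.mem_insert_of_mem (hf.iterate_rank_mem x)⟩

lemma IsRForest.insert_update_root (hf : IsRForest s f) (hv : v ∉ s) {y : α}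
    (hy : ∀ i, f^[i] y ≠ v) :
    (hf.insert_update hv).root y = hf.root y := by
  refine IsRForest.root_congr hf (hf.insert_update hv) (iterate_update_eq_of_forall hy) ?_
  intro i
  simp only [Finset.mem_insert]
  exact ⟨fun h => h.resolve_left (hy i), Or.inr⟩

/-- Backward direction: deleting root `r`, reattaching it at `w`. -/
lemma IsRForest.erase_update {r : α} (hf : IsRForest s f) (hr : r ∈ s)
    (hw : hf.root w ≠ r) :
    IsRForest (s.erase r) (Function.update f r w) := by
  have avoid : ∀ y : α, hf.root y ≠ r → ∀ i, f^[i] y ≠ r := by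
    intro y hy i hi
    exact hy (hf.root_eq_of_iterate_eq hr hi)
  have case1 : ∀ y : α, hf.root y ≠ r → ∃ j, (Function.update f r w)^[j] y ∈ s.erase r := by
    intro y hy
    refine ⟨hf.rank y, ?_⟩
    rw [iterate_update_eq_of_forall (avoid y hy)]
    exact Finset.mem_erase.2 ⟨(hf.iterate_eq_root le_rfl) ▸ hy, hf.iterate_rank_mem y⟩
  constructor
  · intro x hx
    rw [Function.update_of_ne (Finset.ne_of_mem_erase hx)]
    exact hf.1 x (Finset.mem_of_mem_erase hx)
  · intro x
    by_cases hx : hf.root x = r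
    · -- orbit of x reaches r after rank x steps, then goes to w
      have ht : (Function.update f r w)^[hf.rank x] x = r := by
        rw [iterate_update_eq, hf.iterate_eq_root le_rfl, hx]
        intro i hi h
        exact hf.not_mem_of_lt_rank hi (h ▸ hr)
      obtain ⟨j, hj⟩ := case1 w hw
      refine ⟨j + (hf.rank x + 1), ?_⟩
      rw [Function.iterate_add_apply, Function.iterate_succ_apply', ht,
        Function.update_self]
      exact hj
    · exact case1 x hx

lemma IsRForest.erase_update_root {r : α} (hf : IsRForest s f) (hr : r ∈ s)
    (hw : hf.root w ≠ r) {y : α} (hy : hf.root y ≠ r) :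
    (hf.erase_update hr hw).root y = hf.root y := by
  have avoid : ∀ i, f^[i] y ≠ r := fun i hi => hy (hf.root_eq_of_iterate_eq hr hi)
  refine IsRForest.root_congr hf (hf.erase_update hr hw)
    (iterate_update_eq_of_forall avoid) ?_
  intro i
  simp only [Finset.mem_erase]
  exact ⟨fun h => h.2, fun h => ⟨avoid i, h⟩⟩

end Update

section Counting

variable (α : Type*) [DecidableEq α]

/-- The type of pairs (root set of size `k`, forest rooted there). -/
abbrev RF (k : ℕ) := {p : Finset α × (α → α) // p.1.card = k ∧ IsRForest p.1 p.2}

variable {α}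

/-- Left side of the recurrence bijection: a `k`-rooted forest with a non-root vertex. -/
abbrev RFL (k : ℕ) := {q : RF α k × α // q.2 ∉ q.1.1.1}

/-- Right side: a `(k+1)`-rooted forest, a root `r`, and a vertex not in `r`'s component. -/
abbrev RFR (k : ℕ) := {q : RF α (k + 1) × (α × α) //
  q.2.1 ∈ q.1.1.1 ∧ q.1.2.2.root q.2.2 ≠ q.2.1}

noncomputable def recFwd (k : ℕ) (q : RFL (α := α) k) : RFR (α := α) k :=
  ⟨(⟨(insert q.1.2 q.1.1.1.1, Function.update q.1.1.1.2 q.1.2 q.1.2),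
      by rw [Finset.card_insert_of_notMem q.2, q.1.1.2.1],
      q.1.1.2.2.insert_update q.2⟩,
    (q.1.2, q.1.1.1.2 q.1.2)),
    Finset.mem_insert_self _ _,
    by
      have h1 := q.1.1.2.2.insert_update_root q.2 (fun i => q.1.1.2.2.no_return q.2 i)
      rw [h1]
      intro h
      have h2 := q.1.1.2.2.root_mem (q.1.1.1.2 q.1.2)
      rw [h] at h2
      exact q.2 h2⟩

noncomputable def recBwd (k : ℕ) (q : RFR (α := α) k) : RFL (α := α) k :=
  ⟨(⟨(q.1.1.1.1.erase q.1.2.1, Function.update q.1.1.1.2 q.1.2.1 q.1.2.2),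
      by rw [Finset.card_erase_of_mem q.2.1, q.1.1.2.1]; rfl,
      q.1.1.2.2.erase_update q.2.1 q.2.2⟩,
    q.1.2.1),
    Finset.notMem_erase _ _⟩

noncomputable def recEquiv (k : ℕ) : RFL (α := α) k ≃ RFR (α := α) k where
  toFun := recFwd k
  invFun := recBwd k
  left_inv := by
    rintro ⟨⟨⟨⟨s, f⟩, hcard, hf⟩, v⟩, hv⟩
    apply Subtype.ext
    refine Prod.ext (Subtype.ext (Prod.ext ?_ ?_)) rfl
    · exact Finset.erase_insert hv
    · show Function.update (Function.update f v v) v (f v) = f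
      rw [Function.update_idem, Function.update_eq_self]
  right_inv := by
    rintro ⟨⟨⟨⟨s, f⟩, hcard, hf⟩, r, w⟩, hr, hw⟩
    apply Subtype.ext
    refine Prod.ext (Subtype.ext (Prod.ext ?_ ?_)) (Prod.ext rfl ?_)
    · exact Finset.insert_erase hr
    · show Function.update (Function.update f r w) r r = f
      rw [Function.update_idem]
      have h2 := Function.update_eq_self r f
      rw [show f r = r from hf.1 r hr] at h2
      exact h2
    · show Function.update f r w r = w
      exact Function.update_self r w f
end Counting

section Cards

variable (α : Type*) [Fintype α] [DecidableEq α]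

noncomputable def Acard (k : ℕ) : ℕ := Nat.card (RF α k)

variable {α}

lemma card_RFL (k : ℕ) :
    Nat.card (RFL (α := α) k) = (Fintype.card α - k) * Acard α k := by
  have e : RFL (α := α) k ≃ Σ b : RF α k, {v : α // v ∉ b.1.1} :=
    ⟨fun q => ⟨q.1.1, q.1.2, q.2⟩, fun p => ⟨(p.1, p.2.1), p.2.2⟩,
      fun q => rfl, fun p => rfl⟩
  rw [Nat.card_congr e, Nat.card_eq_fintype_card, Fintype.card_sigma]
  have hb : ∀ b : RF α k, Fintype.card {v : α // v ∉ b.1.1} = Fintype.card α - k := by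
    intro b
    rw [Fintype.card_subtype_compl, Fintype.card_coe, b.2.1]
  simp only [hb]
  rw [Finset.sum_const, Finset.card_univ, smul_eq_mul, mul_comm, Acard,
    Nat.card_eq_fintype_card]

lemma card_RFR (k : ℕ) :
    Nat.card (RFR (α := α) k) = Fintype.card α * k * Acard α (k + 1) := by
  have e : RFR (α := α) k ≃
      Σ b : RF α (k + 1), {p : α × α // p.1 ∈ b.1.1 ∧ b.2.2.root p.2 ≠ p.1} :=
    ⟨fun q => ⟨q.1.1, q.1.2, q.2⟩, fun p => ⟨(p.1, p.2.1), p.2.2⟩,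
      fun q => rfl, fun p => rfl⟩
  rw [Nat.card_congr e, Nat.card_eq_fintype_card, Fintype.card_sigma]
  simp only [← Nat.card_eq_fintype_card (α := _)]
  have hb : ∀ b : RF α (k + 1),
      Nat.card {p : α × α // p.1 ∈ b.1.1 ∧ b.2.2.root p.2 ≠ p.1} =
        Fintype.card α * k := by
    intro b
    have hP : Nat.card {p : α × α // p.1 ∈ b.1.1} = (k + 1) * Fintype.card α := by
      rw [Nat.card_eq_fintype_card]
      have e2 : {p : α × α // p.1 ∈ b.1.1} ≃ ↥b.1.1 × α :=
        ⟨fun p => (⟨p.1.1, p.2⟩, p.1.2), fun q => ⟨(q.1, q.2), q.1.2⟩,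
          fun p => rfl, fun q => rfl⟩
      rw [Fintype.card_congr e2, Fintype.card_prod, Fintype.card_coe, b.2.1]
    have hPQ : Nat.card {p : α × α // p.1 ∈ b.1.1 ∧ b.2.2.root p.2 = p.1} =
        Fintype.card α := by
      rw [Nat.card_eq_fintype_card]
      have e3 : {p : α × α // p.1 ∈ b.1.1 ∧ b.2.2.root p.2 = p.1} ≃ α :=
        ⟨fun q => q.1.2, fun w => ⟨(b.2.2.root w, w), b.2.2.root_mem w, rfl⟩,
          fun q => Subtype.ext (Prod.ext q.2.2 rfl), fun w => rfl⟩
      rw [Fintype.card_congr e3]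
    have hsplit : Nat.card {p : α × α // p.1 ∈ b.1.1 ∧ b.2.2.root p.2 = p.1} +
        Nat.card {p : α × α // p.1 ∈ b.1.1 ∧ b.2.2.root p.2 ≠ p.1} =
        Nat.card {p : α × α // p.1 ∈ b.1.1} := by
      rw [Nat.card_eq_fintype_card, Nat.card_eq_fintype_card, Nat.card_eq_fintype_card]
      rw [Fintype.card_subtype, Fintype.card_subtype, Fintype.card_subtype]
      rw [show (Finset.univ.filter fun p : α × α => p.1 ∈ b.1.1 ∧ b.2.2.root p.2 = p.1) =
          (Finset.univ.filter fun p : α × α => p.1 ∈ b.1.1).filter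
            (fun p => b.2.2.root p.2 = p.1) by rw [Finset.filter_filter],
        show (Finset.univ.filter fun p : α × α => p.1 ∈ b.1.1 ∧ b.2.2.root p.2 ≠ p.1) =
          (Finset.univ.filter fun p : α × α => p.1 ∈ b.1.1).filter
            (fun p => ¬(b.2.2.root p.2 = p.1)) by rw [Finset.filter_filter]]
      exact Finset.card_filter_add_card_filter_not _
    rw [hP, hPQ] at hsplit
    have hexp : (k + 1) * Fintype.card α = Fintype.card α * k + Fintype.card α := by ring
    rw [hexp] at hsplit
    omega
  simp only [hb]
  simp only [Finset.sum_const, Finset.card_univ, smul_eq_mul, Acard,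
    Nat.card_eq_fintype_card]
  ring

lemma Acard_rec (k : ℕ) :
    (Fintype.card α - k) * Acard α k = Fintype.card α * k * Acard α (k + 1) := by
  rw [← card_RFL, ← card_RFR]
  exact Nat.card_congr (recEquiv k)

lemma Acard_top : Acard α (Fintype.card α) = 1 := by
  rw [Acard, Nat.card_eq_one_iff_unique]
  constructor
  · constructor
    rintro ⟨⟨s, f⟩, hcard, hf⟩ ⟨⟨t, g⟩, hcard', hg⟩
    have hs : s = Finset.univ := Finset.eq_univ_of_card s hcard
    have ht : t = Finset.univ := Finset.eq_univ_of_card t hcard'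
    apply Subtype.ext
    refine Prod.ext (by simp [hs, ht]) ?_
    show f = g
    funext x
    exact (hf.1 x (hs ▸ Finset.mem_univ x)).trans (hg.1 x (ht ▸ Finset.mem_univ x)).symm
  · exact ⟨⟨(Finset.univ, id), Finset.card_univ,
      ⟨fun x _ => rfl, fun x => ⟨0, by simp⟩⟩⟩⟩

lemma Acard_eq : ∀ d k : ℕ, 1 ≤ k → k + d = Fintype.card α →
    (Acard α k : ℚ) = ((Fintype.card α - 1).choose (k - 1) : ℚ) * (Fintype.card α : ℚ) ^ d := by
  intro d
  induction d with
  | zero =>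
    intro k hk h
    simp only [Nat.add_zero] at h
    subst h
    rw [Acard_top]
    simp [Nat.choose_self]
  | succ d ih =>
    intro k hk h
    have hn : k < Fintype.card α := by omega
    have hrec := Acard_rec (α := α) k
    have ih' := ih (k + 1) (by omega) (by omega)
    have hcast : ((Fintype.card α - k : ℕ) : ℚ) * (Acard α k : ℚ) =
        (Fintype.card α : ℚ) * k * (Acard α (k + 1) : ℚ) := by
      exact_mod_cast congrArg (Nat.cast : ℕ → ℚ) hrec
    have hnk : ((Fintype.card α - k : ℕ) : ℚ) ≠ 0 := by
      have h0 : (0 : ℚ) < ((Fintype.card α - k : ℕ) : ℚ) := by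
        exact_mod_cast (by omega : 0 < Fintype.card α - k)
      exact h0.ne'
    have h3 := Nat.choose_succ_right_eq (Fintype.card α - 1) (k - 1)
    rw [show k - 1 + 1 = k by omega, show Fintype.card α - 1 - (k - 1) = Fintype.card α - k
      by omega] at h3
    have hch : ((Fintype.card α - 1).choose k : ℚ) * (k : ℚ) =
        ((Fintype.card α - 1).choose (k - 1) : ℚ) * ((Fintype.card α - k : ℕ) : ℚ) := by
      exact_mod_cast congrArg (Nat.cast : ℕ → ℚ) h3
    have this1 : (Acard α k : ℚ) =
        (Fintype.card α : ℚ) * k * (Acard α (k + 1) : ℚ) / ((Fintype.card α - k : ℕ) : ℚ) := by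
      rw [eq_div_iff hnk]
      linear_combination hcast
    rw [this1, ih', show k + 1 - 1 = k by omega, div_eq_iff hnk]
    linear_combination ((Fintype.card α : ℚ) ^ d * (Fintype.card α : ℚ)) * hch

end Cards

section Transfer

variable {α β : Type*} [DecidableEq α] [DecidableEq β]

lemma conj_iterate (e : α ≃ β) (f : α → α) (j : ℕ) (b : β) :
    (fun b => e (f (e.symm b)))^[j] b = e (f^[j] (e.symm b)) := by
  induction j generalizing b with
  | zero => simp
  | succ j ih =>
    rw [Function.iterate_succ_apply, Function.iterate_succ_apply, ih]
    simp

/-- Transfer of rooted forests along an equivalence. -/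
def transferEquiv (e : α ≃ β) (s : Finset α) (t : Finset β)
    (hst : ∀ x, x ∈ s ↔ e x ∈ t) :
    {f : α → α // IsRForest s f} ≃ {g : β → β // IsRForest t g} where
  toFun f := ⟨fun b => e (f.1 (e.symm b)), by
    constructor
    · intro y hy
      have h1 : e.symm y ∈ s := by rw [hst, e.apply_symm_apply]; exact hy
      show e (f.1 (e.symm y)) = y
      rw [f.2.1 _ h1, e.apply_symm_apply]
    · intro b
      obtain ⟨j, hj⟩ := f.2.2 (e.symm b)
      exact ⟨j, by rw [conj_iterate]; exact (hst _).1 hj⟩⟩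
  invFun g := ⟨fun a => e.symm (g.1 (e a)), by
    constructor
    · intro x hx
      have h1 : e x ∈ t := (hst x).1 hx
      show e.symm (g.1 (e x)) = x
      rw [g.2.1 _ h1, e.symm_apply_apply]
    · intro a
      obtain ⟨j, hj⟩ := g.2.2 (e a)
      refine ⟨j, ?_⟩
      have : (fun a => e.symm (g.1 (e a)))^[j] a = e.symm (g.1^[j] (e a)) := by
        simpa using conj_iterate e.symm g.1 j a
      rw [this, hst, e.apply_symm_apply]
      exact hj⟩
  left_inv f := Subtype.ext (by funext x; simp)
  right_inv g := Subtype.ext (by funext b; simp)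

variable [Fintype α]

/-- Decomposition of `RF` over the root set. -/
def rfSigmaEquiv (k : ℕ) :
    RF α k ≃ Σ s : {s : Finset α // s.card = k}, {f : α → α // IsRForest s.1 f} where
  toFun p := ⟨⟨p.1.1, p.2.1⟩, p.1.2, p.2.2⟩
  invFun q := ⟨(q.1.1, q.2.1), q.1.2, q.2.2⟩
  left_inv p := rfl
  right_inv q := rfl

lemma Acard_eq_sum (k : ℕ) :
    Acard α k = ∑ s : {s : Finset α // s.card = k},
      Nat.card {f : α → α // IsRForest s.1 f} := by
  rw [Acard, Nat.card_congr (rfSigmaEquiv k), Nat.card_eq_fintype_card,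
    Fintype.card_sigma]
  simp only [Nat.card_eq_fintype_card]

/-- Counting forests with a single root: the count does not depend on the root. -/
lemma singleton_count_const (a a' : α) :
    Nat.card {f : α → α // IsRForest {a} f} =
      Nat.card {f : α → α // IsRForest {a'} f} := by
  refine Nat.card_congr (transferEquiv (Equiv.swap a a') {a} {a'} ?_)
  intro x
  simp only [Finset.mem_singleton]
  constructor
  · intro h; rw [h]; exact Equiv.swap_apply_left a a'
  · intro h
    have h2 := (Equiv.swap a a').injective (h.trans (Equiv.swap_apply_left a a').symm)
    exact h2

lemma Acard_one_eq (a : α) :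
    Acard α 1 = Fintype.card α * Nat.card {f : α → α // IsRForest {a} f} := by
  rw [Acard_eq_sum]
  have hconst : ∀ s : {s : Finset α // s.card = 1},
      Nat.card {f : α → α // IsRForest s.1 f} =
        Nat.card {f : α → α // IsRForest {a} f} := by
    intro s
    obtain ⟨y, hy⟩ : ∃ y, s.1 = {y} := Finset.card_eq_one.1 s.2
    rw [hy]
    exact singleton_count_const y a
  rw [Finset.sum_congr rfl (fun s _ => hconst s), Finset.sum_const, Finset.card_univ,
    smul_eq_mul, Fintype.card_finset_len, Nat.choose_one_right]

end Transfer

section Graph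

open SimpleGraph Walk

variable {V : Type*} [Fintype V] [DecidableEq V]

/-- The graph associated to a parent function. -/
def pgraph (h : V → V) : SimpleGraph V := SimpleGraph.fromRel (fun x y => h x = y)

lemma pgraph_adj {h : V → V} {x y : V} :
    (pgraph h).Adj x y ↔ x ≠ y ∧ (h x = y ∨ h y = x) := by
  simp [pgraph, SimpleGraph.fromRel_adj]

variable {r : V} {h : V → V}

lemma pg_root_fix (hh : IsRForest {r} h) : h r = r := hh.1 r (Finset.mem_singleton_self r)

lemma pg_no_fix (hh : IsRForest {r} h) {x : V} (hx : x ≠ r) : h x ≠ x := by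
  intro hfix
  obtain ⟨j, hj⟩ := hh.2 x
  rw [Function.iterate_fixed hfix, Finset.mem_singleton] at hj
  exact hx hj

lemma pg_reach (hh : IsRForest {r} h) : ∀ (j : ℕ) (x : V), h^[j] x = r →
    (pgraph h).Reachable x r := by
  intro j
  induction j with
  | zero => intro x hx; rw [show h^[0] x = x from rfl] at hx; rw [hx]
  | succ j ih =>
    intro x hx
    rw [Function.iterate_succ_apply] at hx
    by_cases hfix : h x = x
    · rw [hfix] at hx
      exact ih x hx
    · have hadj : (pgraph h).Adj x (h x) := pgraph_adj.2 ⟨Ne.symm hfix, Or.inl rfl⟩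
      exact hadj.reachable.trans (ih (h x) hx)

lemma pg_connected (hh : IsRForest {r} h) : (pgraph h).Connected := by
  rw [SimpleGraph.connected_iff]
  refine ⟨?_, ⟨r⟩⟩
  intro x y
  obtain ⟨j, hj⟩ := hh.2 x
  obtain ⟨k, hk⟩ := hh.2 y
  rw [Finset.mem_singleton] at hj hk
  exact (pg_reach hh j x hj).trans (pg_reach hh k y hk).symm

lemma pg_adj_parent (hh : IsRForest {r} h) {x y : V} (hadj : (pgraph h).Adj x y)
    (hrk : hh.rank y ≤ hh.rank x) : h x = y := by
  obtain ⟨hne, hor⟩ := pgraph_adj.1 hadj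
  rcases hor with hxy | hyx
  · exact hxy
  · exfalso
    have hyr : y ≠ r := by
      intro h0
      subst h0
      exact hne (((pg_root_fix hh).symm.trans hyx).symm)
    have : hh.rank y = hh.rank (h y) + 1 :=
      hh.rank_apply (by simpa using hyr)
    rw [hyx] at this
    omega

lemma pg_acyclic (hh : IsRForest {r} h) : (pgraph h).IsAcyclic := by
  intro v c hc
  have hsuppne : c.support.toFinset.Nonempty :=
    ⟨v, List.mem_toFinset.2 c.start_mem_support⟩
  obtain ⟨x, hxt, hmax⟩ := Finset.exists_max_image c.support.toFinset hh.rank hsuppne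
  have hx : x ∈ c.support := List.mem_toFinset.1 hxt
  have hmax' : ∀ z ∈ c.support, hh.rank z ≤ hh.rank x :=
    fun z hz => hmax z (List.mem_toFinset.2 hz)
  -- membership transfer for the rotated walk
  have htail : ∀ z, z ∈ (c.rotate x hx).support.tail → z ∈ c.support := by
    intro z hz
    have hperm := SimpleGraph.Walk.support_rotate c x hx
    have := hperm.mem_iff.1 hz
    exact c.support_eq_cons ▸ List.mem_cons_of_mem _ this
  have hc' := hc.rotate hx
  cases hrot : c.rotate x hx with
  | nil => rw [hrot] at hc'; exact hc'.not_nil SimpleGraph.Walk.Nil.nil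
  | @cons _ y _ ha q =>
    rw [hrot] at hc' 
    -- y is the second vertex; show y = h x
    have hysupp : y ∈ c.support := by
      apply htail; rw [hrot]
      simp only [SimpleGraph.Walk.support_cons, List.tail_cons]
      exact q.start_mem_support
    have hy : h x = y := pg_adj_parent hh ha (hmax' y hysupp)
    have hnodup : s(x, y) ∉ q.edges := by
      have := hc'.edges_nodup
      rw [SimpleGraph.Walk.edges_cons] at this
      exact (List.nodup_cons.1 this).1
    -- now look at the last edge, via q.reverse
    cases hqr : q.reverse with
    | nil => exact ha.ne rfl
    | @cons _ z _ ha2 q2 =>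
      have hzsupp : z ∈ c.support := by
        apply htail; rw [hrot]
        simp only [SimpleGraph.Walk.support_cons, List.tail_cons]
        have h1 : z ∈ q.reverse.support := by
          rw [hqr]
          simp only [SimpleGraph.Walk.support_cons]
          exact List.mem_cons_of_mem _ q2.start_mem_support
        rwa [SimpleGraph.Walk.support_reverse, List.mem_reverse] at h1
      have hz : h x = z := pg_adj_parent hh ha2 (hmax' z hzsupp)
      have hedge : s(x, z) ∈ q.edges := by
        have h1 : s(x, z) ∈ q.reverse.edges := by
          rw [hqr, SimpleGraph.Walk.edges_cons]
          exact List.mem_cons_self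
        rwa [SimpleGraph.Walk.edges_reverse, List.mem_reverse] at h1
      rw [← hz, hy] at hedge
      exact hnodup hedge

lemma pg_istree (hh : IsRForest {r} h) : (pgraph h).IsTree :=
  ⟨pg_connected hh, pg_acyclic hh⟩

end Graph

section Graph2

open SimpleGraph Walk

variable {V : Type*} [Fintype V] [DecidableEq V]

lemma pg_induce_connected {r : V} {h : V → V} (hh : IsRForest {r} h) {s : Finset V}
    (hrs : r ∈ s) (hmap : ∀ x ∈ s, h x ∈ s) : ((pgraph h).induce (↑s : Set V)).Connected := by
  have reach : ∀ (j : ℕ) (x : V) (hx : x ∈ s), h^[j] x = r →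
      ((pgraph h).induce (↑s : Set V)).Reachable ⟨x, hx⟩ ⟨r, hrs⟩ := by
    intro j
    induction j with
    | zero =>
      intro x hx h0
      rw [show h^[0] x = x from rfl] at h0
      subst h0
      rfl
    | succ j ih =>
      intro x hx hxj
      rw [Function.iterate_succ_apply] at hxj
      by_cases hfix : h x = x
      · rw [hfix] at hxj
        exact ih x hx hxj
      · have hadj : ((pgraph h).induce (↑s : Set V)).Adj ⟨x, hx⟩ ⟨h x, hmap x hx⟩ := by
          show (pgraph h).Adj x (h x)
          exact pgraph_adj.2 ⟨Ne.symm hfix, Or.inl rfl⟩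
        exact hadj.reachable.trans (ih (h x) (hmap x hx) hxj)
  rw [SimpleGraph.connected_iff]
  refine ⟨?_, ⟨⟨r, hrs⟩⟩⟩
  rintro ⟨x, hx⟩ ⟨y, hy⟩
  obtain ⟨j, hj⟩ := hh.2 x
  obtain ⟨k, hk⟩ := hh.2 y
  rw [Finset.mem_singleton] at hj hk
  exact (reach j x hx hj).trans (reach k y hy hk).symm

variable (T : SimpleGraph V) (hT : T.IsTree) (r : V)

/-- The parent function of a tree, rooted at `r`. -/
noncomputable def psi : V → V := fun x =>
  if x = r then r else ((hT.existsUnique_path x r).choose).getVert 1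

variable {T r}

lemma psi_root : psi T hT r r = r := if_pos rfl

lemma psi_apply {x : V} (hx : x ≠ r) :
    psi T hT r x = ((hT.existsUnique_path x r).choose).getVert 1 := if_neg hx

lemma psi_adj {x : V} (hx : x ≠ r) : T.Adj x (psi T hT r x) := by
  rw [psi_apply hT hx]
  exact ((hT.existsUnique_path x r).choose).adj_snd (not_nil_of_ne hx)

lemma psi_len {x : V} (hx : x ≠ r) :
    ((hT.existsUnique_path (psi T hT r x) r).choose).length + 1 =
      ((hT.existsUnique_path x r).choose).length := by
  have hnil : ¬ ((hT.existsUnique_path x r).choose).Nil := not_nil_of_ne hx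
  have htp : ((hT.existsUnique_path x r).choose).tail.IsPath :=
    ((hT.existsUnique_path x r).choose_spec.1).tail
  have heqt := (hT.existsUnique_path (((hT.existsUnique_path x r).choose).getVert 1)
    r).choose_spec.2 _ htp
  have hlen := SimpleGraph.Walk.length_tail_add_one hnil
  rw [psi_apply hT hx, ← heqt, hlen]

lemma psi_absorb (x : V) : ∃ j, (psi T hT r)^[j] x = r := by
  suffices haux : ∀ (L : ℕ) (x : V), ((hT.existsUnique_path x r).choose).length ≤ L →
      ∃ j, (psi T hT r)^[j] x = r from
    haux _ x le_rfl
  intro L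
  induction L with
  | zero =>
    intro x hx
    by_cases hxr : x = r
    · exact ⟨0, hxr⟩
    · exfalso
      exact hxr (SimpleGraph.Walk.eq_of_length_eq_zero (Nat.le_zero.1 hx))
  | succ L ih =>
    intro x hx
    by_cases hxr : x = r
    · exact ⟨0, hxr⟩
    · have hlt := psi_len hT hxr
      obtain ⟨j, hj⟩ := ih (psi T hT r x) (by omega)
      exact ⟨j + 1, by rw [Function.iterate_succ_apply]; exact hj⟩

lemma psi_mapsTo {s : Finset V} (hconn : (T.induce (↑s : Set V)).Connected)
    (hrs : r ∈ s) {x : V} (hx : x ∈ s) : psi T hT r x ∈ s := by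
  by_cases hxr : x = r
  · rw [hxr, psi_root]; exact hrs
  · obtain ⟨w'⟩ := hconn.preconnected ⟨x, hx⟩ ⟨r, hrs⟩
    let F : (T.induce (↑s : Set V)) →g T := ⟨Subtype.val, fun {a b} hab => hab⟩
    let W : T.Walk x r := w'.map F
    have hq := (hT.existsUnique_path x r).choose_spec.2 W.toPath.1 W.toPath.2
    rw [psi_apply hT hxr, ← hq]
    have hmem : (W.toPath.1).getVert 1 ∈ (W.toPath.1).support := by
      rw [SimpleGraph.Walk.mem_support_iff_exists_getVert]
      refine ⟨1, rfl, ?_⟩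
      have : ¬ (W.toPath.1).Nil := not_nil_of_ne hxr
      rw [SimpleGraph.Walk.not_nil_iff_lt_length] at this
      omega
    have hsub := W.support_toPath_subset hmem
    rw [SimpleGraph.Walk.support_map] at hsub
    obtain ⟨z, hz, hzeq⟩ := List.mem_map.1 hsub
    rw [← hzeq]
    exact z.2

lemma psi_graph_eq : pgraph (psi T hT r) = T := by
  ext x y
  rw [pgraph_adj]
  constructor
  · rintro ⟨hne, hor⟩
    rcases hor with hxy | hyx
    · have hxr : x ≠ r := by
        rintro rfl
        exact hne (by rw [← hxy, psi_root])
      exact hxy ▸ psi_adj hT hxr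
    · have hyr : y ≠ r := by
        rintro rfl
        exact hne (by rw [← hyx, psi_root])
      exact (hyx ▸ psi_adj hT hyr).symm
  · intro hxy
    refine ⟨hxy.ne, ?_⟩
    by_cases hy : y ∈ ((hT.existsUnique_path x r).choose).support
    · left
      have hxr : x ≠ r := by
        intro h0
        subst h0
        have hnil : (hT.existsUnique_path x x).choose = Walk.nil :=
          SimpleGraph.Walk.isPath_iff_eq_nil.1 (hT.existsUnique_path x x).choose_spec.1
        rw [hnil, SimpleGraph.Walk.support_nil] at hy
        simp at hy
        exact hxy.ne hy.symm
      have hq1 : (((hT.existsUnique_path x r).choose).takeUntil y hy).IsPath :=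
        ((hT.existsUnique_path x r).choose_spec.1).takeUntil hy
      have hsing := (hT.existsUnique_path x y).unique hq1 (SimpleGraph.Path.singleton hxy).2
      have hspec := ((hT.existsUnique_path x r).choose).take_spec hy
      rw [psi_apply hT hxr, ← hspec, hsing]
      show ((Walk.cons hxy Walk.nil).append
        (((hT.existsUnique_path x r).choose).dropUntil y hy)).getVert 1 = y
      rw [SimpleGraph.Walk.cons_append]
      exact SimpleGraph.Walk.snd_cons _ hxy
    · right
      have hyr : y ≠ r := by
        intro h0
        subst h0
        exact hy ((hT.existsUnique_path x y).choose).end_mem_support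
      have hq : (Walk.cons hxy.symm (hT.existsUnique_path x r).choose).IsPath :=
        ((hT.existsUnique_path x r).choose_spec.1).cons hy
      have heq := (hT.existsUnique_path y r).choose_spec.2 _ hq
      rw [psi_apply hT hyr, ← heq]
      exact SimpleGraph.Walk.snd_cons _ hxy.symm

lemma psi_leftinv {r : V} {h : V → V} (hh : IsRForest {r} h) :
    psi (pgraph h) (pg_istree hh) r = h := by
  have OW : ∀ (j : ℕ) (x : V), h^[j] x = r → ∃ p : (pgraph h).Walk x r, p.IsPath ∧
      (∀ z ∈ p.support, ∃ i, h^[i] x = z) ∧ (x ≠ r → p.getVert 1 = h x) := by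
    intro j
    induction j with
    | zero =>
      intro x hx
      rw [show h^[0] x = x from rfl] at hx
      subst hx
      exact ⟨Walk.nil, SimpleGraph.Walk.IsPath.nil,
        fun z hz => ⟨0, by simpa using (by simpa using hz : z = x).symm⟩,
        fun hne => absurd rfl hne⟩
    | succ j ih =>
      intro x hx
      by_cases hxr : x = r
      · subst hxr
        exact ⟨Walk.nil, SimpleGraph.Walk.IsPath.nil,
          fun z hz => ⟨0, by simpa using (by simpa using hz : z = x).symm⟩,
          fun hne => absurd rfl hne⟩
      · rw [Function.iterate_succ_apply] at hx
        obtain ⟨p', h1, h2, _h3⟩ := ih (h x) hx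
        have hadj : (pgraph h).Adj x (h x) :=
          pgraph_adj.2 ⟨Ne.symm (pg_no_fix hh hxr), Or.inl rfl⟩
        have hxnot : x ∉ p'.support := by
          intro hmem
          obtain ⟨i, hi⟩ := h2 x hmem
          exact hh.no_return (by simpa using hxr) i hi
        refine ⟨Walk.cons hadj p', h1.cons hxnot, ?_, ?_⟩
        · intro z hz
          rw [SimpleGraph.Walk.support_cons] at hz
          rcases List.mem_cons.1 hz with rfl | hz'
          · exact ⟨0, rfl⟩
          · obtain ⟨i, hi⟩ := h2 z hz'
            exact ⟨i + 1, by rw [Function.iterate_succ_apply]; exact hi⟩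
        · intro _
          exact SimpleGraph.Walk.snd_cons _ hadj
  funext x
  by_cases hxr : x = r
  · rw [hxr, psi_root, pg_root_fix hh]
  · obtain ⟨j, hj⟩ := hh.2 x
    rw [Finset.mem_singleton] at hj
    obtain ⟨p, hp, _hsupp, hgv⟩ := OW j x hj
    have heq := ((pg_istree hh).existsUnique_path x r).choose_spec.2 p hp
    rw [psi_apply _ hxr, ← heq]
    exact hgv hxr

end Graph2

section Split

variable {V : Type*} [Fintype V] [DecidableEq V]

lemma iterate_ite_eq {s : Finset V} {f : V → V} {x : V} {j : ℕ}
    (h : ∀ i < j, f^[i] x ∉ s) :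
    (fun z => if z ∈ s then z else f z)^[j] x = f^[j] x := by
  induction j with
  | zero => simp
  | succ j ih =>
    rw [Function.iterate_succ_apply', Function.iterate_succ_apply',
      ih (fun i hi => h i (by omega))]
    simp only [if_neg (h j (by omega))]

lemma iterate_dite_eq {s : Finset V} {f : V → V} {g : (y : V) → y ∈ s → V} {x : V} {j : ℕ}
    (h : ∀ i < j, f^[i] x ∉ s) :
    (fun z => if hz : z ∈ s then g z hz else f z)^[j] x = f^[j] x := by
  induction j with
  | zero => simp
  | succ j ih =>
    rw [Function.iterate_succ_apply', Function.iterate_succ_apply',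
      ih (fun i hi => h i (by omega))]
    simp only [dif_neg (h j (by omega))]

lemma subtype_iterate {s : Finset V} {h : V → V} (hmap : ∀ x ∈ s, h x ∈ s) (j : ℕ)
    (y : {x // x ∈ s}) :
    (((fun y : {x // x ∈ s} => (⟨h y.1, hmap _ y.2⟩ : {x // x ∈ s}))^[j] y) : V) =
      h^[j] (y : V) := by
  induction j generalizing y with
  | zero => simp
  | succ j ih =>
    rw [Function.iterate_succ_apply, Function.iterate_succ_apply]
    exact ih _

/-- Splitting a forest rooted at `r` whose non-`s` part maps into `s`. -/
noncomputable def splitEquiv (s : Finset V) (r : V) (hr : r ∈ s) :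
    {h : V → V // IsRForest {r} h ∧ ∀ x ∈ s, h x ∈ s} ≃
      ({g : {x // x ∈ s} → {x // x ∈ s} // IsRForest {(⟨r, hr⟩ : {x // x ∈ s})} g} ×
        {f : V → V // IsRForest s f}) where
  toFun h :=
    (⟨fun y => ⟨h.1 y.1, h.2.2 y.1 y.2⟩, by
      constructor
      · intro y hy
        rw [Finset.mem_singleton] at hy
        subst hy
        exact Subtype.ext (h.2.1.1 r (Finset.mem_singleton_self r))
      · intro y
        obtain ⟨j, hj⟩ := h.2.1.2 y.1
        rw [Finset.mem_singleton] at hj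
        refine ⟨j, ?_⟩
        rw [Finset.mem_singleton]
        exact Subtype.ext (by rw [subtype_iterate h.2.2 j y]; exact hj)⟩,
     ⟨fun x => if x ∈ s then x else h.1 x, by
      constructor
      · intro x hx
        simp [hx]
      · intro x
        have hex : ∃ j, h.1^[j] x ∈ s := by
          obtain ⟨j, hj⟩ := h.2.1.2 x
          rw [Finset.mem_singleton] at hj
          exact ⟨j, by rw [hj]; exact hr⟩
        refine ⟨Nat.find hex, ?_⟩
        rw [iterate_ite_eq (fun i hi => Nat.find_min hex hi)]
        exact Nat.find_spec hex⟩)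
  invFun p :=
    ⟨fun x => if hx : x ∈ s then (p.1.1 ⟨x, hx⟩ : V) else p.2.1 x, by
      refine ⟨⟨?_, ?_⟩, ?_⟩
      · intro x hx
        rw [Finset.mem_singleton] at hx
        subst hx
        show (if hx : x ∈ s then ((p.1.1 ⟨x, hx⟩ : {y // y ∈ s}) : V) else p.2.1 x) = x
        rw [dif_pos hr]
        have h5 := p.1.2.1 ⟨x, hr⟩ (Finset.mem_singleton_self _)
        exact congrArg Subtype.val h5
      · intro x
        set H := fun x => if hx : x ∈ s then (p.1.1 ⟨x, hx⟩ : V) else p.2.1 x with hH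
        have hmem : ∀ z (hz : z ∈ s) (j : ℕ), H^[j] z = ((p.1.1)^[j] ⟨z, hz⟩ : V) := by
          intro z hz j
          induction j generalizing z with
          | zero => simp
          | succ j ih =>
            rw [Function.iterate_succ_apply, Function.iterate_succ_apply]
            have h1 : H z = (p.1.1 ⟨z, hz⟩ : V) := dif_pos hz
            rw [h1, ih _ (p.1.1 ⟨z, hz⟩).2]
        have hins : ∀ z (hz : z ∈ s), ∃ j, H^[j] z = r := by
          intro z hz
          obtain ⟨j, hj⟩ := p.1.2.2 ⟨z, hz⟩
          rw [Finset.mem_singleton] at hj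
          exact ⟨j, by rw [hmem z hz j, hj]⟩
        by_cases hx : x ∈ s
        · obtain ⟨j, hj⟩ := hins x hx
          exact ⟨j, by rw [Finset.mem_singleton]; exact hj⟩
        · obtain ⟨j0, hj0⟩ := p.2.2.2 x
          have hex : ∃ j, (p.2.1)^[j] x ∈ s := ⟨j0, hj0⟩
          have h1 : H^[Nat.find hex] x = (p.2.1)^[Nat.find hex] x :=
            iterate_dite_eq (fun i hi => Nat.find_min hex hi)
          have h2 : (p.2.1)^[Nat.find hex] x ∈ s := Nat.find_spec hex
          obtain ⟨j, hj⟩ := hins _ h2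
          refine ⟨j + Nat.find hex, ?_⟩
          rw [Finset.mem_singleton, Function.iterate_add_apply, h1, hj]
      · intro x hx
        show (if hx' : x ∈ s then ((p.1.1 ⟨x, hx'⟩ : {y // y ∈ s}) : V) else p.2.1 x) ∈ s
        rw [dif_pos hx]
        exact (p.1.1 ⟨x, hx⟩).2⟩
  left_inv h := by
    apply Subtype.ext
    funext x
    by_cases hx : x ∈ s
    · show (if hx' : x ∈ s then (h.1 x : V) else _) = h.1 x
      rw [dif_pos hx]
    · show (if hx' : x ∈ s then _ else if x ∈ s then x else h.1 x) = h.1 x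
      rw [dif_neg hx, if_neg hx]
  right_inv p := by
    apply Prod.ext
    · apply Subtype.ext
      funext y
      apply Subtype.ext
      show (if hx : (y : V) ∈ s then (p.1.1 ⟨y, hx⟩ : V) else p.2.1 y) = (p.1.1 y : V)
      rw [dif_pos y.2]
    · apply Subtype.ext
      funext x
      by_cases hx : x ∈ s
      · show (if x ∈ s then x else _) = p.2.1 x
        rw [if_pos hx, p.2.2.1 x hx]
      · show (if x ∈ s then x else if hx' : x ∈ s then _ else p.2.1 x) = p.2.1 x
        rw [if_neg hx, dif_neg hx]

end Split

section Main

open SimpleGraph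

variable {n m : ℕ}

noncomputable def mainEquiv (n m : ℕ) (hm : 0 < m) :
    {p : SimpleGraph (Fin n) × Finset (Fin n) //
        p.1.IsTree ∧ p.2.card = m ∧ (p.1.induce (↑p.2 : Set (Fin n))).Connected} ≃
      Σ s : {s : Finset (Fin n) // s.card = m},
        {h : Fin n → Fin n //
          IsRForest {s.1.min' (Finset.card_pos.1 (by rw [s.2]; exact hm))} h ∧
            ∀ x ∈ s.1, h x ∈ s.1} where
  toFun p :=
    ⟨⟨p.1.2, p.2.2.1⟩,
     psi p.1.1 p.2.1 (p.1.2.min' (Finset.card_pos.1 (by rw [p.2.2.1]; exact hm))),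
     ⟨⟨fun x hx => by
        rw [Finset.mem_singleton] at hx
        rw [hx, psi_root],
       fun x => by
        obtain ⟨j, hj⟩ := psi_absorb p.2.1
          (r := p.1.2.min' (Finset.card_pos.1 (by rw [p.2.2.1]; exact hm))) x
        exact ⟨j, by rw [Finset.mem_singleton]; exact hj⟩⟩,
      fun x hx => psi_mapsTo p.2.1 p.2.2.2 (Finset.min'_mem _ _) hx⟩⟩
  invFun q :=
    ⟨(pgraph q.2.1, q.1.1), pg_istree q.2.2.1, q.1.2,
      pg_induce_connected q.2.2.1 (Finset.min'_mem _ _) q.2.2.2⟩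
  left_inv p := by
    apply Subtype.ext
    apply Prod.ext
    · exact psi_graph_eq p.2.1
    · rfl
  right_inv q := by
    refine Sigma.ext rfl (heq_of_eq (Subtype.ext ?_))
    exact psi_leftinv q.2.2.1

lemma main_count (hm : 0 < m) :
    m * Nat.card {p : SimpleGraph (Fin n) × Finset (Fin n) //
        p.1.IsTree ∧ p.2.card = m ∧ (p.1.induce (↑p.2 : Set (Fin n))).Connected} =
      Acard (Fin m) 1 * Acard (Fin n) m := by
  rw [Nat.card_congr (mainEquiv n m hm), Nat.card_eq_fintype_card, Fintype.card_sigma]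
  simp only [← Nat.card_eq_fintype_card]
  rw [Finset.mul_sum]
  have hterm : ∀ s : {s : Finset (Fin n) // s.card = m},
      m * Nat.card {h : Fin n → Fin n //
          IsRForest {s.1.min' (Finset.card_pos.1 (by rw [s.2]; exact hm))} h ∧
            ∀ x ∈ s.1, h x ∈ s.1} =
        Acard (Fin m) 1 * Nat.card {f : Fin n → Fin n // IsRForest s.1 f} := by
    intro s
    have hr : s.1.min' (Finset.card_pos.1 (by rw [s.2]; exact hm)) ∈ s.1 :=
      Finset.min'_mem _ _
    rw [Nat.card_congr (splitEquiv s.1 _ hr), Nat.card_prod]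
    set r := s.1.min' (Finset.card_pos.1 (by rw [s.2]; exact hm))
    have e : {x // x ∈ s.1} ≃ Fin m := Finset.equivFinOfCardEq s.2
    have hc : Nat.card {g : {x // x ∈ s.1} → {x // x ∈ s.1} //
        IsRForest {(⟨r, hr⟩ : {x // x ∈ s.1})} g} =
        Nat.card {g : Fin m → Fin m // IsRForest {e ⟨r, hr⟩} g} := by
      refine Nat.card_congr (transferEquiv e _ _ ?_)
      intro x
      simp only [Finset.mem_singleton]
      exact ⟨fun hx => by rw [hx], fun hx => e.injective hx⟩
    rw [hc, ← mul_assoc]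
    congr 1
    rw [Acard_one_eq (e ⟨r, hr⟩), Fintype.card_fin]
  rw [Finset.sum_congr rfl (fun s _ => hterm s), ← Finset.mul_sum, ← Acard_eq_sum]

end Main

/-- For `1 ≤ m ≤ n`, the number of pairs `(T, T')` of a labeled tree `T` on `{1,…,n}`
together with an induced subtree `T'` of `T` on exactly `m` vertices (encoded by the
vertex subset `s`, whose induced subgraph is required to be connected, hence a tree)
equals `m^(m-1) * choose n m * n^(n-m-1)`. The exponent `n - m - 1` may be `-1`
(when `m = n`), so the identity is stated in `ℚ` with an integer power. -/
theorem card_tree_subtree_pairs (n m : ℕ) (hm : 1 ≤ m) (hmn : m ≤ n) :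
    (Nat.card {p : SimpleGraph (Fin n) × Finset (Fin n) //
        p.1.IsTree ∧ p.2.card = m ∧ (p.1.induce (↑p.2 : Set (Fin n))).Connected} : ℚ) =
      (m : ℚ) ^ (m - 1) * n.choose m * (n : ℚ) ^ ((n : ℤ) - m - 1) := by
  have hn : 0 < n := lt_of_lt_of_le hm hmn
  have hm0 : (m : ℚ) ≠ 0 := by positivity
  have hn0 : (n : ℚ) ≠ 0 := by positivity
  have hA1 : (Acard (Fin m) 1 : ℚ) = (m : ℚ) ^ (m - 1) := by
    have := Acard_eq (α := Fin m) (m - 1) 1 le_rfl (by rw [Fintype.card_fin]; omega)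
    rw [Fintype.card_fin] at this
    simpa using this
  have hA2 : (Acard (Fin n) m : ℚ) = ((n - 1).choose (m - 1) : ℚ) * (n : ℚ) ^ (n - m) := by
    have := Acard_eq (α := Fin n) (n - m) m hm (by rw [Fintype.card_fin]; omega)
    rwa [Fintype.card_fin] at this
  have hmain := main_count (n := n) hm
  have hmainQ : (m : ℚ) * (Nat.card {p : SimpleGraph (Fin n) × Finset (Fin n) //
        p.1.IsTree ∧ p.2.card = m ∧ (p.1.induce (↑p.2 : Set (Fin n))).Connected} : ℚ) =
      (Acard (Fin m) 1 : ℚ) * (Acard (Fin n) m : ℚ) := by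
    exact_mod_cast congrArg (Nat.cast : ℕ → ℚ) hmain
  have hz : (n : ℚ) ^ ((n : ℤ) - m - 1) = (n : ℚ) ^ (n - m) / n := by
    rw [show (n : ℤ) - m - 1 = ((n - m : ℕ) : ℤ) - 1 by omega, zpow_sub_one₀ hn0,
      zpow_natCast]
    rfl
  have hid : (n : ℚ) * ((n - 1).choose (m - 1) : ℚ) = (n.choose m : ℚ) * m := by
    have h4 := Nat.add_one_mul_choose_eq (n - 1) (m - 1)
    rw [show n - 1 + 1 = n by omega, show m - 1 + 1 = m by omega] at h4
    exact_mod_cast congrArg (Nat.cast : ℕ → ℚ) h4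
  apply mul_left_cancel₀ hm0
  rw [hmainQ, hA1, hA2, hz]
  have hinv : (n : ℚ) * (n : ℚ)⁻¹ = 1 := mul_inv_cancel₀ hn0
  linear_combination ((m : ℚ) ^ (m - 1) * (n : ℚ) ^ (n - m) * (n : ℚ)⁻¹) * hid -
    ((m : ℚ) ^ (m - 1) * (n : ℚ) ^ (n - m) * ((n - 1).choose (m - 1) : ℚ)) * hinv
end

section
/- As formal power series in x over the rationals, x^2 + 2x - x·e^x = ∑_{n ≥ 1} (z_n / n!) · (x e^x e^{-x e^x})^n, where z_n = n^{n-1} - 2·∑_{m=2}^{n} (-1)^m n^{n-m} m^{m-2} binom(n-1, m-1). -/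
open PowerSeries

/-- For a formal power series `f` with zero constant coefficient, `expOf f` is the
formal power series `e^f = ∑_j f^j / j!`; the coefficient of `X^k` only receives
contributions from `j ≤ k` since `f^j` has order at least `j`. -/
noncomputable def expOf (f : PowerSeries ℚ) : PowerSeries ℚ :=
  PowerSeries.mk fun k =>
    ∑ j ∈ Finset.range (k + 1), (PowerSeries.coeff (R := ℚ) k (f ^ j)) / j.factorial

open Finset

lemma fd_step (n : ℕ) (f : ℕ → ℚ) :
    ∑ j ∈ range (n+2), (-1:ℚ)^j * ((n+1).choose j) * f j
      = ∑ j ∈ range (n+1), (-1:ℚ)^j * (n.choose j) * (f j - f (j+1)) := by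
  rw [Finset.sum_range_succ' (fun j => (-1:ℚ)^j * ((n+1).choose j) * f j) (n+1)]
  have h1 : ∀ j, ((n+1).choose (j+1) : ℚ) = n.choose j + n.choose (j+1) := by
    intro j
    rw [Nat.choose_succ_succ]
    push_cast; ring
  calc (∑ j ∈ range (n+1), (-1:ℚ)^(j+1) * ((n+1).choose (j+1)) * f (j+1))
        + (-1:ℚ)^0 * ((n+1).choose 0) * f 0
      = (∑ j ∈ range (n+1), ((-1:ℚ)^(j+1) * (n.choose j) * f (j+1)
          + (-1:ℚ)^(j+1) * (n.choose (j+1)) * f (j+1))) + f 0 := by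
        simp only [h1, Nat.choose_zero_right, Nat.cast_one, pow_zero]
        rw [one_mul, one_mul]
        congr 1
        apply Finset.sum_congr rfl; intros; ring
    _ = (∑ j ∈ range (n+1), (-1:ℚ)^(j+1) * (n.choose j) * f (j+1))
        + ((∑ j ∈ range (n+1), (-1:ℚ)^(j+1) * (n.choose (j+1)) * f (j+1)) + f 0) := by
        rw [Finset.sum_add_distrib]; ring
    _ = (∑ j ∈ range (n+1), (-1:ℚ)^(j+1) * (n.choose j) * f (j+1))
        + ∑ j ∈ range (n+2), (-1:ℚ)^j * (n.choose j) * f j := by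
        rw [Finset.sum_range_succ' (fun j => (-1:ℚ)^j * (n.choose j) * f j) (n+1)]
        norm_num
    _ = ∑ j ∈ range (n+1), (-1:ℚ)^j * (n.choose j) * (f j - f (j+1)) := by
        rw [Finset.sum_range_succ (fun j => (-1:ℚ)^j * (n.choose j) * f j) (n+1)]
        rw [Nat.choose_succ_self]
        simp only [Nat.cast_zero, mul_zero, zero_mul, add_zero]
        rw [add_comm, ← Finset.sum_add_distrib]
        apply Finset.sum_congr rfl; intros; ring

lemma fd : ∀ (n : ℕ) (p : Polynomial ℚ), p.natDegree < n →
    ∑ j ∈ range (n+1), (-1:ℚ)^j * (n.choose j) * p.eval (j:ℚ) = 0 := by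
  intro n
  induction n with
  | zero => intro p hp; exact absurd hp (Nat.not_lt_zero _)
  | succ n ih =>
    intro p hp
    have hstep := fd_step n (fun j => p.eval (j:ℚ))
    rw [show n+1+1 = n+2 from rfl] at hstep
    rw [hstep]
    by_cases hc : p.natDegree = 0
    · obtain ⟨a, rfl⟩ := Polynomial.natDegree_eq_zero.mp hc
      simp
    · set q : Polynomial ℚ := p - p.comp (Polynomial.X + Polynomial.C 1) with hq
      have hpe : ∀ j : ℕ, p.eval (j:ℚ) - p.eval ((j:ℚ)+1) = q.eval (j:ℚ) := by
        intro j
        simp [hq, Polynomial.eval_comp]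
      have hp0 : p ≠ 0 := fun h => hc (by simp [h])
      have hdcomp : (p.comp (Polynomial.X + Polynomial.C 1)).natDegree = p.natDegree := by
        rw [Polynomial.natDegree_comp, Polynomial.natDegree_X_add_C, mul_one]
      have hlc : p.leadingCoeff = (p.comp (Polynomial.X + Polynomial.C 1)).leadingCoeff := by
        rw [Polynomial.leadingCoeff_comp (by rw [Polynomial.natDegree_X_add_C]; norm_num), Polynomial.leadingCoeff_X_add_C, one_pow, mul_one]
      have hcomp0 : p.comp (Polynomial.X + Polynomial.C 1) ≠ 0 := by
        intro h
        rw [h, Polynomial.natDegree_zero] at hdcomp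
        exact hc hdcomp.symm
      have hdeg : q.degree < p.degree := by
        apply Polynomial.degree_sub_lt _ hp0 hlc
        rw [Polynomial.degree_eq_natDegree hp0, Polynomial.degree_eq_natDegree hcomp0, hdcomp]
      by_cases hq0 : q = 0
      · apply Finset.sum_eq_zero
        intro j _
        have := hpe j
        rw [hq0] at this
        simp only [Polynomial.eval_zero] at this
        push_cast
        rw [this]
        ring
      · have hql : q.natDegree < n := by
          have h1 : q.natDegree < p.natDegree :=
            Polynomial.natDegree_lt_natDegree hq0 hdeg
          omega
        have := ih q hql
        rw [← this]
        apply Finset.sum_congr rfl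
        intro j _
        have := hpe j
        push_cast
        rw [this]

section helpers

lemma neg_one_pow_sub' (i n : ℕ) (h : n ≤ i) : (-1:ℚ)^(i-n) = (-1)^i * (-1)^n := by
  rw [← pow_add, show i + n = (i-n) + 2*n by omega, pow_add, pow_mul]
  norm_num

lemma fd_apply (i : ℕ) (p : Polynomial ℚ) (hdeg : p.natDegree < i) :
    ∑ n ∈ range (i+1), (-1:ℚ)^(i-n) * (i.choose n) * p.eval (n:ℚ) = 0 := by
  have h := fd i p hdeg
  have : ∀ n ∈ range (i+1), (-1:ℚ)^(i-n) * (i.choose n) * p.eval (n:ℚ)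
      = (-1:ℚ)^i * ((-1:ℚ)^n * (i.choose n) * p.eval (n:ℚ)) := by
    intro n hn
    simp only [mem_range] at hn
    rw [neg_one_pow_sub' i n (by omega)]
    ring
  rw [Finset.sum_congr rfl this, ← Finset.mul_sum, h, mul_zero]

lemma cast_choose_prod (m n : ℕ) (hm : 1 ≤ m) (hn : 1 ≤ n) :
    ((n-1).choose (m-1) : ℚ) * (m-1).factorial = ∏ t ∈ range (m-1), ((n:ℚ) - 1 - t) := by
  by_cases h : m ≤ n
  · have hcd : ((n-1).descFactorial (m-1) : ℚ) = ∏ t ∈ range (m-1), ((n:ℚ) - 1 - t) := by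
      rw [Nat.descFactorial_eq_prod_range, Nat.cast_prod]
      apply Finset.prod_congr rfl
      intro t ht
      simp only [mem_range] at ht
      have : t ≤ n - 1 := by omega
      rw [Nat.cast_sub this, Nat.cast_sub (by omega : 1 ≤ n)]
      norm_num
    rw [← hcd, Nat.descFactorial_eq_factorial_mul_choose]
    push_cast
    ring
  · rw [Nat.choose_eq_zero_of_lt (by omega)]
    rw [Finset.prod_eq_zero (show n - 1 ∈ range (m-1) by simp; omega)]
    · ring
    · rw [Nat.cast_sub (by omega : 1 ≤ n)]; norm_num

lemma sum_triangle (lo k : ℕ) (f : ℕ → ℕ → ℚ) :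
    ∑ n ∈ Icc lo k, ∑ i ∈ Icc n k, f n i = ∑ i ∈ Icc lo k, ∑ n ∈ Icc lo i, f n i := by
  have h1 : ∀ n ∈ Icc lo k, ∑ i ∈ Icc n k, f n i
      = ∑ i ∈ Icc lo k, if n ≤ i then f n i else 0 := by
    intro n hn
    simp only [mem_Icc] at hn
    rw [← Finset.sum_subset (show Icc n k ⊆ Icc lo k by
        apply Finset.Icc_subset_Icc_left hn.1)]
    · apply Finset.sum_congr rfl
      intro i hi
      simp only [mem_Icc] at hi
      rw [if_pos hi.1]
    · intro i hi hni
      simp only [mem_Icc] at hi hni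
      rw [if_neg (by omega)]
  rw [Finset.sum_congr rfl h1, Finset.sum_comm]
  apply Finset.sum_congr rfl
  intro i hi
  simp only [mem_Icc] at hi
  rw [← Finset.sum_subset (show Icc lo i ⊆ Icc lo k by
      apply Finset.Icc_subset_Icc_right hi.2)]
  · apply Finset.sum_congr rfl
    intro n hn
    simp only [mem_Icc] at hn
    rw [if_pos hn.2]
  · intro n hn hni
    simp only [mem_Icc] at hn hni
    rw [if_neg (by omega)]

lemma sum_Icc_to_range (n k : ℕ) (f : ℕ → ℚ) :
    ∑ i ∈ Icc n k, f i = ∑ j ∈ range (k+1-n), f (n+j) := by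
  rw [← Finset.Ico_add_one_right_eq_Icc, Finset.sum_Ico_eq_sum_range]

end helpers
lemma fd_Icc (i : ℕ) (p : Polynomial ℚ) (hdeg : p.natDegree < i) (h0 : p.eval 0 = 0) :
    ∑ n ∈ Icc 1 i, (-1:ℚ)^(i-n) * (i.choose n) * p.eval (n:ℚ) = 0 := by
  rw [Finset.sum_subset (show Icc 1 i ⊆ range (i+1) by
      intro x hx; simp only [mem_Icc] at hx; simp only [mem_range]; omega)]
  · exact fd_apply i p hdeg
  · intro x hx hxn
    simp only [mem_range] at hx
    simp only [mem_Icc] at hxn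
    have : x = 0 := by omega
    subst this
    simp [h0]

lemma corA (i : ℕ) (hi : 2 ≤ i) :
    ∑ n ∈ Icc 1 i, ((n:ℚ)^(n-1)/n.factorial) * ((-(n:ℚ))^(i-n)/(i-n).factorial) = 0 := by
  have key : ∀ n ∈ Icc 1 i, ((n:ℚ)^(n-1)/n.factorial) * ((-(n:ℚ))^(i-n)/(i-n).factorial)
      = (1/i.factorial) * ((-1:ℚ)^(i-n) * (i.choose n) * (Polynomial.X^(i-1) : Polynomial ℚ).eval (n:ℚ)) := by
    intro n hn
    simp only [mem_Icc] at hn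
    rw [Polynomial.eval_pow, Polynomial.eval_X]
    rw [Nat.cast_choose ℚ hn.2]
    rw [neg_pow]
    rw [show (n:ℚ)^(i-1) = (n:ℚ)^(n-1) * (n:ℚ)^(i-n) by rw [← pow_add]; congr 1; omega]
    have h1 : ((n.factorial : ℚ)) ≠ 0 := Nat.cast_ne_zero.mpr n.factorial_ne_zero
    have h2 : (((i-n).factorial : ℚ)) ≠ 0 := Nat.cast_ne_zero.mpr (i-n).factorial_ne_zero
    have h3 : ((i.factorial : ℚ)) ≠ 0 := Nat.cast_ne_zero.mpr i.factorial_ne_zero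
    field_simp
  rw [Finset.sum_congr rfl key, ← Finset.mul_sum]
  rw [fd_Icc i _ (by simp [Polynomial.natDegree_X_pow]; omega) (by
    rw [Polynomial.eval_pow, Polynomial.eval_X, zero_pow (by omega : i - 1 ≠ 0)])]
  ring
lemma corB (m i : ℕ) (hm : 2 ≤ m) (hmi : m ≤ i) :
    ∑ n ∈ Icc m i, ((n:ℚ)^(n-m) * ((n-1).choose (m-1)) / n.factorial)
        * ((-(n:ℚ))^(i-n)/(i-n).factorial)
      = if i = m then 1/(m.factorial:ℚ) else 0 := by
  by_cases him : i = m
  · subst him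
    rw [Finset.Icc_self, Finset.sum_singleton, if_pos rfl]
    simp [Nat.choose_self]
  · rw [if_neg him]
    have hlt : m < i := lt_of_le_of_ne hmi (fun h => him h.symm)
    set p : Polynomial ℚ := Polynomial.C (((m-1).factorial : ℚ))⁻¹
        * ((∏ t ∈ range (m-1), (Polynomial.X - Polynomial.C ((t:ℚ)+1))) * Polynomial.X^(i-m)) with hp
    have hfne : (((m-1).factorial : ℚ)) ≠ 0 := Nat.cast_ne_zero.mpr (m-1).factorial_ne_zero
    have heval : ∀ n : ℕ, p.eval (n:ℚ)
        = (((m-1).factorial : ℚ))⁻¹ * (∏ t ∈ range (m-1), ((n:ℚ) - 1 - t)) * (n:ℚ)^(i-m) := by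
      intro n
      simp only [hp, Polynomial.eval_mul, Polynomial.eval_C, Polynomial.eval_pow,
        Polynomial.eval_X, Polynomial.eval_prod, Polynomial.eval_sub]
      rw [show (∏ t ∈ range (m-1), ((n:ℚ) - ((t:ℚ)+1))) = ∏ t ∈ range (m-1), ((n:ℚ) - 1 - t) by
        apply Finset.prod_congr rfl; intro t _; ring]
      ring
    have hchoose : ∀ n : ℕ, 1 ≤ n → p.eval (n:ℚ) = ((n-1).choose (m-1) : ℚ) * (n:ℚ)^(i-m) := by
      intro n hn
      rw [heval n, ← cast_choose_prod m n (by omega) hn]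
      field_simp
    have hdeg : p.natDegree < i := by
      have h1 : (∏ t ∈ range (m-1), (Polynomial.X - Polynomial.C ((t:ℚ)+1))).natDegree = m - 1 := by
        rw [Polynomial.natDegree_prod _ _ (fun t _ => Polynomial.X_sub_C_ne_zero _)]
        simp only [Polynomial.natDegree_X_sub_C, Finset.sum_const, card_range, smul_eq_mul, mul_one]
      have h2 : p.natDegree = (m-1) + (i-m) := by
        rw [hp, Polynomial.natDegree_C_mul (by positivity), Polynomial.natDegree_mul
          (by
            apply Finset.prod_ne_zero_iff.mpr
            intro t _; exact Polynomial.X_sub_C_ne_zero _)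
          (pow_ne_zero _ Polynomial.X_ne_zero), h1, Polynomial.natDegree_X_pow]
      omega
    have h0 : p.eval 0 = 0 := by
      have := heval 0
      simp only [Nat.cast_zero] at this
      rw [this, zero_pow (by omega : i - m ≠ 0)]
      ring
    have key : ∀ n ∈ Icc m i, ((n:ℚ)^(n-m) * ((n-1).choose (m-1)) / n.factorial)
        * ((-(n:ℚ))^(i-n)/(i-n).factorial)
        = (1/i.factorial) * ((-1:ℚ)^(i-n) * (i.choose n) * p.eval (n:ℚ)) := by
      intro n hn
      simp only [mem_Icc] at hn
      rw [hchoose n (by omega), Nat.cast_choose ℚ hn.2, neg_pow]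
      rw [show (n:ℚ)^(i-m) = (n:ℚ)^(n-m) * (n:ℚ)^(i-n) by rw [← pow_add]; congr 1; omega]
      have h1 : ((n.factorial : ℚ)) ≠ 0 := Nat.cast_ne_zero.mpr n.factorial_ne_zero
      have h2 : (((i-n).factorial : ℚ)) ≠ 0 := Nat.cast_ne_zero.mpr (i-n).factorial_ne_zero
      have h3 : ((i.factorial : ℚ)) ≠ 0 := Nat.cast_ne_zero.mpr i.factorial_ne_zero
      field_simp
    rw [Finset.sum_congr rfl key, ← Finset.mul_sum]
    have hext : ∑ n ∈ Icc m i, ((-1:ℚ)^(i-n) * (i.choose n) * p.eval (n:ℚ))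
        = ∑ n ∈ Icc 1 i, ((-1:ℚ)^(i-n) * (i.choose n) * p.eval (n:ℚ)) := by
      apply Finset.sum_subset (Finset.Icc_subset_Icc_left (by omega))
      intro n hn hnn
      simp only [mem_Icc] at hn hnn
      have hn1 : 1 ≤ n := hn.1
      have hnm : n < m := by omega
      rw [hchoose n hn1, Nat.choose_eq_zero_of_lt (show n-1 < m-1 by omega)]
      simp
    rw [hext, fd_Icc i p hdeg h0, mul_zero]
lemma corC (k : ℕ) (hk : 3 ≤ k) :
    ∑ i ∈ Icc 2 k, (-1:ℚ)^i * (k.choose i) * (i:ℚ)^(k-2) = (k:ℚ) := by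
  have h := fd_Icc k (Polynomial.X^(k-2)) (by simp [Polynomial.natDegree_X_pow]; omega)
      (by rw [Polynomial.eval_pow, Polynomial.eval_X, zero_pow (by omega : k-2 ≠ 0)])
  simp only [Polynomial.eval_pow, Polynomial.eval_X] at h
  rw [show Icc 1 k = insert 1 (Icc 2 k) from by
    ext x; simp only [mem_Icc, Finset.mem_insert, mem_Icc]; omega] at h
  rw [Finset.sum_insert (by simp)] at h
  have hrw : ∀ n ∈ Icc 2 k, (-1:ℚ)^(k-n) * (k.choose n) * (n:ℚ)^(k-2)
      = (-1:ℚ)^k * ((-1:ℚ)^n * (k.choose n) * (n:ℚ)^(k-2)) := by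
    intro n hn; simp only [mem_Icc] at hn
    rw [neg_one_pow_sub' k n hn.2]; ring
  rw [Finset.sum_congr rfl hrw, ← Finset.mul_sum] at h
  rw [neg_one_pow_sub' k 1 (by omega)] at h
  simp only [Nat.choose_one_right, one_pow, pow_one] at h
  have hne : ((-1:ℚ)^k) ≠ 0 := pow_ne_zero _ (by norm_num)
  apply mul_left_cancel₀ hne
  linear_combination h

lemma coeff_pow_eq_zero {f : PowerSeries ℚ} (hf : constantCoeff (R := ℚ) f = 0) {b j : ℕ}
    (h : b < j) : coeff (R := ℚ) b (f^j) = 0 := by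
  obtain ⟨g, rfl⟩ := PowerSeries.X_dvd_iff.mpr hf
  rw [mul_pow, PowerSeries.coeff_X_pow_mul', if_neg (by omega)]

lemma coeff_mul_mul_pow_eq_zero {f g : PowerSeries ℚ} (hf : constantCoeff (R := ℚ) f = 0)
    (hg : constantCoeff (R := ℚ) g = 0) {k i j : ℕ} (h : k < i + j) :
    coeff (R := ℚ) k (f^i * g^j) = 0 := by
  obtain ⟨f', rfl⟩ := PowerSeries.X_dvd_iff.mpr hf
  obtain ⟨g', rfl⟩ := PowerSeries.X_dvd_iff.mpr hg
  rw [show (PowerSeries.X * f')^i * (PowerSeries.X * g')^j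
      = PowerSeries.X^(i+j) * (f'^i * g'^j) by rw [pow_add]; ring]
  rw [PowerSeries.coeff_X_pow_mul', if_neg (by omega)]

lemma coeff_expOf (f : PowerSeries ℚ) (b : ℕ) :
    coeff (R := ℚ) b (expOf f) = ∑ j ∈ range (b+1), coeff (R := ℚ) b (f^j) / j.factorial := by
  rw [expOf, coeff_mk]

lemma coeff_mul_expOf (A f : PowerSeries ℚ) (hf : constantCoeff (R := ℚ) f = 0) (k : ℕ) :
    coeff (R := ℚ) k (A * expOf f) = ∑ j ∈ range (k+1), coeff (R := ℚ) k (A * f^j) / j.factorial := by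
  rw [PowerSeries.coeff_mul]
  have h1 : ∀ p ∈ Finset.HasAntidiagonal.antidiagonal k,
      coeff (R := ℚ) p.1 A * coeff (R := ℚ) p.2 (expOf f)
      = ∑ j ∈ range (k+1), coeff (R := ℚ) p.1 A * coeff (R := ℚ) p.2 (f^j) / j.factorial := by
    intro p hp
    rw [Finset.HasAntidiagonal.mem_antidiagonal] at hp
    rw [coeff_expOf, Finset.sum_subset (show range (p.2+1) ⊆ range (k+1) by
        apply Finset.range_subset_range.mpr; omega)]
    · rw [Finset.mul_sum]
      apply Finset.sum_congr rfl
      intro j _; ring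
    · intro j hj hjn
      simp only [mem_range] at hj hjn
      rw [coeff_pow_eq_zero hf (by omega), zero_div]
  rw [Finset.sum_congr rfl h1, Finset.sum_comm]
  apply Finset.sum_congr rfl
  intro j _
  rw [PowerSeries.coeff_mul, Finset.sum_div]

lemma expOf_mul_expOf (f g : PowerSeries ℚ) (hf : constantCoeff (R := ℚ) f = 0)
    (hg : constantCoeff (R := ℚ) g = 0) : expOf f * expOf g = expOf (f + g) := by
  ext k
  set F : ℕ → ℕ → ℚ := fun i j => coeff (R := ℚ) k (f^i * g^j) / (i.factorial * j.factorial) with hF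
  have hFz : ∀ i j, k < i + j → F i j = 0 := by
    intro i j h
    simp only [hF]
    rw [coeff_mul_mul_pow_eq_zero hf hg h, zero_div]
  have hLHS : coeff (R := ℚ) k (expOf f * expOf g) = ∑ j ∈ range (k+1), ∑ i ∈ range (k+1), F i j := by
    rw [coeff_mul_expOf _ _ hg]
    apply Finset.sum_congr rfl
    intro j _
    rw [show expOf f * g^j = g^j * expOf f by ring, coeff_mul_expOf _ _ hf]
    rw [Finset.sum_div]
    apply Finset.sum_congr rfl
    intro i _
    simp only [hF]
    rw [show g^j * f^i = f^i * g^j by ring]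
    rw [div_div]
  have hRHS : coeff (R := ℚ) k (expOf (f + g)) = ∑ l ∈ range (k+1), ∑ i ∈ range (l+1), F i (l-i) := by
    rw [coeff_expOf]
    apply Finset.sum_congr rfl
    intro l _
    rw [Commute.add_pow (Commute.all f g) l, map_sum, Finset.sum_div]
    apply Finset.sum_congr rfl
    intro i hi
    simp only [mem_range] at hi
    simp only [hF]
    rw [show ((l.choose i : ℚ⟦X⟧)) = C (R := ℚ) ((l.choose i : ℚ)) by
      rw [map_natCast (C (R := ℚ)) (l.choose i)]]
    rw [PowerSeries.coeff_mul_C, Nat.cast_choose ℚ (by omega : i ≤ l)]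
    have h1 : ((i.factorial : ℚ)) ≠ 0 := Nat.cast_ne_zero.mpr i.factorial_ne_zero
    have h2 : (((l-i).factorial : ℚ)) ≠ 0 := Nat.cast_ne_zero.mpr (l-i).factorial_ne_zero
    have h3 : ((l.factorial : ℚ)) ≠ 0 := Nat.cast_ne_zero.mpr l.factorial_ne_zero
    field_simp
  have key : ∑ l ∈ range (k+1), ∑ i ∈ range (l+1), F i (l-i)
      = ∑ i ∈ range (k+1), ∑ j ∈ range (k+1), F i j := by
    have step1 : ∀ l ∈ range (k+1), ∑ i ∈ range (l+1), F i (l-i)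
        = ∑ i ∈ range (k+1), (if i ≤ l then F i (l-i) else 0) := by
      intro l hl
      simp only [mem_range] at hl
      rw [← Finset.sum_subset (Finset.range_subset_range.mpr (by omega : l+1 ≤ k+1))
        (fun i hi hin => by
          simp only [mem_range] at hi hin
          rw [if_neg (by omega)])]
      apply Finset.sum_congr rfl
      intro i hi
      simp only [mem_range] at hi
      rw [if_pos (by omega)]
    rw [Finset.sum_congr rfl step1, Finset.sum_comm]
    apply Finset.sum_congr rfl
    intro i hi
    simp only [mem_range] at hi
    have step2 : ∑ l ∈ range (k+1), (if i ≤ l then F i (l-i) else 0)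
        = ∑ l ∈ Icc i k, F i (l-i) := by
      rw [← Finset.sum_subset (show Icc i k ⊆ range (k+1) by
          intro x hx; simp only [mem_Icc] at hx; simp only [mem_range]; omega)
        (fun x hx hxn => by
          simp only [mem_range] at hx
          simp only [mem_Icc] at hxn
          rw [if_neg (by omega)])]
      apply Finset.sum_congr rfl
      intro l hl
      simp only [mem_Icc] at hl
      rw [if_pos hl.1]
    rw [step2, sum_Icc_to_range]
    have step3 : ∀ j ∈ range (k+1-i), F i (i+j-i) = F i j :=
      fun j _ => by rw [Nat.add_sub_cancel_left]
    rw [Finset.sum_congr rfl step3]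
    apply Finset.sum_subset (Finset.range_subset_range.mpr (by omega))
    intro j hj hjn
    simp only [mem_range] at hj hjn
    exact hFz i j (by omega)
  rw [hLHS, hRHS, key]
  exact Finset.sum_comm
lemma constCoeff_smul (c : ℚ) (f : PowerSeries ℚ) (hf : PowerSeries.constantCoeff (R := ℚ) f = 0) :
    PowerSeries.constantCoeff (R := ℚ) (c • f) = 0 := by
  rw [PowerSeries.smul_eq_C_mul, map_mul, hf, mul_zero]

lemma expOf_pow (f : PowerSeries ℚ) (hf : PowerSeries.constantCoeff (R := ℚ) f = 0) :
    ∀ n : ℕ, 1 ≤ n → (expOf f)^n = expOf ((n:ℚ) • f) := by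
  intro n
  induction n with
  | zero => omega
  | succ n ih =>
    intro _
    by_cases hn : 1 ≤ n
    · rw [pow_succ, ih hn, expOf_mul_expOf _ _ (constCoeff_smul _ _ hf) hf]
      push_cast
      rw [add_smul, one_smul]
    · have : n = 0 := by omega
      subst this
      norm_num

lemma coeff_w_pow (m k : ℕ) :
    PowerSeries.coeff (R := ℚ) k ((PowerSeries.X * PowerSeries.exp ℚ)^m)
      = if m ≤ k then ((m:ℚ))^(k-m)/(k-m).factorial else 0 := by
  rw [mul_pow, PowerSeries.exp_pow_eq_rescale_exp, PowerSeries.coeff_X_pow_mul']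
  split
  · rw [PowerSeries.coeff_rescale, PowerSeries.coeff_exp]
    simp [div_eq_mul_inv]
  · rfl

lemma coeff_u_pow (u : PowerSeries ℚ)
    (hu : u = PowerSeries.X * PowerSeries.exp ℚ
      * expOf (-(PowerSeries.X * PowerSeries.exp ℚ))) (n k : ℕ) (hn : 1 ≤ n) :
    PowerSeries.coeff (R := ℚ) k (u^n)
      = ∑ i ∈ Icc n k, ((-(n:ℚ))^(i-n)/(i-n).factorial) * ((i:ℚ)^(k-i)/(k-i).factorial) := by
  set w : PowerSeries ℚ := PowerSeries.X * PowerSeries.exp ℚ with hw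
  have hwc : PowerSeries.constantCoeff (R := ℚ) w = 0 := by
    rw [hw, map_mul, PowerSeries.constantCoeff_X, zero_mul]
  have hnegw : PowerSeries.constantCoeff (R := ℚ) (-w) = 0 := by rw [map_neg, hwc, neg_zero]
  have h1 : u^n = w^n * expOf ((n:ℚ) • (-w)) := by
    rw [hu, mul_pow, expOf_pow (-w) hnegw n hn]
  have h2 : ∀ j : ℕ, PowerSeries.coeff (R := ℚ) k (w^n * ((n:ℚ) • (-w))^j)
      = (-(n:ℚ))^j * PowerSeries.coeff (R := ℚ) k (w^(n+j)) := by
    intro j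
    rw [show w^n * ((n:ℚ) • (-w))^j = PowerSeries.C (R := ℚ) ((-(n:ℚ))^j) * w^(n+j) by
      rw [PowerSeries.smul_eq_C_mul, map_pow, map_neg, pow_add]; ring]
    rw [PowerSeries.coeff_C_mul]
  rw [h1, coeff_mul_expOf _ _ (constCoeff_smul _ _ hnegw) k]
  have h3 : ∀ j ∈ range (k+1), PowerSeries.coeff (R := ℚ) k (w^n * ((n:ℚ) • (-w))^j) / j.factorial
      = (-(n:ℚ))^j / (j.factorial) * (if n+j ≤ k then ((n+j:ℚ))^(k-(n+j))/(k-(n+j)).factorial else 0) := by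
    intro j _
    rw [h2 j, coeff_w_pow (n+j) k]
    push_cast
    ring
  rw [Finset.sum_congr rfl h3]
  rw [sum_Icc_to_range]
  have h4 : ∀ j ∈ range (k+1-n),
      (-(n:ℚ))^((n+j)-n)/((n+j)-n).factorial * (((n+j:ℕ):ℚ)^(k-(n+j))/(k-(n+j)).factorial)
      = (-(n:ℚ))^j / (j.factorial) * (if n+j ≤ k then ((n+j:ℚ))^(k-(n+j))/(k-(n+j)).factorial else 0) := by
    intro j hj
    simp only [mem_range] at hj
    rw [Nat.add_sub_cancel_left, if_pos (by omega)]
    push_cast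
    ring
  rw [Finset.sum_congr rfl h4]
  symm
  apply Finset.sum_subset (Finset.range_subset_range.mpr (by omega))
  intro j hj hjn
  simp only [mem_range] at hj hjn
  rw [if_neg (by omega), mul_zero]
lemma cI (z : ℕ → ℤ)
    (hz : ∀ n, 1 ≤ n → z n = (n : ℤ) ^ (n - 1) -
      2 * ∑ m ∈ Finset.Icc 2 n,
        (-1 : ℤ) ^ m * (n : ℤ) ^ (n - m) * (m : ℤ) ^ (m - 2) * ((n - 1).choose (m - 1)))
    (i : ℕ) (hi : 1 ≤ i) :
    ∑ n ∈ Icc 1 i, ((z n : ℚ)/n.factorial) * ((-(n:ℚ))^(i-n)/(i-n).factorial)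
      = if i = 1 then 1 else -2*(-1:ℚ)^i*(i:ℚ)^(i-2)/i.factorial := by
  set q : ℕ → ℚ := fun n => (-(n:ℚ))^(i-n)/(i-n).factorial with hq
  set T : ℕ → ℕ → ℚ := fun m n =>
    (-1:ℚ)^m * (n:ℚ)^(n-m) * (m:ℚ)^(m-2) * (((n:ℕ)-1).choose (m-1) : ℚ) with hT
  have hsplit : ∀ n ∈ Icc 1 i, ((z n : ℚ)/n.factorial) * q n
      = ((n:ℚ)^(n-1)/n.factorial) * q n
        - 2 * ∑ m ∈ Icc 2 n, (T m n / n.factorial * q n) := by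
    intro n hn
    simp only [mem_Icc] at hn
    have hzc : (z n : ℚ) = (n:ℚ)^(n-1) - 2 * ∑ m ∈ Icc 2 n, T m n := by
      rw [hz n hn.1]
      push_cast
      simp only [hT]
    have hS : (∑ m ∈ Icc 2 n, T m n)/(n.factorial:ℚ)*(q n)
        = ∑ m ∈ Icc 2 n, (T m n/(n.factorial:ℚ)*(q n)) := by
      rw [Finset.sum_div, Finset.sum_mul]
    rw [hzc, ← hS]
    ring
  rw [Finset.sum_congr rfl hsplit, Finset.sum_sub_distrib, ← Finset.mul_sum]
  have part1 : ∑ n ∈ Icc 1 i, ((n:ℚ)^(n-1)/n.factorial) * q n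
      = if i = 1 then 1 else 0 := by
    by_cases hi1 : i = 1
    · subst hi1
      rw [if_pos rfl, Finset.Icc_self, Finset.sum_singleton]
      simp [hq]
    · rw [if_neg hi1]
      exact corA i (by omega)
  have part2 : ∑ n ∈ Icc 1 i, ∑ m ∈ Icc 2 n, (T m n / n.factorial * q n)
      = if i = 1 then 0 else (-1:ℚ)^i*(i:ℚ)^(i-2)/i.factorial := by
    have h21 : ∑ n ∈ Icc 1 i, ∑ m ∈ Icc 2 n, (T m n / n.factorial * q n)
        = ∑ n ∈ Icc 2 i, ∑ m ∈ Icc 2 n, (T m n / n.factorial * q n) := by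
      symm
      apply Finset.sum_subset (Finset.Icc_subset_Icc_left (by omega))
      intro n hn hnn
      simp only [mem_Icc] at hn hnn
      have : n = 1 := by omega
      subst this
      rw [show Icc 2 1 = ∅ from rfl, Finset.sum_empty]
    rw [h21, ← sum_triangle 2 i (fun m n => T m n / n.factorial * q n)]
    have hinner : ∀ m ∈ Icc 2 i, ∑ n ∈ Icc m i, (T m n / n.factorial * q n)
        = if i = m then (-1:ℚ)^m*(m:ℚ)^(m-2)/m.factorial else 0 := by
      intro m hm
      simp only [mem_Icc] at hm
      have hpt : ∀ n ∈ Icc m i, T m n / n.factorial * q n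
          = ((-1:ℚ)^m * (m:ℚ)^(m-2)) *
            (((n:ℚ)^(n-m) * (((n:ℕ)-1).choose (m-1) : ℚ) / n.factorial) * q n) := by
        intro n _
        simp only [hT]
        ring
      rw [Finset.sum_congr rfl hpt, ← Finset.mul_sum, corB m i hm.1 hm.2]
      by_cases him : i = m
      · rw [if_pos him, if_pos him]
        ring
      · rw [if_neg him, if_neg him, mul_zero]
    rw [Finset.sum_congr rfl hinner]
    have : ∀ m ∈ Icc 2 i, (if i = m then (-1:ℚ)^m*(m:ℚ)^(m-2)/m.factorial else 0)
        = if i = m then (-1:ℚ)^i*(i:ℚ)^(i-2)/i.factorial else 0 := by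
      intro m _
      by_cases him : i = m
      · rw [if_pos him, if_pos him, him]
      · rw [if_neg him, if_neg him]
    rw [Finset.sum_congr rfl this, Finset.sum_ite_eq]
    by_cases hi1 : i = 1
    · rw [if_neg (by simp [hi1]), if_pos hi1]
    · rw [if_pos (by simp only [mem_Icc]; omega), if_neg hi1]
  rw [part1, part2]
  by_cases hi1 : i = 1
  · rw [if_pos hi1, if_pos hi1, if_pos hi1]
    ring
  · rw [if_neg hi1, if_neg hi1, if_neg hi1]
    ring
lemma final (k : ℕ) (hk : 1 ≤ k) (c : ℕ → ℚ) (hc1 : c 1 = 1)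
    (hc : ∀ i, 2 ≤ i → c i = -2*(-1:ℚ)^i*(i:ℚ)^(i-2)/i.factorial) :
    ∑ i ∈ Icc 1 k, ((i:ℚ)^(k-i)/(k-i).factorial) * c i
      = (if k = 2 then (1:ℚ) else 0) + 2*(if k = 1 then (1:ℚ) else 0) - 1/((k-1).factorial) := by
  rw [show Icc 1 k = insert 1 (Icc 2 k) from by
    ext x; simp only [mem_Icc, Finset.mem_insert]; omega]
  rw [Finset.sum_insert (by simp), hc1]
  have hterm : ∀ i ∈ Icc 2 k, ((i:ℚ)^(k-i)/(k-i).factorial) * c i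
      = (-2/(k.factorial:ℚ)) * ((-1:ℚ)^i * (k.choose i) * (i:ℚ)^(k-2)) := by
    intro i hi
    simp only [mem_Icc] at hi
    rw [hc i hi.1, Nat.cast_choose ℚ hi.2]
    rw [show (i:ℚ)^(k-2) = (i:ℚ)^(k-i) * (i:ℚ)^(i-2) by rw [← pow_add]; congr 1; omega]
    have h1 : ((i.factorial : ℚ)) ≠ 0 := Nat.cast_ne_zero.mpr i.factorial_ne_zero
    have h2 : (((k-i).factorial : ℚ)) ≠ 0 := Nat.cast_ne_zero.mpr (k-i).factorial_ne_zero
    have h3 : ((k.factorial : ℚ)) ≠ 0 := Nat.cast_ne_zero.mpr k.factorial_ne_zero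
    field_simp
  rw [Finset.sum_congr rfl hterm, ← Finset.mul_sum]
  rcases Nat.lt_or_ge k 3 with hk3 | hk3
  · interval_cases k
    · norm_num
    · rw [show Icc 2 2 = {2} from rfl, Finset.sum_singleton]
      norm_num [Nat.factorial]
  · rw [corC k hk3]
    rw [if_neg (by omega), if_neg (by omega)]
    have hkf : (k.factorial : ℚ) = (k:ℚ) * ((k-1).factorial : ℚ) := by
      rw [← Nat.cast_mul]
      congr 1
      rw [← Nat.mul_factorial_pred (by omega)]
    have h4 : (((k-1).factorial : ℚ)) ≠ 0 := Nat.cast_ne_zero.mpr (k-1).factorial_ne_zero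
    have h5 : (k:ℚ) ≠ 0 := Nat.cast_ne_zero.mpr (by omega)
    rw [hkf]
    field_simp
    ring

/-- The formal power series identity
`x² + 2x - x eˣ = ∑_{n ≥ 1} (z_n / n!) (x eˣ e^{-x eˣ})ⁿ`, stated coefficientwise:
the series `u = x eˣ e^{-x eˣ}` has zero constant term, hence `uⁿ` has order at least
`n` and the coefficient of `x^k` on the right only involves `1 ≤ n ≤ k`. Here
`z_n = n^(n-1) - 2 ∑_{m=2}^{n} (-1)^m n^(n-m) m^(m-2) choose (n-1) (m-1)`. -/
theorem generating_function_identity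
    (z : ℕ → ℤ)
    (hz : ∀ n, 1 ≤ n → z n = (n : ℤ) ^ (n - 1) -
      2 * ∑ m ∈ Finset.Icc 2 n,
        (-1 : ℤ) ^ m * (n : ℤ) ^ (n - m) * (m : ℤ) ^ (m - 2) * ((n - 1).choose (m - 1)))
    (u : PowerSeries ℚ)
    (hu : u = X * PowerSeries.exp ℚ * expOf (-(X * PowerSeries.exp ℚ))) :
    ∀ k : ℕ, (PowerSeries.coeff (R := ℚ) k) (X ^ 2 + 2 * X - X * PowerSeries.exp ℚ) =
      ∑ n ∈ Finset.Icc 1 k, ((z n : ℚ) / n.factorial) * (PowerSeries.coeff (R := ℚ) k) (u ^ n) := by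
  intro k
  have hL : PowerSeries.coeff (R := ℚ) k (X ^ 2 + 2 * X - X * PowerSeries.exp ℚ)
      = (if k = 2 then (1:ℚ) else 0) + 2*(if k = 1 then (1:ℚ) else 0)
        - (if 1 ≤ k then ((1:ℕ):ℚ)^(k-1)/((k-1).factorial:ℚ) else 0) := by
    rw [map_sub, map_add]
    congr 1
    congr 1
    · rw [PowerSeries.coeff_X_pow]
    · rw [two_mul, map_add, PowerSeries.coeff_X]
      rw [two_mul]
    · rw [show PowerSeries.X * PowerSeries.exp ℚ = (PowerSeries.X * PowerSeries.exp ℚ)^1 by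
        rw [pow_one]]
      rw [coeff_w_pow 1 k]
  rcases Nat.eq_zero_or_pos k with hk0 | hk
  · subst hk0
    rw [hL, show Icc 1 0 = ∅ from rfl, Finset.sum_empty]
    norm_num
  · have hR1 : ∀ n ∈ Icc 1 k, ((z n : ℚ) / n.factorial) * (PowerSeries.coeff (R := ℚ) k) (u ^ n)
        = ∑ i ∈ Icc n k, (((z n : ℚ)/n.factorial) * ((-(n:ℚ))^(i-n)/(i-n).factorial))
            * ((i:ℚ)^(k-i)/(k-i).factorial) := by
      intro n hn
      simp only [mem_Icc] at hn
      rw [coeff_u_pow u hu n k hn.1, Finset.mul_sum]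
      apply Finset.sum_congr rfl
      intro i _
      ring
    rw [Finset.sum_congr rfl hR1]
    rw [sum_triangle 1 k (fun n i => (((z n : ℚ)/n.factorial) * ((-(n:ℚ))^(i-n)/(i-n).factorial))
            * ((i:ℚ)^(k-i)/(k-i).factorial))]
    have hR2 : ∀ i ∈ Icc 1 k,
        ∑ n ∈ Icc 1 i, (((z n : ℚ)/n.factorial) * ((-(n:ℚ))^(i-n)/(i-n).factorial))
            * ((i:ℚ)^(k-i)/(k-i).factorial)
        = ((i:ℚ)^(k-i)/(k-i).factorial)
            * (if i = 1 then (1:ℚ) else -2*(-1:ℚ)^i*(i:ℚ)^(i-2)/i.factorial) := by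
      intro i hi
      simp only [mem_Icc] at hi
      rw [← Finset.sum_mul, cI z hz i hi.1, mul_comm]
    rw [Finset.sum_congr rfl hR2]
    rw [final k hk _ (by norm_num) (fun i hi => by rw [if_neg (by omega)])]
    rw [hL, if_pos (show 1 ≤ k from hk)]
    norm_num
end

section
/- If f(x) = x·e^x (as a formal power series), then its compositional inverse is ∑_{m≥1} (-m)^{m-1} t^m / m!; that is, as formal power series, substituting t = x e^x yields x = ∑_{m≥1} (-m)^{m-1} (x e^x)^m / m!. -/
open PowerSeries

open Finset fwdDiff Polynomial in
private lemma poly_fwdDiff_zero :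
    ∀ (n : ℕ) (p : ℚ[X]), p.degree < n → (fwdDiff (1:ℚ))^[n] (fun x : ℚ ↦ p.eval x) = 0 := by
  intro n
  induction n with
  | zero =>
    intro p hp
    have : p = 0 := by
      by_contra h
      exact absurd (Polynomial.zero_le_degree_iff.mpr h) (not_le.mpr (by exact_mod_cast hp))
    subst this
    funext x
    simp
  | succ n ih =>
    intro p hp
    have hX1 : (Polynomial.X + 1 : ℚ[X]) = Polynomial.X + Polynomial.C 1 := by
      rw [Polynomial.C_1]
    by_cases h0 : p = 0
    · subst h0
      funext y
      rw [fwdDiff_iter_eq_sum_shift]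
      simp
    · set q : ℚ[X] := p.comp (Polynomial.X + 1) - p with hq
      have hstep : fwdDiff (1:ℚ) (fun x : ℚ ↦ p.eval x) = fun x : ℚ ↦ q.eval x := by
        funext x
        simp [fwdDiff, hq, Polynomial.eval_comp]
      have hnd1 : (Polynomial.X + 1 : ℚ[X]).natDegree = 1 := by
        rw [hX1, Polynomial.natDegree_X_add_C]
      have hlc : (p.comp (Polynomial.X + 1)).leadingCoeff = p.leadingCoeff := by
        rw [Polynomial.leadingCoeff_comp (by rw [hnd1]; exact one_ne_zero)]
        rw [hX1, (Polynomial.monic_X_add_C (1:ℚ)).leadingCoeff, one_pow, mul_one]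
      have hcompne : p.comp (Polynomial.X + 1) ≠ 0 := by
        intro h
        have := Polynomial.leadingCoeff_ne_zero.mpr h0
        rw [← hlc, h, Polynomial.leadingCoeff_zero] at this
        exact this rfl
      have hdegcomp : (p.comp (Polynomial.X + 1)).degree = p.degree := by
        rw [Polynomial.degree_eq_natDegree hcompne, Polynomial.degree_eq_natDegree h0,
          Polynomial.natDegree_comp, hnd1, mul_one]
      have hqdeg : q.degree < p.degree := by
        have := Polynomial.degree_sub_lt hdegcomp hcompne hlc
        rwa [hdegcomp] at this
      have hqlt : q.degree < n := by
        have hple : p.degree ≤ n := by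
          rw [Polynomial.degree_eq_natDegree h0] at hp ⊢
          exact_mod_cast Nat.lt_succ_iff.mp (by exact_mod_cast hp)
        exact lt_of_lt_of_le hqdeg hple
      rw [Function.iterate_succ_apply, hstep]
      exact ih q hqlt

open Finset fwdDiff in
private lemma alt_sum_zero (k d : ℕ) (hd : d < k) :
    ∑ m ∈ Finset.range (k + 1), (-1 : ℚ) ^ m * (k.choose m) * (m : ℚ) ^ d = 0 := by
  have h := fwdDiff_iter_eq_sum_shift (1 : ℚ) (fun x : ℚ ↦ x ^ d) k 0
  have hz : (fwdDiff (1:ℚ))^[k] (fun x : ℚ ↦ x ^ d) = 0 := by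
    have := poly_fwdDiff_zero k (Polynomial.X ^ d) (by
      simpa [Polynomial.degree_X_pow] using (by exact_mod_cast hd : ((d : ℕ) : WithBot ℕ) < k))
    simpa using this
  rw [hz] at h
  simp only [Pi.zero_apply] at h
  have h' : (0 : ℚ) = ∑ m ∈ Finset.range (k + 1),
      (-1 : ℚ) ^ (k - m) * (k.choose m) * (m : ℚ) ^ d := by
    rw [h]
    apply Finset.sum_congr rfl
    intro m hm
    simp only [zsmul_eq_mul, nsmul_eq_mul, mul_one, zero_add]
    push_cast
    ring
  have h'' := congrArg (fun x : ℚ ↦ (-1 : ℚ) ^ k * x) h'.symm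
  simp only [Finset.mul_sum, mul_zero] at h''
  rw [← h'']
  apply Finset.sum_congr rfl
  intro m hm
  have hmk : m ≤ k := Nat.lt_succ_iff.mp (Finset.mem_range.mp hm)
  have key : (-1 : ℚ) ^ (k - m) * (-1 : ℚ) ^ m = (-1 : ℚ) ^ k := by
    rw [← pow_add, Nat.sub_add_cancel hmk]
  have hsq : (-1 : ℚ) ^ m * (-1 : ℚ) ^ m = 1 := by
    rw [← pow_add]; exact Even.neg_one_pow ⟨m, rfl⟩
  have hsq' : (-1 : ℚ) ^ (k - m) * (-1 : ℚ) ^ (k - m) = 1 := by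
    rw [← pow_add]; exact Even.neg_one_pow ⟨k - m, rfl⟩
  have hsign : (-1 : ℚ) ^ m = (-1 : ℚ) ^ k * (-1 : ℚ) ^ (k - m) := by
    calc (-1 : ℚ) ^ m = ((-1:ℚ) ^ (k-m) * (-1:ℚ) ^ (k-m)) * (-1:ℚ) ^ m := by rw [hsq', one_mul]
      _ = ((-1:ℚ) ^ (k-m) * (-1:ℚ) ^ m) * (-1:ℚ) ^ (k-m) := by ring
      _ = (-1 : ℚ) ^ k * (-1 : ℚ) ^ (k - m) := by rw [key]
  rw [hsign]; ring

private lemma alt_sum_Icc (k : ℕ) (hk : 2 ≤ k) :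
    ∑ m ∈ Finset.Icc 1 k, (-1 : ℚ) ^ m * (k.choose m) * (m : ℚ) ^ (k - 1) = 0 := by
  have h := alt_sum_zero k (k - 1) (by omega)
  have hins : Finset.range (k + 1) = insert 0 (Finset.Icc 1 k) := by
    ext x; simp; omega
  rw [hins, Finset.sum_insert (by simp)] at h
  have h0 : (-1 : ℚ) ^ 0 * (k.choose 0 : ℚ) * ((0 : ℕ) : ℚ) ^ (k - 1) = 0 := by
    have hne : k - 1 ≠ 0 := by omega
    simp [zero_pow hne]
  rw [h0, zero_add] at h
  exact h

/-- The compositional inverse of `f(x) = x eˣ` is `∑_{m ≥ 1} (-m)^(m-1) t^m / m!`;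
that is, substituting `t = x eˣ` gives back `x`. Stated coefficientwise: the series
`x eˣ` has zero constant term, hence `(x eˣ)^m` has order at least `m` and the
coefficient of `x^k` on the right only involves `1 ≤ m ≤ k`. -/
theorem lagrange_inverse_x_exp :
    ∀ k : ℕ, (PowerSeries.coeff (R := ℚ) k) (X : PowerSeries ℚ) =
      ∑ m ∈ Finset.Icc 1 k,
        ((-(m : ℚ)) ^ (m - 1) / m.factorial) *
          (PowerSeries.coeff (R := ℚ) k) ((X * PowerSeries.exp ℚ) ^ m) := by
  intro k
  have hcoeff : ∀ m ∈ Finset.Icc 1 k,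
      (PowerSeries.coeff (R := ℚ) k) ((X * PowerSeries.exp ℚ) ^ m)
        = (m : ℚ) ^ (k - m) / (k - m).factorial := by
    intro m hm
    obtain ⟨hm1, hmk⟩ := Finset.mem_Icc.mp hm
    rw [mul_pow, exp_pow_eq_rescale_exp]
    have hk : k = (k - m) + m := by omega
    rw [hk, coeff_X_pow_mul, coeff_rescale, coeff_exp]
    simp [div_eq_mul_inv, mul_comm]
  rw [Finset.sum_congr rfl (fun m hm => by rw [hcoeff m hm])]
  rcases Nat.lt_or_ge k 2 with hk | hk
  · interval_cases k
    · simp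
    · norm_num [PowerSeries.coeff_X]
  · rw [PowerSeries.coeff_X, if_neg (by omega)]
    have key : ∀ m ∈ Finset.Icc 1 k,
        ((-(m : ℚ)) ^ (m - 1) / m.factorial) * ((m : ℚ) ^ (k - m) / (k - m).factorial)
          = (-(1 : ℚ) / k.factorial) * ((-1 : ℚ) ^ m * (k.choose m) * (m : ℚ) ^ (k - 1)) := by
      intro m hm
      obtain ⟨hm1, hmk⟩ := Finset.mem_Icc.mp hm
      have hfact : ((k.choose m : ℚ)) * (m.factorial : ℚ) * ((k - m).factorial : ℚ)
          = (k.factorial : ℚ) := by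
        exact_mod_cast congrArg (Nat.cast : ℕ → ℚ)
          (Nat.choose_mul_factorial_mul_factorial hmk)
      have hneg : (-(m : ℚ)) ^ (m - 1) = (-1 : ℚ) ^ (m - 1) * (m : ℚ) ^ (m - 1) := by
        rw [neg_pow]
      have hsign : (-1 : ℚ) ^ (m - 1) = -(-1 : ℚ) ^ m := by
        have h2 : (-1 : ℚ) ^ (m - 1) * (-1) = (-1 : ℚ) ^ m := by
          rw [← pow_succ]; congr 1; omega
        rw [← h2]; ring
      have hpow : (m : ℚ) ^ (m - 1) * (m : ℚ) ^ (k - m) = (m : ℚ) ^ (k - 1) := by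
        rw [← pow_add]
        congr 1
        omega
      have hmf : (m.factorial : ℚ) ≠ 0 := Nat.cast_ne_zero.mpr m.factorial_ne_zero
      have hkmf : ((k - m).factorial : ℚ) ≠ 0 := Nat.cast_ne_zero.mpr (k - m).factorial_ne_zero
      have hkf : (k.factorial : ℚ) ≠ 0 := Nat.cast_ne_zero.mpr k.factorial_ne_zero
      rw [hneg, hsign]
      field_simp
      rw [← hfact, ← hpow]
      ring
    rw [Finset.sum_congr rfl key, ← Finset.mul_sum, alt_sum_Icc k hk, mul_zero]
end
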